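/- arXiv:2510.07431 — 8 statements merged into one kernel-verified Lean document; each statement's English description precedes it below -/
import Mathlib

section
/- Big crunch for collapsing FLRW: the maximal time T_S is finite, with T_S ≤ a₀/(−ȧ₀); moreover ȧ(t) < 0 for all t ∈ [0,T_S) and lim_{t→T_S} a(t) = 0. -/
open Filter Topology Set ENNReal

lemma flrw_hasDerivAt_pi {ι : Type*} [Fintype ι] {f : ℝ → (ι → ℝ)} {f' : ι → ℝ} {t : ℝ} :
    HasDerivAt f f' t ↔ ∀ i, HasDerivAt (fun s => f s i) (f' i) t := by
  exact hasDerivAt_pi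

lemma flrw_decay (a a' a'' φ' : ℝ → ℝ) {t₁ : ℝ} (ht₁ : 0 ≤ t₁)
    (hreg : ∀ t ∈ Icc (0:ℝ) t₁, HasDerivAt a (a' t) t ∧ HasDerivAt a' (a'' t) t)
    (hpos : ∀ t ∈ Icc (0:ℝ) t₁, 0 < a t)
    (heq1 : ∀ t ∈ Icc (0:ℝ) t₁, a'' t + 3 * φ' t ^ 2 * a t = 0) :
    a' t₁ ≤ a' 0 ∧ a t₁ ≤ a 0 + a' 0 * t₁ := by
  have hanti : AntitoneOn a' (Icc 0 t₁) := by
    refine antitoneOn_of_deriv_nonpos (convex_Icc 0 t₁)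
      (fun t ht => ((hreg t ht).2.continuousAt).continuousWithinAt)
      (fun t ht => ((hreg t (interior_subset ht)).2.differentiableAt).differentiableWithinAt)
      (fun t ht => ?_)
    rw [interior_Icc] at ht
    have h2 := (hreg t (Ioo_subset_Icc_self ht)).2
    rw [h2.deriv]
    nlinarith [heq1 t (Ioo_subset_Icc_self ht), hpos t (Ioo_subset_Icc_self ht),
      sq_nonneg (φ' t)]
  have h0 : (0:ℝ) ∈ Icc (0:ℝ) t₁ := ⟨le_rfl, ht₁⟩
  have h1 : t₁ ∈ Icc (0:ℝ) t₁ := ⟨ht₁, le_rfl⟩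
  refine ⟨hanti h0 h1 ht₁, ?_⟩
  have hanti2 : AntitoneOn (fun t => a t - a' 0 * t) (Icc 0 t₁) := by
    refine antitoneOn_of_deriv_nonpos (convex_Icc 0 t₁)
      (fun t ht => (((hreg t ht).1.sub ((hasDerivAt_id t).const_mul (a' 0))).continuousAt).continuousWithinAt)
      (fun t ht => (((hreg t (interior_subset ht)).1.sub
        ((hasDerivAt_id t).const_mul (a' 0))).differentiableAt).differentiableWithinAt)
      (fun t ht => ?_)
    rw [interior_Icc] at ht
    have hd : HasDerivAt (fun t => a t - a' 0 * t) (a' t - a' 0 * 1) t :=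
      (hreg t (Ioo_subset_Icc_self ht)).1.sub ((hasDerivAt_id t).const_mul (a' 0))
    rw [hd.deriv]
    have := hanti h0 (Ioo_subset_Icc_self ht) ht.1.le
    linarith
  have := hanti2 h0 h1 ht₁
  simp only [mul_zero, sub_zero] at this
  linarith


section Test
variable
    (a a' a'' φ φ' φ'' : ℝ → ℝ) (T : ℝ) (hTpos : 0 < T)
    (ha0 : 0 < a 0) (hda0 : a' 0 < 0) (hdφ0 : φ' 0 ≠ 0)
    (hreg : ∀ t ∈ Ico (0:ℝ) T,
      HasDerivAt a (a' t) t ∧ HasDerivAt a' (a'' t) t ∧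
      HasDerivAt φ (φ' t) t ∧ HasDerivAt φ' (φ'' t) t)
    (hpos : ∀ t ∈ Ico (0:ℝ) T, 0 < a t)
    (heq1 : ∀ t ∈ Ico (0:ℝ) T, a'' t + 3 * φ' t ^ 2 * a t = 0)
    (heq2 : ∀ t ∈ Ico (0:ℝ) T, a t ^ 3 * φ' t = a 0 ^ 3 * φ' 0)
    (ha'le : ∀ t ∈ Ico (0:ℝ) T, a' t ≤ a' 0)

include hreg hpos heq1 heq2 hTpos ha'le hda0 ha0 in
lemma flrw_extension (hnt : ¬ Tendsto a (𝓝[<] T) (𝓝 0)) :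
    ∃ (A Φ A' A'' Φ' Φ'' : ℝ → ℝ) (ε' : ℝ), 0 < ε' ∧
      (∀ t ∈ Ico (0:ℝ) T, A t = a t ∧ Φ t = φ t) ∧
      (∀ t : ℝ, 0 ≤ t → t < T + ε' →
        HasDerivAt A (A' t) t ∧ HasDerivAt A' (A'' t) t ∧
        HasDerivAt Φ (Φ' t) t ∧ HasDerivAt Φ' (Φ'' t) t ∧
        0 < A t ∧ A'' t + 3 * Φ' t ^ 2 * A t = 0 ∧
        A t ^ 3 * Φ' t = A 0 ^ 3 * Φ' 0) := by
  set c := a 0 ^ 3 * φ' 0 with hcdef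
  have h0T : (0:ℝ) ∈ Ico (0:ℝ) T := ⟨le_rfl, hTpos⟩
  -- a'' nonpositive
  have ha''np : ∀ t ∈ Ico (0:ℝ) T, a'' t ≤ 0 := fun t ht => by
    nlinarith [heq1 t ht, hpos t ht, sq_nonneg (φ' t)]
  -- a antitone on Ico 0 T
  have hantia : AntitoneOn a (Ico 0 T) := by
    refine antitoneOn_of_deriv_nonpos (convex_Ico 0 T)
      (fun t ht => ((hreg t ht).1.continuousAt).continuousWithinAt)
      (fun t ht => (((hreg t (interior_subset ht)).1).differentiableAt).differentiableWithinAt)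
      (fun t ht => ?_)
    rw [interior_Ico] at ht
    rw [(hreg t (Ioo_subset_Ico_self ht)).1.deriv]
    exact (ha'le t (Ioo_subset_Ico_self ht)).trans hda0.le
  have hantia' : AntitoneOn a' (Ico 0 T) := by
    refine antitoneOn_of_deriv_nonpos (convex_Ico 0 T)
      (fun t ht => ((hreg t ht).2.1.continuousAt).continuousWithinAt)
      (fun t ht => (((hreg t (interior_subset ht)).2.1).differentiableAt).differentiableWithinAt)
      (fun t ht => ?_)
    rw [interior_Ico] at ht
    rw [(hreg t (Ioo_subset_Ico_self ht)).2.1.deriv]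
    exact ha''np t (Ioo_subset_Ico_self ht)
  have hIoosub : Ioo (0:ℝ) T ⊆ Ico 0 T := Ioo_subset_Ico_self
  have hne : (Ioo (0:ℝ) T).Nonempty := nonempty_Ioo.2 hTpos
  have hbdd : BddBelow (a '' Ioo 0 T) := ⟨0, fun x ⟨t, ht, he⟩ => he ▸ (hpos t (hIoosub ht)).le⟩
  set L := sInf (a '' Ioo 0 T) with hLdef
  have hL0 : 0 ≤ L := le_csInf (hne.image a) (fun x ⟨t, ht, he⟩ => he ▸ (hpos t (hIoosub ht)).le)
  have hLle : ∀ t ∈ Ico (0:ℝ) T, L ≤ a t := by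
    intro t ht
    rcases eq_or_lt_of_le ht.1 with h | h
    · obtain ⟨s, hs⟩ := hne
      calc L ≤ a s := csInf_le hbdd (mem_image_of_mem a hs)
        _ ≤ a (0:ℝ) := hantia h0T (hIoosub hs) hs.1.le
        _ = a t := by rw [h]
    · exact csInf_le hbdd (mem_image_of_mem a ⟨h, ht.2⟩)
  have htda : Tendsto a (𝓝[<] T) (𝓝 L) :=
    AntitoneOn.tendsto_nhdsWithin_Ioo_left hne (hantia.mono hIoosub) hbdd
  have ha_le : ∀ t ∈ Ico (0:ℝ) T, a t ≤ a 0 := fun t ht => hantia h0T ht ht.1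
  have hφ'eq : ∀ t ∈ Ico (0:ℝ) T, φ' t = c / a t ^ 3 := fun t ht => by
    rw [eq_div_iff (pow_ne_zero 3 (hpos t ht).ne')]
    linarith [heq2 t ht]
  rcases lt_or_ge 0 L with hLpos | hLtriv
  swap
  · exact absurd (le_antisymm hLtriv hL0 ▸ htda) hnt
  set P := |c| / L ^ 3 with hPdef
  have hPnn : 0 ≤ P := by positivity
  have hφ'bd : ∀ t ∈ Ico (0:ℝ) T, |φ' t| ≤ P := by
    intro t ht
    rw [hφ'eq t ht, abs_div, abs_of_pos (pow_pos (hpos t ht) 3), hPdef]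
    gcongr
    exact hLle t ht
  set Q := 3 * P ^ 2 * a 0 with hQdef
  have hQnn : 0 ≤ Q := by positivity
  have ha''bd : ∀ t ∈ Ico (0:ℝ) T, |a'' t| ≤ Q := by
    intro t ht
    have he : a'' t = -(3 * φ' t ^ 2 * a t) := by linarith [heq1 t ht]
    rw [he, abs_neg, abs_of_nonneg (by nlinarith [hpos t ht, sq_nonneg (φ' t)])]
    have h1 : φ' t ^ 2 ≤ P ^ 2 := by
      nlinarith [hφ'bd t ht, abs_nonneg (φ' t), sq_abs (φ' t)]
    nlinarith [h1, hpos t ht, ha_le t ht, hPnn, sq_nonneg (φ' t)]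
  have hMVT : ∀ (f f' : ℝ → ℝ) (C : ℝ), (∀ x ∈ Ico (0:ℝ) T, HasDerivAt f (f' x) x) →
      (∀ x ∈ Ico (0:ℝ) T, |f' x| ≤ C) → ∀ t ∈ Ico (0:ℝ) T, |f t - f 0| ≤ C * t := by
    intro f f' C hd hb t ht
    have key := Convex.norm_image_sub_le_of_norm_hasDerivWithin_le (f := f) (f' := f')
      (s := Icc 0 t) (C := C)
      (fun x hx => (hd x ⟨hx.1, lt_of_le_of_lt hx.2 ht.2⟩).hasDerivWithinAt)
      (fun x hx => by rw [Real.norm_eq_abs]; exact hb x ⟨hx.1, lt_of_le_of_lt hx.2 ht.2⟩)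
      (convex_Icc 0 t) ⟨le_rfl, ht.1⟩ ⟨ht.1, le_rfl⟩
    rw [Real.norm_eq_abs, Real.norm_eq_abs, sub_zero, abs_of_nonneg ht.1] at key
    exact key
  have hMVTa' := hMVT a' a'' Q (fun x hx => (hreg x hx).2.1) ha''bd
  have ha'lb : ∀ t ∈ Ico (0:ℝ) T, a' 0 - Q * T ≤ a' t := by
    intro t ht
    have h1 := (abs_le.1 (hMVTa' t ht)).1
    have h2 : Q * t ≤ Q * T := mul_le_mul_of_nonneg_left ht.2.le hQnn
    linarith
  have hbdd' : BddBelow (a' '' Ioo 0 T) :=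
    ⟨a' 0 - Q * T, fun x ⟨t, ht, he⟩ => he ▸ ha'lb t (hIoosub ht)⟩
  set A'T := sInf (a' '' Ioo 0 T) with hA'Tdef
  have htda' : Tendsto a' (𝓝[<] T) (𝓝 A'T) :=
    AntitoneOn.tendsto_nhdsWithin_Ioo_left hne (hantia'.mono hIoosub) hbdd'
  have hIooMem : Ioo (0:ℝ) T ∈ 𝓝[<] T := Ioo_mem_nhdsLT_of_mem ⟨hTpos, le_rfl⟩
  have htdφ' : Tendsto φ' (𝓝[<] T) (𝓝 (c / L ^ 3)) := by
    have h1 : Tendsto (fun t => c / a t ^ 3) (𝓝[<] T) (𝓝 (c / L ^ 3)) :=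
      tendsto_const_nhds.div (htda.pow 3) (by positivity)
    exact Tendsto.congr'
      (by filter_upwards [hIooMem] with t ht using (hφ'eq t (hIoosub ht)).symm) h1
  have hMVTφ := hMVT φ φ' P (fun x hx => (hreg x hx).2.2.1) hφ'bd
  have hφub : ∀ t ∈ Ico (0:ℝ) T, φ t ≤ φ 0 + P * T := by
    intro t ht
    have h1 := (abs_le.1 (hMVTφ t ht)).2
    have h2 : P * t ≤ P * T := mul_le_mul_of_nonneg_left ht.2.le hPnn
    linarith
  have hφlb : ∀ t ∈ Ico (0:ℝ) T, φ 0 - P * T ≤ φ t := by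
    intro t ht
    have h1 := (abs_le.1 (hMVTφ t ht)).1
    have h2 : P * t ≤ P * T := mul_le_mul_of_nonneg_left ht.2.le hPnn
    linarith
  obtain ⟨ΦT, htdφ⟩ : ∃ l, Tendsto φ (𝓝[<] T) (𝓝 l) := by
    rcases le_or_gt c 0 with hc | hc
    · have hmono : AntitoneOn φ (Ico 0 T) := by
        refine antitoneOn_of_deriv_nonpos (convex_Ico 0 T)
          (fun t ht => ((hreg t ht).2.2.1.continuousAt).continuousWithinAt)
          (fun t ht => (((hreg t (interior_subset ht)).2.2.1).differentiableAt).differentiableWithinAt)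
          (fun t ht => ?_)
        rw [interior_Ico] at ht
        have ht' := Ioo_subset_Ico_self ht
        rw [(hreg t ht').2.2.1.deriv, hφ'eq t ht']
        exact div_nonpos_of_nonpos_of_nonneg hc (pow_pos (hpos t ht') 3).le
      exact ⟨_, AntitoneOn.tendsto_nhdsWithin_Ioo_left hne (hmono.mono hIoosub)
        ⟨φ 0 - P * T, fun x ⟨t, ht, he⟩ => he ▸ hφlb t (hIoosub ht)⟩⟩
    · have hmono : MonotoneOn φ (Ico 0 T) := by
        refine monotoneOn_of_deriv_nonneg (convex_Ico 0 T)
          (fun t ht => ((hreg t ht).2.2.1.continuousAt).continuousWithinAt)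
          (fun t ht => (((hreg t (interior_subset ht)).2.2.1).differentiableAt).differentiableWithinAt)
          (fun t ht => ?_)
        rw [interior_Ico] at ht
        have ht' := Ioo_subset_Ico_self ht
        rw [(hreg t ht').2.2.1.deriv, hφ'eq t ht']
        exact div_nonneg hc.le (pow_pos (hpos t ht') 3).le
      exact ⟨_, MonotoneOn.tendsto_nhdsWithin_Ioo_left hne (hmono.mono hIoosub)
        ⟨φ 0 + P * T, fun x ⟨t, ht, he⟩ => he ▸ hφub t (hIoosub ht)⟩⟩
  -- vector field setup
  set u : ℝ → (Fin 4 → ℝ) := fun t => ![a t, a' t, φ t, φ' t] with hudef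
  set F : (Fin 4 → ℝ) → (Fin 4 → ℝ) :=
    fun x => ![x 1, -(3 * x 3 ^ 2 * x 0), x 3, -(3 * x 1 * x 3) / x 0] with hFdef
  set vT : Fin 4 → ℝ := ![L, A'T, ΦT, c / L ^ 3] with hvTdef
  have htdu : Tendsto u (𝓝[<] T) (𝓝 vT) := by
    rw [tendsto_pi_nhds]
    intro i
    fin_cases i
    · simpa [hudef, hvTdef] using htda
    · simpa [hudef, hvTdef] using htda'
    · simpa [hudef, hvTdef] using htdφ
    · simpa [hudef, hvTdef] using htdφ'
  have hvT0 : vT 0 = L := by simp [hvTdef]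
  have hproj : ∀ i : Fin 4, ContDiff ℝ 1 (fun x : Fin 4 → ℝ => x i) :=
    fun i => contDiff_apply ℝ ℝ i
  have hFcd : ContDiffAt ℝ 1 F vT := by
    rw [contDiffAt_pi]
    intro i
    fin_cases i
    · simp only [hFdef, Matrix.cons_val_zero]
      exact (hproj 1).contDiffAt
    · simp only [hFdef, Matrix.cons_val_one, Matrix.head_cons]
      exact (((contDiff_const.mul ((hproj 3).pow 2)).mul (hproj 0)).neg).contDiffAt
    · simp only [hFdef, Matrix.cons_val_two, Matrix.tail_cons, Matrix.head_cons]
      exact (hproj 3).contDiffAt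
    · simp only [hFdef, Matrix.cons_val_three, Matrix.tail_cons, Matrix.head_cons]
      refine ContDiffAt.div ?_ (hproj 0).contDiffAt (by rw [hvT0]; exact hLpos.ne')
      exact (((contDiff_const.mul (hproj 1)).mul (hproj 3)).neg).contDiffAt
  obtain ⟨K, s, hs, hlip⟩ := hFcd.exists_lipschitzOnWith
  obtain ⟨γ, hγT, ε, hε, hγ⟩ := hFcd.exists_forall_mem_closedBall_exists_eq_forall_mem_Ioo_hasDerivAt₀ T
  have hγcont : ContinuousAt γ T := (hγ T ⟨by linarith, by linarith⟩).continuousAt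
  have htdγ : Tendsto γ (𝓝 T) (𝓝 vT) := hγT ▸ hγcont
  have hev : ∀ᶠ t in 𝓝 T, γ t ∈ s ∧ 0 < γ t 0 := by
    have e1 : ∀ᶠ t in 𝓝 T, γ t ∈ s := htdγ hs
    have e2 : ∀ᶠ t in 𝓝 T, 0 < γ t 0 := by
      have h3 : Tendsto (fun t => γ t 0) (𝓝 T) (𝓝 L) := by
        have := tendsto_pi_nhds.1 htdγ 0
        rwa [hvT0] at this
      exact h3.eventually (eventually_gt_nhds hLpos)
    exact e1.and e2
  obtain ⟨η, hη, hηball⟩ := Metric.eventually_nhds_iff.1 hev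
  have hγmem : ∀ x : ℝ, |x - T| < η → γ x ∈ s ∧ 0 < γ x 0 := by
    intro x hx
    exact hηball (by rwa [Real.dist_eq])
  have husub : u ⁻¹' s ∈ 𝓝[<] T := htdu hs
  obtain ⟨l, hlT, hlsub⟩ := mem_nhdsLT_iff_exists_Ioo_subset.1 husub
  set δ := min η ε with hδdef
  have hδη : δ ≤ η := min_le_left _ _
  have hδε : δ ≤ ε := min_le_right _ _
  have hδpos : 0 < δ := lt_min hη hε
  set τ : ℝ := max (max l (T - δ/2)) (T/2) with hτdef
  have hτT : τ < T := max_lt (max_lt hlT (by linarith)) (by linarith)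
  set τ' := (τ + T)/2 with hτ'def
  have hττ' : τ < τ' := by rw [hτ'def]; linarith
  have hτ'T : τ' < T := by rw [hτ'def]; linarith
  have hτ'pos : 0 < τ' := by
    have : T/2 ≤ τ := le_max_right _ _
    linarith
  have hlτ' : l < τ' := by
    have : l ≤ τ := (le_max_left l _).trans (le_max_left _ _)
    linarith
  have hτ'δ : T - δ/2 < τ' := by
    have : T - δ/2 ≤ τ := (le_max_right l _).trans (le_max_left _ _)
    linarith
  have humem : ∀ x, τ' ≤ x → x < T → u x ∈ s :=
    fun x h1 h2 => hlsub ⟨lt_of_lt_of_le hlτ' h1, h2⟩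
  -- derivative of φ' in terms of the other quantities
  have hφ''eq : ∀ t ∈ Ioo (0:ℝ) T, φ'' t = -(3 * a' t * φ' t) / a t := by
    intro t ht
    have ht' := hIoosub ht
    have hane := (hpos t ht').ne'
    have hd : HasDerivAt (fun s => a s ^ 3 * φ' s)
        (3 * a t ^ 2 * a' t * φ' t + a t ^ 3 * φ'' t) t := by
      have := ((hreg t ht').1.pow 3).mul (hreg t ht').2.2.2
      exact this.congr_deriv (by norm_num)
    have hconst : (fun s => a s ^ 3 * φ' s) =ᶠ[𝓝 t] fun _ => c := by
      filter_upwards [Ioo_mem_nhds ht.1 ht.2] with x hx using heq2 x (hIoosub hx)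
    have hzero : HasDerivAt (fun _ : ℝ => c)
        (3 * a t ^ 2 * a' t * φ' t + a t ^ 3 * φ'' t) t :=
      hd.congr_of_eventuallyEq hconst.symm
    have huniq := (hasDerivAt_const t c).unique hzero
    have h2 : a t ^ 2 * (3 * a' t * φ' t + a t * φ'' t) = 0 := by linear_combination -huniq
    rcases mul_eq_zero.1 h2 with h3 | h3
    · exact absurd h3 (pow_ne_zero 2 hane)
    · rw [eq_div_iff hane]; linarith
  have hu_deriv : ∀ t ∈ Ioo (0:ℝ) T, HasDerivAt u (F (u t)) t := by
    intro t ht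
    have ht' := hIoosub ht
    rw [flrw_hasDerivAt_pi]
    intro i
    fin_cases i
    · simpa [hudef, hFdef] using (hreg t ht').1
    · have he : a'' t = -(3 * φ' t ^ 2 * a t) := by linarith [heq1 t ht']
      have hd := (hreg t ht').2.1
      rw [he] at hd
      simpa [hudef, hFdef] using hd
    · simpa [hudef, hFdef] using (hreg t ht').2.2.1
    · have hd := (hreg t ht').2.2.2
      rw [hφ''eq t ht] at hd
      simpa [hudef, hFdef] using hd
  -- extend u to T by continuity
  set ub : ℝ → (Fin 4 → ℝ) := fun t => if t = T then vT else u t with hubdef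
  have hubeq : ∀ x < T, ub x = u x := fun x hx => by simp [hubdef, ne_of_lt hx]
  have hubT : ub T = vT := by simp [hubdef]
  have htdub : Tendsto ub (𝓝[<] T) (𝓝 vT) :=
    htdu.congr' (by filter_upwards [self_mem_nhdsWithin] with x (hx : x < T)
      using (hubeq x hx).symm)
  have hubev : ∀ x < T, ub =ᶠ[𝓝 x] u := fun x hx => by
    filter_upwards [Iio_mem_nhds hx] with y hy using hubeq y hy
  have hub_deriv : ∀ x ∈ Ioo (0:ℝ) T, HasDerivAt ub (F (ub x)) x := by
    intro x hx
    rw [hubeq x hx.2]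
    exact (hu_deriv x hx).congr_of_eventuallyEq (hubev x hx.2)
  have hubcontT : ContinuousWithinAt ub (Icc τ' T) T := by
    have h2 : Tendsto ub (𝓝[{T}] T) (𝓝 vT) := by
      rw [nhdsWithin_singleton, ← hubT]
      exact tendsto_pure_nhds ub T
    have hsplit : 𝓝[Iic T] T = 𝓝[Iio T] T ⊔ 𝓝[{T}] T := by
      rw [← Iio_union_right, nhdsWithin_union]
    unfold ContinuousWithinAt
    rw [hubT]
    apply Tendsto.mono_left _ (nhdsWithin_mono T Icc_subset_Iic_self)
    rw [hsplit, tendsto_sup]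
    exact ⟨htdub, h2⟩
  have hubcont : ContinuousOn ub (Icc τ' T) := by
    intro x hx
    rcases lt_or_eq_of_le hx.2 with hlt | heqT
    · exact (((hu_deriv x ⟨lt_of_lt_of_le hτ'pos hx.1, hlt⟩).continuousAt).congr
        (hubev x hlt).symm).continuousWithinAt
    · subst heqT; exact hubcontT
  have hFv_cont : Tendsto (fun x => F (u x)) (𝓝[<] T) (𝓝 (F vT)) :=
    (hFcd.continuousAt.tendsto).comp htdu
  have hub_derivT : HasDerivWithinAt ub (F (ub T)) (Iic T) T := by
    rw [hubT]
    refine hasDerivWithinAt_Iic_of_tendsto_deriv (s := Ioo τ' T) ?_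
      (hubcontT.mono Ioo_subset_Icc_self) (Ioo_mem_nhdsLT_of_mem ⟨hτ'T, le_rfl⟩) ?_
    · intro x hx
      exact ((hub_deriv x ⟨lt_of_lt_of_le hτ'pos hx.1.le, hx.2⟩).differentiableAt).differentiableWithinAt
    · refine hFv_cont.congr' ?_
      filter_upwards [Ioo_mem_nhdsLT_of_mem (⟨hτ'T, le_rfl⟩ : T ∈ Ioc τ' T)] with x hx
      rw [(hub_deriv x ⟨lt_of_lt_of_le hτ'pos hx.1.le, hx.2⟩).deriv, hubeq x hx.2]
  have hγsub : Icc τ' (T + δ/2) ⊆ Ioo (T - ε) (T + ε) := by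
    intro x hx
    constructor
    · have := hx.1; have := hτ'δ; have : T - ε ≤ T - δ := by linarith [hδε]
      linarith [hδpos]
    · have := hx.2; linarith [hδε, hδpos]
  have hγd : ∀ x ∈ Icc τ' (T + δ/2), HasDerivAt γ (F (γ x)) x := fun x hx => hγ x (hγsub hx)
  have hγs : ∀ x ∈ Icc τ' (T + δ/2), γ x ∈ s ∧ 0 < γ x 0 := by
    intro x hx
    refine hγmem x (abs_lt.2 ⟨?_, ?_⟩)
    · have := hx.1; have := hτ'δ; linarith [hδη]
    · have := hx.2; linarith [hδη, hδpos]
  have hIccsub : Icc τ' T ⊆ Icc τ' (T + δ/2) := Icc_subset_Icc le_rfl (by linarith)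
  have hEq : EqOn ub γ (Icc τ' T) := by
    refine ODE_solution_unique_of_mem_Icc_left (v := fun _ x => F x) (s := fun _ => s) (K := K)
      (fun _ _ => hlip) hubcont ?_ ?_
      (fun x hx => ((hγd x (hIccsub hx)).continuousAt).continuousWithinAt)
      (fun x hx => (hγd x (hIccsub (Ioc_subset_Icc_self hx))).hasDerivWithinAt)
      (fun x hx => (hγs x (hIccsub (Ioc_subset_Icc_self hx))).1)
      (by rw [hubT, hγT])
    · intro x hx
      rcases lt_or_eq_of_le hx.2 with hlt | heqT
      · exact ((hub_deriv x ⟨lt_trans hτ'pos hx.1, hlt⟩).hasDerivWithinAt)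
      · subst heqT; exact hub_derivT
    · intro x hx
      rcases lt_or_eq_of_le hx.2 with hlt | heqT
      · rw [hubeq x hlt]; exact humem x hx.1.le hlt
      · subst heqT; rw [hubT]; exact mem_of_mem_nhds hs
  have hglue : ∀ x, τ' ≤ x → x < T → u x = γ x := by
    intro x h1 h2
    rw [← hubeq x h2]
    exact hEq ⟨h1, h2.le⟩
  -- define glued functions
  set Af : ℝ → ℝ := fun t => if t < T then a t else γ t 0 with hAdef
  set A'f : ℝ → ℝ := fun t => if t < T then a' t else γ t 1 with hA'def
  set A''f : ℝ → ℝ := fun t => if t < T then a'' t else -(3 * γ t 3 ^ 2 * γ t 0) with hA''def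
  set Φf : ℝ → ℝ := fun t => if t < T then φ t else γ t 2 with hΦdef
  set Φ'f : ℝ → ℝ := fun t => if t < T then φ' t else γ t 3 with hΦ'def
  set Φ''f : ℝ → ℝ := fun t => if t < T then φ'' t else -(3 * γ t 1 * γ t 3) / γ t 0 with hΦ''def
  have hA0 : Af 0 = a 0 := by simp [hAdef, hTpos]
  have hΦ'0 : Φ'f 0 = φ' 0 := by simp [hΦ'def, hTpos]
  have hAg : ∀ x ∈ Ioo τ' (T + δ/2),
      Af x = γ x 0 ∧ A'f x = γ x 1 ∧ Φf x = γ x 2 ∧ Φ'f x = γ x 3 := by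
    intro x hx
    rcases lt_or_ge x T with h | h
    · have hux := hglue x hx.1.le h
      refine ⟨?_, ?_, ?_, ?_⟩ <;>
        simp [hAdef, hA'def, hΦdef, hΦ'def, h, ← hux, hudef]
    · refine ⟨?_, ?_, ?_, ?_⟩ <;>
        simp [hAdef, hA'def, hΦdef, hΦ'def, not_lt.2 h]
  refine ⟨Af, Φf, A'f, A''f, Φ'f, Φ''f, δ/4, by positivity, ?_, ?_⟩
  · intro t ht
    constructor <;> simp [hAdef, hΦdef, ht.2]
  · intro t ht0 htlt
    rcases lt_or_ge t T with hcase | hcase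
    · -- old region
      have htmem : t ∈ Ico (0:ℝ) T := ⟨ht0, hcase⟩
      have hIio : Iio T ∈ 𝓝 t := Iio_mem_nhds hcase
      have eA : Af =ᶠ[𝓝 t] a := by
        filter_upwards [hIio] with x hx; simp [hAdef, show x < T from hx]
      have eA' : A'f =ᶠ[𝓝 t] a' := by
        filter_upwards [hIio] with x hx; simp [hA'def, show x < T from hx]
      have eΦ : Φf =ᶠ[𝓝 t] φ := by
        filter_upwards [hIio] with x hx; simp [hΦdef, show x < T from hx]
      have eΦ' : Φ'f =ᶠ[𝓝 t] φ' := by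
        filter_upwards [hIio] with x hx; simp [hΦ'def, show x < T from hx]
      refine ⟨?_, ?_, ?_, ?_, ?_, ?_, ?_⟩
      · have h := (hreg t htmem).1.congr_of_eventuallyEq eA
        simpa [hA'def, hcase] using h
      · have h := (hreg t htmem).2.1.congr_of_eventuallyEq eA'
        simpa [hA''def, hcase] using h
      · have h := (hreg t htmem).2.2.1.congr_of_eventuallyEq eΦ
        simpa [hΦ'def, hcase] using h
      · have h := (hreg t htmem).2.2.2.congr_of_eventuallyEq eΦ'
        simpa [hΦ''def, hcase] using h
      · simpa [hAdef, hcase] using hpos t htmem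
      · simpa [hAdef, hA''def, hΦ'def, hcase] using heq1 t htmem
      · rw [hA0, hΦ'0]
        simpa [hAdef, hΦ'def, hcase] using heq2 t htmem
    · -- new region
      have htJ : t ∈ Ioo (T - ε) (T + ε) := ⟨by linarith [hδpos], by linarith [hδε, hδpos]⟩
      have htIcc : t ∈ Icc τ' (T + δ/2) := ⟨le_trans hτ'T.le hcase, by linarith [hδpos]⟩
      have hOoo : Ioo τ' (T + δ/2) ∈ 𝓝 t :=
        Ioo_mem_nhds (lt_of_lt_of_le hτ'T hcase) (by linarith [hδpos])
      have hdγ := hγ t htJ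
      rw [flrw_hasDerivAt_pi] at hdγ
      have eA : Af =ᶠ[𝓝 t] (fun x => γ x 0) := by
        filter_upwards [hOoo] with x hx using (hAg x hx).1
      have eA' : A'f =ᶠ[𝓝 t] (fun x => γ x 1) := by
        filter_upwards [hOoo] with x hx using (hAg x hx).2.1
      have eΦ : Φf =ᶠ[𝓝 t] (fun x => γ x 2) := by
        filter_upwards [hOoo] with x hx using (hAg x hx).2.2.1
      have eΦ' : Φ'f =ᶠ[𝓝 t] (fun x => γ x 3) := by
        filter_upwards [hOoo] with x hx using (hAg x hx).2.2.2
      have hntT : ¬ t < T := not_lt.2 hcase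
      -- the conserved quantity along γ
      have hconst : γ t 0 ^ 3 * γ t 3 = c := by
        have hγcc : ∀ x ∈ Icc τ' t, x ∈ Icc τ' (T + δ/2) :=
          fun x hx => ⟨hx.1, le_trans hx.2 htIcc.2⟩
        have hder : ∀ x ∈ Ico τ' t, HasDerivWithinAt (fun y => γ y 0 ^ 3 * γ y 3) 0 (Ici x) x := by
          intro x hx
          have hxIcc : x ∈ Icc τ' (T + δ/2) := ⟨hx.1, le_trans hx.2.le htIcc.2⟩
          have hdγx := hγ x (hγsub hxIcc)
          rw [flrw_hasDerivAt_pi] at hdγx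
          have hne0 : γ x 0 ≠ 0 := (hγs x hxIcc).2.ne'
          have hd : HasDerivAt (fun y => γ y 0 ^ 3 * γ y 3)
              (3 * γ x 0 ^ 2 * (F (γ x) 0) * γ x 3 + γ x 0 ^ 3 * (F (γ x) 3)) x := by
            have := ((hdγx 0).pow 3).mul (hdγx 3)
            exact this.congr_deriv (by norm_num)
          have hzero : (3 : ℝ) * γ x 0 ^ 2 * (F (γ x) 0) * γ x 3 + γ x 0 ^ 3 * (F (γ x) 3) = 0 := by
            simp only [hFdef]
            simp only [Matrix.cons_val_zero, Matrix.cons_val_three, Matrix.cons_val_one,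
              Matrix.head_cons, Matrix.tail_cons]
            field_simp
            ring
          rw [hzero] at hd
          exact hd.hasDerivWithinAt
        have hcont : ContinuousOn (fun y => γ y 0 ^ 3 * γ y 3) (Icc τ' t) := by
          intro x hx
          have hdγx := hγ x (hγsub (hγcc x hx))
          rw [flrw_hasDerivAt_pi] at hdγx
          exact (((hdγx 0).continuousAt.pow 3).mul (hdγx 3).continuousAt).continuousWithinAt
        have := constant_of_has_deriv_right_zero hcont hder t ⟨le_trans hτ'T.le hcase, le_rfl⟩
        rw [this]
        have hgτ : u τ' = γ τ' := hglue τ' le_rfl hτ'T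
        rw [← hgτ]
        simp only [hudef]
        simp only [Matrix.cons_val_zero, Matrix.cons_val_three, Matrix.tail_cons, Matrix.head_cons]
        exact heq2 τ' ⟨hτ'pos.le, hτ'T⟩
      refine ⟨?_, ?_, ?_, ?_, ?_, ?_, ?_⟩
      · have h := (hdγ 0).congr_of_eventuallyEq eA
        have hval : F (γ t) 0 = γ t 1 := by simp [hFdef]
        rw [hval] at h
        simpa [hA'def, hntT] using h
      · have h := (hdγ 1).congr_of_eventuallyEq eA'
        have hval : F (γ t) 1 = -(3 * γ t 3 ^ 2 * γ t 0) := by simp [hFdef]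
        rw [hval] at h
        simpa [hA''def, hntT] using h
      · have h := (hdγ 2).congr_of_eventuallyEq eΦ
        have hval : F (γ t) 2 = γ t 3 := by simp [hFdef]
        rw [hval] at h
        simpa [hΦ'def, hntT] using h
      · have h := (hdγ 3).congr_of_eventuallyEq eΦ'
        have hval : F (γ t) 3 = -(3 * γ t 1 * γ t 3) / γ t 0 := by simp [hFdef]
        rw [hval] at h
        simpa [hΦ''def, hntT] using h
      · simpa [hAdef, hntT] using (hγs t htIcc).2
      · simp only [hAdef, hA''def, hΦ'def]
        rw [if_neg hntT, if_neg hntT, if_neg hntT]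
        ring
      · rw [hA0, hΦ'0]
        simp only [hAdef, hΦ'def]
        rw [if_neg hntT, if_neg hntT, hconst]

end Test

/-- **Big crunch for collapsing FLRW**: for the FLRW reduction of the Einstein-scalar-field
equations — a scale factor `a > 0` and scalar field `φ`, `C²` on the maximal interval of
existence `[0,T_S)` on which `a > 0`, satisfying `ä + 3φ̇²a = 0` and `a³φ̇ = a₀³φ̇₀`, with
`a₀ = a(0) > 0`, `ȧ(0) < 0`, `φ̇(0) ≠ 0` — the maximal time `T_S` is finite, with
`T_S ≤ a₀/(−ȧ₀)`; moreover `ȧ(t) < 0` for all `t ∈ [0,T_S)` and `a(t) → 0` as `t → T_S`. -/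
theorem flrw_big_crunch
    (a a' a'' φ φ' φ'' : ℝ → ℝ) (TS : ℝ≥0∞) (hTSpos : 0 < TS)
    (ha0 : 0 < a 0) (hda0 : a' 0 < 0) (hdφ0 : φ' 0 ≠ 0)
    (hreg : ∀ t : ℝ, 0 ≤ t → ENNReal.ofReal t < TS →
      HasDerivAt a (a' t) t ∧ HasDerivAt a' (a'' t) t ∧
      HasDerivAt φ (φ' t) t ∧ HasDerivAt φ' (φ'' t) t)
    (hpos : ∀ t : ℝ, 0 ≤ t → ENNReal.ofReal t < TS → 0 < a t)
    (heq1 : ∀ t : ℝ, 0 ≤ t → ENNReal.ofReal t < TS →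
      a'' t + 3 * φ' t ^ 2 * a t = 0)
    (heq2 : ∀ t : ℝ, 0 ≤ t → ENNReal.ofReal t < TS →
      a t ^ 3 * φ' t = a 0 ^ 3 * φ' 0)
    (hmax : ∀ b : ℝ≥0∞, TS < b →
      ¬ ∃ A Φ A' A'' Φ' Φ'' : ℝ → ℝ,
        (∀ t : ℝ, 0 ≤ t → ENNReal.ofReal t < TS → A t = a t ∧ Φ t = φ t) ∧
        (∀ t : ℝ, 0 ≤ t → ENNReal.ofReal t < b →
          HasDerivAt A (A' t) t ∧ HasDerivAt A' (A'' t) t ∧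
          HasDerivAt Φ (Φ' t) t ∧ HasDerivAt Φ' (Φ'' t) t ∧
          0 < A t ∧
          A'' t + 3 * Φ' t ^ 2 * A t = 0 ∧
          A t ^ 3 * Φ' t = A 0 ^ 3 * Φ' 0)) :
    TS ≠ ⊤ ∧
    TS.toReal ≤ a 0 / (-(a' 0)) ∧
    (∀ t : ℝ, 0 ≤ t → ENNReal.ofReal t < TS → a' t < 0) ∧
    Filter.Tendsto a (nhdsWithin TS.toReal (Set.Iio TS.toReal)) (nhds 0) := by
  set M := a 0 / (-(a' 0)) with hMdef
  have hM : 0 < M := div_pos ha0 (neg_pos.2 hda0)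
  have key : ∀ t : ℝ, 0 ≤ t → ENNReal.ofReal t < TS →
      a' t ≤ a' 0 ∧ a t ≤ a 0 + a' 0 * t := by
    intro t ht hts
    have hsub : ∀ s ∈ Icc (0:ℝ) t, 0 ≤ s ∧ ENNReal.ofReal s < TS := fun s hs =>
      ⟨hs.1, lt_of_le_of_lt (ENNReal.ofReal_le_ofReal hs.2) hts⟩
    exact flrw_decay a a' a'' φ' ht
      (fun s hs => ⟨(hreg s (hsub s hs).1 (hsub s hs).2).1, (hreg s (hsub s hs).1 (hsub s hs).2).2.1⟩)
      (fun s hs => hpos s (hsub s hs).1 (hsub s hs).2)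
      (fun s hs => heq1 s (hsub s hs).1 (hsub s hs).2)
  have hTle : TS ≤ ENNReal.ofReal M := by
    by_contra h
    push_neg at h
    have h2 := (key M hM.le h).2
    have h3 := hpos M hM.le h
    have hne' : a' 0 ≠ 0 := ne_of_lt hda0
    have : a 0 + a' 0 * M = 0 := by
      rw [hMdef]
      field_simp [hne']
      ring
    linarith
  have hne : TS ≠ ⊤ := fun h => by simp [h] at hTle
  set T := TS.toReal with hTdef
  have hT2 : ENNReal.ofReal T = TS := ENNReal.ofReal_toReal hne
  have hTpos : 0 < T := ENNReal.toReal_pos hTSpos.ne' hne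
  have hcond : ∀ t : ℝ, 0 ≤ t → (ENNReal.ofReal t < TS ↔ t < T) := fun t ht => by
    rw [← hT2, ENNReal.ofReal_lt_ofReal_iff_of_nonneg ht]
  refine ⟨hne, ?_, fun t ht hts => lt_of_le_of_lt (key t ht hts).1 hda0, ?_⟩
  · calc TS.toReal ≤ (ENNReal.ofReal M).toReal :=
        ENNReal.toReal_mono ENNReal.ofReal_ne_top hTle
      _ = M := ENNReal.toReal_ofReal hM.le
  · by_contra hnt
    have hIcoTS : ∀ t, t ∈ Ico (0:ℝ) T → 0 ≤ t ∧ ENNReal.ofReal t < TS :=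
      fun t ht => ⟨ht.1, (hcond t ht.1).2 ht.2⟩
    obtain ⟨A, Φ, A', A'', Φ', Φ'', ε', hε', hAgree, hAll⟩ :=
      flrw_extension a a' a'' φ φ' φ'' T hTpos ha0 hda0
        (fun t ht => hreg t (hIcoTS t ht).1 (hIcoTS t ht).2)
        (fun t ht => hpos t (hIcoTS t ht).1 (hIcoTS t ht).2)
        (fun t ht => heq1 t (hIcoTS t ht).1 (hIcoTS t ht).2)
        (fun t ht => heq2 t (hIcoTS t ht).1 (hIcoTS t ht).2)
        (fun t ht => (key t (hIcoTS t ht).1 (hIcoTS t ht).2).1)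
        hnt
    refine hmax (ENNReal.ofReal (T + ε')) ?_ ⟨A, Φ, A', A'', Φ', Φ'', ?_, ?_⟩
    · rw [← hT2, ENNReal.ofReal_lt_ofReal_iff_of_nonneg hTpos.le]
      linarith
    · exact fun t ht hts => hAgree t ⟨ht, (hcond t ht).1 hts⟩
    · intro t ht htb
      exact hAll t ht ((ENNReal.ofReal_lt_ofReal_iff_of_nonneg ht).1 htb)
end

section
/- FLRW asymptotics at the big crunch: setting a_S := a₀·((3√3/√2)·|φ̇₀|)^{1/3} and φ_S := −sign(φ̇₀)·√2/(3√3), one has lim_{t→T_S} a(t)/(T_S−t)^{1/3} = a_S, lim_{t→T_S} (T_S−t)·φ̇(t) = −φ_S = sign(φ̇₀)·√2/(3√3), and lim_{t→T_S} φ(t)/ln(T_S−t) = φ_S. -/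
open Filter Topology Set

lemma aux_ratio {g g' : ℝ → ℝ} {T L c : ℝ} (hc : c < T)
    (hder : ∀ t ∈ Set.Ico c T, HasDerivAt g (g' t) t)
    (hg0 : Tendsto g (𝓝[<] T) (𝓝 0))
    (hg' : Tendsto g' (𝓝[<] T) (𝓝 (-L))) :
    Tendsto (fun t => g t / (T - t)) (𝓝[<] T) (𝓝 L) := by
  rw [Metric.tendsto_nhdsWithin_nhds]
  intro ε hε
  obtain ⟨δ₁, hδ₁pos, hδ₁⟩ := Metric.tendsto_nhdsWithin_nhds.1 hg' (ε/2) (by positivity)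
  set t₁ : ℝ := max c (T - δ₁/2) with ht₁def
  have ht₁T : t₁ < T := by
    apply max_lt hc; linarith
  have hct₁ : c ≤ t₁ := le_max_left _ _
  have hbound : ∀ s ∈ Set.Ioo t₁ T, |g' s + L| ≤ ε/2 := by
    intro s hs
    have h1 : dist s T < δ₁ := by
      rw [Real.dist_eq, abs_of_nonpos (by linarith [hs.2])]
      have : T - δ₁/2 ≤ t₁ := le_max_right _ _
      linarith [hs.1]
    have := hδ₁ hs.2 h1
    rw [Real.dist_eq] at this
    rw [sub_neg_eq_add] at this
    exact le_of_lt this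
  have hmem : ∀ s ∈ Set.Ioo t₁ T, s ∈ Set.Ico c T :=
    fun s hs => ⟨le_trans hct₁ hs.1.le, hs.2⟩
  have key : ∀ t ∈ Set.Ioo t₁ T, |g t - L * (T - t)| ≤ ε/2 * (T - t) := by
    intro t ht
    have hklim : Tendsto (fun u => |g u - g t + L * (u - t)|) (𝓝[<] T)
        (𝓝 |0 - g t + L * (T - t)|) := by
      apply Tendsto.abs
      exact (hg0.sub tendsto_const_nhds).add
        ((tendsto_const_nhds.mul ((tendsto_nhdsWithin_of_tendsto_nhds tendsto_id).sub tendsto_const_nhds)))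
    have hev : ∀ᶠ u in 𝓝[<] T, |g u - g t + L * (u - t)| ≤ ε/2 * (T - t) := by
      filter_upwards [Ioo_mem_nhdsLT_of_mem (⟨ht.2, le_refl T⟩ : T ∈ Set.Ioc t T)] with u hu
      have htu : t < u := hu.1
      have huT : u < T := hu.2
      obtain ⟨ξ, hξ, hslope⟩ := exists_hasDerivAt_eq_slope g g' htu
        (fun x hx => (hder x ⟨le_trans (hmem t ht).1 hx.1, lt_of_le_of_lt hx.2 huT⟩).continuousAt.continuousWithinAt)
        (fun x hx => hder x ⟨le_trans (hmem t ht).1 hx.1.le, lt_trans hx.2 huT⟩)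
      have hgu : g u - g t = g' ξ * (u - t) := by
        have hne : u - t ≠ 0 := by linarith
        rw [hslope]
        field_simp
      have hξb : |g' ξ + L| ≤ ε/2 := hbound ξ ⟨lt_trans ht.1 hξ.1, lt_trans hξ.2 huT⟩
      have heq : g u - g t + L * (u - t) = (g' ξ + L) * (u - t) := by
        rw [hgu]; ring
      rw [heq, abs_mul, abs_of_pos (show (0:ℝ) < u - t by linarith)]
      have h1 : |g' ξ + L| * (u - t) ≤ ε/2 * (u - t) :=
        mul_le_mul_of_nonneg_right hξb (by linarith)
      have h2 : ε/2 * (u - t) ≤ ε/2 * (T - t) :=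
        mul_le_mul_of_nonneg_left (by linarith) (by positivity)
      linarith
    have := le_of_tendsto hklim hev
    rw [show (0:ℝ) - g t + L * (T - t) = -(g t - L * (T - t)) by ring, abs_neg] at this
    exact this
  refine ⟨T - t₁, by linarith, fun x hx hdx => ?_⟩
  have hxT : x < T := hx
  have hxt₁ : t₁ < x := by
    rw [Real.dist_eq, abs_of_nonpos (by linarith)] at hdx
    linarith
  have hkey := key x ⟨hxt₁, hxT⟩
  rw [Real.dist_eq]
  have hTx : (0:ℝ) < T - x := by linarith
  have heq : |g x / (T - x) - L| = |g x - L * (T - x)| / (T - x) := by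
    rw [show g x / (T - x) - L = (g x - L * (T - x)) / (T - x) by field_simp,
      abs_div, abs_of_pos hTx]
  rw [heq, div_lt_iff₀ hTx]
  nlinarith [hkey, abs_nonneg (g x - L * (T - x))]

lemma aux_log {φ φ' : ℝ → ℝ} {T κ c : ℝ} (hc : c < T)
    (hder : ∀ t ∈ Set.Ico c T, HasDerivAt φ (φ' t) t)
    (hκ : Tendsto (fun t => (T - t) * φ' t) (𝓝[<] T) (𝓝 κ)) :
    Tendsto (fun t => φ t / Real.log (T - t)) (𝓝[<] T) (𝓝 (-κ)) := by
  have hlog : Tendsto (fun t => Real.log (T - t)) (𝓝[<] T) atBot := by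
    have h1 : Tendsto (fun t : ℝ => T - t) (𝓝[<] T) (𝓝[≠] (0:ℝ)) := by
      rw [tendsto_nhdsWithin_iff]
      constructor
      · have : Tendsto (fun t : ℝ => T - t) (𝓝 T) (𝓝 (T - T)) :=
          (continuous_const.sub continuous_id).tendsto T
        rw [sub_self] at this
        exact this.mono_left nhdsWithin_le_nhds
      · filter_upwards [eventually_mem_nhdsWithin] with t ht
        simp only [mem_compl_iff, mem_singleton_iff]
        have : t < T := ht
        intro h; rw [sub_eq_zero] at h; exact absurd h.symm (ne_of_lt this)
    exact Real.tendsto_log_nhdsNE_zero.comp h1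
  rw [Metric.tendsto_nhds]
  intro ε hε
  set ε3 := ε / 3 with hε3def
  have hε3 : 0 < ε3 := by positivity
  obtain ⟨δ, hδpos, hδ⟩ := Metric.tendsto_nhdsWithin_nhds.1 hκ ε3 hε3
  set t₁ : ℝ := max (max c (T - 1)) (T - δ/2) with ht₁def
  have ht₁T : t₁ < T := by
    apply max_lt (max_lt hc (by linarith)) (by linarith)
  set t₂ : ℝ := (t₁ + T) / 2 with ht₂def
  have ht₁t₂ : t₁ < t₂ := by rw [ht₂def]; linarith
  have ht₂T : t₂ < T := by rw [ht₂def]; linarith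
  have hct₁ : c ≤ t₁ := le_trans (le_max_left _ _) (le_max_left _ _)
  have hT1t₁ : T - 1 ≤ t₁ := le_trans (le_max_right _ _) (le_max_left _ _)
  have hbound : ∀ s ∈ Set.Ioo t₁ T, |(T - s) * φ' s - κ| ≤ ε3 := by
    intro s hs
    have h1 : dist s T < δ := by
      rw [Real.dist_eq, abs_of_nonpos (by linarith [hs.2])]
      have : T - δ/2 ≤ t₁ := le_max_right _ _
      linarith [hs.1]
    have := hδ hs.2 h1
    rw [Real.dist_eq] at this
    exact le_of_lt this
  -- monotonicity of h_β on Ico t₂ T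
  have hmono : ∀ β : ℝ, (∀ s ∈ Set.Ioo t₁ T, ((T - s) * φ' s - β) ≤ 0 ∨ True) → True := fun _ _ => trivial
  have hderh : ∀ β : ℝ, ∀ x ∈ Set.Ioo t₂ T,
      HasDerivAt (fun s => φ s + β * Real.log (T - s))
        (φ' x + β * (-(1 / (T - x)))) x := by
    intro β x hx
    have hxT : x < T := hx.2
    have hne : T - x ≠ 0 := by intro h; rw [sub_eq_zero] at h; exact absurd h.symm (ne_of_lt hxT)
    have hdlog : HasDerivAt (fun s : ℝ => Real.log (T - s)) (-(1 / (T - x))) x := by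
      have h1 : HasDerivAt (fun s : ℝ => T - s) (-1) x := by
        simpa using (hasDerivAt_id x).const_sub T
      have h2 := (Real.hasDerivAt_log hne).comp x h1
      exact h2.congr_deriv (by ring)
    exact (hder x ⟨le_trans hct₁ (le_trans ht₁t₂.le hx.1.le), hxT⟩).add (hdlog.const_mul β)
  have hcont : ∀ β : ℝ, ContinuousOn (fun s => φ s + β * Real.log (T - s)) (Set.Ico t₂ T) := by
    intro β
    apply ContinuousOn.add
    · intro x hx
      exact (hder x ⟨le_trans hct₁ (le_trans ht₁t₂.le hx.1), hx.2⟩).continuousAt.continuousWithinAt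
    · apply ContinuousOn.mul continuousOn_const
      apply ContinuousOn.log
      · exact (continuous_const.sub continuous_id).continuousOn
      · intro x hx
        intro h; rw [sub_eq_zero] at h; exact absurd h.symm (ne_of_lt hx.2)
  have hderiv_formula : ∀ β : ℝ, ∀ x ∈ Set.Ioo t₂ T,
      deriv (fun s => φ s + β * Real.log (T - s)) x = ((T - x) * φ' x - β) / (T - x) := by
    intro β x hx
    rw [(hderh β x hx).deriv]
    have hne : T - x ≠ 0 := by
      intro h; rw [sub_eq_zero] at h; exact absurd h.symm (ne_of_lt hx.2)
    field_simp
    ring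
  have hanti : AntitoneOn (fun s => φ s + (κ + ε3) * Real.log (T - s)) (Set.Ico t₂ T) := by
    apply antitoneOn_of_deriv_nonpos (convex_Ico _ _) (hcont _)
    · rw [interior_Ico]
      intro x hx
      exact (hderh _ x hx).differentiableAt.differentiableWithinAt
    · rw [interior_Ico]
      intro x hx
      rw [hderiv_formula _ x hx]
      apply div_nonpos_of_nonpos_of_nonneg
      · have := hbound x ⟨lt_trans ht₁t₂ hx.1, hx.2⟩
        rw [abs_le] at this
        linarith [this.2]
      · linarith [hx.2]
  have hmono' : MonotoneOn (fun s => φ s + (κ - ε3) * Real.log (T - s)) (Set.Ico t₂ T) := by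
    apply monotoneOn_of_deriv_nonneg (convex_Ico _ _) (hcont _)
    · rw [interior_Ico]
      intro x hx
      exact (hderh _ x hx).differentiableAt.differentiableWithinAt
    · rw [interior_Ico]
      intro x hx
      rw [hderiv_formula _ x hx]
      apply div_nonneg
      · have := hbound x ⟨lt_trans ht₁t₂ hx.1, hx.2⟩
        rw [abs_le] at this
        linarith [this.1]
      · linarith [hx.2]
  set A : ℝ := φ t₂ + (κ + ε3) * Real.log (T - t₂) with hA
  set B : ℝ := φ t₂ + (κ - ε3) * Real.log (T - t₂) with hB
  have hdiv0 : ∀ Cst : ℝ, Tendsto (fun t => Cst / Real.log (T - t)) (𝓝[<] T) (𝓝 0) := by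
    intro Cst
    have hneg : Tendsto (fun t => -Real.log (T - t)) (𝓝[<] T) atTop :=
      tendsto_neg_atBot_atTop.comp hlog
    have h := Tendsto.div_atTop
      (tendsto_const_nhds : Tendsto (fun _ : ℝ => -Cst) (𝓝[<] T) (𝓝 (-Cst))) hneg
    simpa [neg_div_neg_eq] using h
  have hAev : ∀ᶠ t in 𝓝[<] T, |A / Real.log (T - t)| < ε3 := by
    have h0 := hdiv0 A
    have := Metric.tendsto_nhds.1 h0 ε3 hε3
    filter_upwards [this] with t ht
    rwa [Real.dist_eq, sub_zero] at ht
  have hBev : ∀ᶠ t in 𝓝[<] T, |B / Real.log (T - t)| < ε3 := by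
    have h0 := hdiv0 B
    have := Metric.tendsto_nhds.1 h0 ε3 hε3
    filter_upwards [this] with t ht
    rwa [Real.dist_eq, sub_zero] at ht
  filter_upwards [Ioo_mem_nhdsLT_of_mem (⟨ht₂T, le_refl T⟩ : T ∈ Set.Ioc t₂ T), hAev, hBev]
    with t ht hAt hBt
  set ℓ : ℝ := Real.log (T - t) with hℓdef
  have hTt : 0 < T - t := by linarith [ht.2]
  have hTt1 : T - t < 1 := by linarith [ht.1, ht₁t₂, hT1t₁]
  have hℓneg : ℓ < 0 := Real.log_neg hTt hTt1
  have hℓne : ℓ ≠ 0 := ne_of_lt hℓneg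
  have ht₂mem : t₂ ∈ Set.Ico t₂ T := ⟨le_refl _, ht₂T⟩
  have htmem : t ∈ Set.Ico t₂ T := ⟨ht.1.le, ht.2⟩
  have hup : φ t + (κ + ε3) * ℓ ≤ A := hanti ht₂mem htmem ht.1.le
  have hlo : B ≤ φ t + (κ - ε3) * ℓ := hmono' ht₂mem htmem ht.1.le
  have h1 : A / ℓ ≤ φ t / ℓ + (κ + ε3) := by
    rw [div_le_iff_of_neg hℓneg]
    have hmul : (φ t / ℓ + (κ + ε3)) * ℓ = φ t + (κ + ε3) * ℓ := by
      field_simp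
    rw [hmul]; exact hup
  have h2 : φ t / ℓ + (κ - ε3) ≤ B / ℓ := by
    rw [le_div_iff_of_neg hℓneg]
    have hmul : (φ t / ℓ + (κ - ε3)) * ℓ = φ t + (κ - ε3) * ℓ := by
      field_simp
    rw [hmul]; exact hlo
  rw [Real.dist_eq]
  rw [abs_lt] at hAt hBt ⊢
  constructor <;> [skip; skip] <;>
    [ (have := hAt.1; simp only [sub_neg_eq_add]; linarith [h1, hAt.1]);
      (simp only [sub_neg_eq_add]; linarith [h2, hBt.2]) ]


/-- **FLRW asymptotics at the big crunch**: for the FLRW reduction of the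
Einstein-scalar-field equations on `[0,T_S)` (with `T_S < ∞` the big crunch time and
`a(t) → 0` as `t → T_S`), setting `a_S := a₀·((3√3/√2)·|φ̇₀|)^{1/3}` and
`φ_S := −sign(φ̇₀)·√2/(3√3)`, one has `a(t)/(T_S−t)^{1/3} → a_S`,
`(T_S−t)·φ̇(t) → −φ_S = sign(φ̇₀)·√2/(3√3)` and `φ(t)/ln(T_S−t) → φ_S` as `t → T_S⁻`. -/
theorem flrw_crunch_asymptotics
    (a a' a'' φ φ' φ'' : ℝ → ℝ) (TS : ℝ) (hTSpos : 0 < TS)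
    (ha0 : 0 < a 0) (hda0 : a' 0 < 0) (hdφ0 : φ' 0 ≠ 0)
    (hreg : ∀ t ∈ Set.Ico (0 : ℝ) TS,
      HasDerivAt a (a' t) t ∧ HasDerivAt a' (a'' t) t ∧
      HasDerivAt φ (φ' t) t ∧ HasDerivAt φ' (φ'' t) t)
    (hpos : ∀ t ∈ Set.Ico (0 : ℝ) TS, 0 < a t)
    (heq1 : ∀ t ∈ Set.Ico (0 : ℝ) TS, a'' t + 3 * φ' t ^ 2 * a t = 0)
    (heq2 : ∀ t ∈ Set.Ico (0 : ℝ) TS, a t ^ 3 * φ' t = a 0 ^ 3 * φ' 0)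
    (hcrunch : Filter.Tendsto a (nhdsWithin TS (Set.Iio TS)) (nhds 0)) :
    Filter.Tendsto (fun t => a t / (TS - t) ^ ((1 : ℝ) / 3))
      (nhdsWithin TS (Set.Iio TS))
      (nhds (a 0 * (3 * Real.sqrt 3 / Real.sqrt 2 * |φ' 0|) ^ ((1 : ℝ) / 3))) ∧
    Filter.Tendsto (fun t => (TS - t) * φ' t)
      (nhdsWithin TS (Set.Iio TS))
      (nhds (Real.sign (φ' 0) * Real.sqrt 2 / (3 * Real.sqrt 3))) ∧
    Filter.Tendsto (fun t => φ t / Real.log (TS - t))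
      (nhdsWithin TS (Set.Iio TS))
      (nhds (-Real.sign (φ' 0) * Real.sqrt 2 / (3 * Real.sqrt 3))) := by
  set C : ℝ := a 0 ^ 3 * φ' 0 with hCdef
  have hC : C ≠ 0 := mul_ne_zero (pow_ne_zero 3 (ne_of_gt ha0)) hdφ0
  have hane : ∀ t ∈ Set.Ico (0:ℝ) TS, a t ≠ 0 := fun t ht => ne_of_gt (hpos t ht)
  have hφ' : ∀ t ∈ Set.Ico (0:ℝ) TS, φ' t = C / a t ^ 3 := by
    intro t ht
    rw [eq_div_iff (pow_ne_zero 3 (hane t ht))]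
    linarith [heq2 t ht]
  set K : ℝ := a' 0 ^ 2 - 3/2 * C^2 * (a 0 ^ 4)⁻¹ with hKdef
  set E : ℝ → ℝ := fun t => a' t ^ 2 - 3/2 * C^2 * (a t ^ 4)⁻¹ with hEdef
  have hEderiv : ∀ t ∈ Set.Ico (0:ℝ) TS, HasDerivAt E 0 t := by
    intro t ht
    have hA := (hreg t ht).1
    have hA' := (hreg t ht).2.1
    have h1 : HasDerivAt (fun s => a' s ^ 2) (2 * a' t * a'' t) t := by
      simpa using hA'.fun_pow 2
    have h2 : HasDerivAt (fun s => a s ^ 4) (4 * a t ^ 3 * a' t) t := by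
      simpa using hA.fun_pow 4
    have h3 : HasDerivAt (fun s => (a s ^ 4)⁻¹)
        (-(4 * a t ^ 3 * a' t) / (a t ^ 4) ^ 2) t := h2.inv (pow_ne_zero 4 (hane t ht))
    have h4 : HasDerivAt E
        (2 * a' t * a'' t - 3/2 * C^2 * (-(4 * a t ^ 3 * a' t) / (a t ^ 4) ^ 2)) t :=
      h1.sub (h3.const_mul _)
    have hzero : 2 * a' t * a'' t - 3/2 * C^2 * (-(4 * a t ^ 3 * a' t) / (a t ^ 4) ^ 2) = 0 := by
      have ha'' : a'' t = -(3 * φ' t ^ 2 * a t) := by linarith [heq1 t ht]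
      rw [ha'', hφ' t ht]
      have := hane t ht
      field_simp
      ring
    rwa [hzero] at h4
  have hEcont : ContinuousOn E (Set.Ico (0:ℝ) TS) :=
    fun t ht => (hEderiv t ht).continuousAt.continuousWithinAt
  have hintmem : ∀ x ∈ interior (Set.Ico (0:ℝ) TS), x ∈ Set.Ico (0:ℝ) TS := by
    rw [interior_Ico]; exact fun x hx => ⟨hx.1.le, hx.2⟩
  have hEdiff : DifferentiableOn ℝ E (interior (Set.Ico (0:ℝ) TS)) :=
    fun x hx => ((hEderiv x (hintmem x hx)).differentiableAt).differentiableWithinAt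
  have hEconst : ∀ t ∈ Set.Ico (0:ℝ) TS, E t = E 0 := by
    intro t ht
    have h0mem : (0:ℝ) ∈ Set.Ico (0:ℝ) TS := ⟨le_refl _, hTSpos⟩
    have hmono := monotoneOn_of_deriv_nonneg (convex_Ico (0:ℝ) TS) hEcont hEdiff
      (fun x hx => by rw [(hEderiv x (hintmem x hx)).deriv])
    have hanti := antitoneOn_of_deriv_nonpos (convex_Ico (0:ℝ) TS) hEcont hEdiff
      (fun x hx => by rw [(hEderiv x (hintmem x hx)).deriv])
    exact le_antisymm (hanti h0mem ht ht.1) (hmono h0mem ht ht.1)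
  have hE : ∀ t ∈ Set.Ico (0:ℝ) TS, a' t ^ 2 = 3/2 * C^2 * (a t ^ 4)⁻¹ + K := by
    intro t ht
    have := hEconst t ht
    simp only [hEdef] at this
    rw [hKdef]
    linarith
  -- a^4 inverse tends to atTop
  have hIooMem : Set.Ioo (0:ℝ) TS ∈ 𝓝[<] TS :=
    Ioo_mem_nhdsLT_of_mem ⟨hTSpos, le_refl TS⟩
  have hC2 : 0 < C ^ 2 := lt_of_le_of_ne (sq_nonneg C) (Ne.symm (pow_ne_zero 2 hC))
  have ha4 : Tendsto (fun t => a t ^ 4) (𝓝[<] TS) (𝓝[>] (0:ℝ)) := by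
    rw [tendsto_nhdsWithin_iff]
    constructor
    · have := hcrunch.pow 4
      simpa using this
    · filter_upwards [hIooMem] with t ht
      exact pow_pos (hpos t ⟨ht.1.le, ht.2⟩) 4
  have hatTop : Tendsto (fun t => 3/2 * C^2 * (a t ^ 4)⁻¹ + K) (𝓝[<] TS) atTop := by
    apply tendsto_atTop_add_const_right
    apply Tendsto.const_mul_atTop (by positivity : (0:ℝ) < 3/2 * C^2)
    exact ha4.inv_tendsto_nhdsGT_zero
  have hev1 : ∀ᶠ s in 𝓝[<] TS, 1 ≤ 3/2 * C^2 * (a s ^ 4)⁻¹ + K :=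
    hatTop.eventually_ge_atTop 1
  obtain ⟨t₀, ht₀, hsub⟩ := mem_nhdsLT_iff_exists_Ioo_subset.1
    (Filter.inter_mem (hev1 : {s | 1 ≤ 3/2 * C^2 * (a s ^ 4)⁻¹ + K} ∈ 𝓝[<] TS) hIooMem)
  set t₁ : ℝ := max t₀ 0 with ht₁def
  have ht₁TS : t₁ < TS := max_lt ht₀ hTSpos
  have hmemIoo : ∀ s ∈ Set.Ioo t₁ TS, s ∈ Set.Ico (0:ℝ) TS := by
    intro s hs
    have : s ∈ Set.Ioo t₀ TS := ⟨lt_of_le_of_lt (le_max_left _ _) hs.1, hs.2⟩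
    have := hsub this
    exact ⟨this.2.1.le, this.2.2⟩
  have hsq1 : ∀ s ∈ Set.Ioo t₁ TS, 1 ≤ a' s ^ 2 := by
    intro s hs
    have h1 : s ∈ Set.Ioo t₀ TS := ⟨lt_of_le_of_lt (le_max_left _ _) hs.1, hs.2⟩
    have h2 := (hsub h1).1
    rw [hE s (hmemIoo s hs)]
    exact h2
  have hane' : ∀ s ∈ Set.Ioo t₁ TS, a' s ≠ 0 := by
    intro s hs h0
    have := hsq1 s hs
    rw [h0] at this; norm_num at this
  -- a' is negative on Ioo t₁ TS
  have hneg : ∀ t ∈ Set.Ioo t₁ TS, a' t < 0 := by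
    intro t ht
    rcases lt_or_gt_of_ne (hane' t ht) with h | h
    · exact h
    exfalso
    -- claim a' > 0 on Ico t TS
    have hclaim : ∀ s ∈ Set.Ico t TS, 0 < a' s := by
      intro s hs
      by_contra hle
      push_neg at hle
      have hst : t < s := by
        rcases lt_or_eq_of_le hs.1 with h' | h'
        · exact h'
        · exfalso; rw [← h'] at hle; linarith
      have hsIoo : s ∈ Set.Ioo t₁ TS := ⟨lt_trans ht.1 hst, hs.2⟩
      have hslt : a' s < 0 := lt_of_le_of_ne hle (hane' s hsIoo)
      have hcont : ContinuousOn a' (Set.Icc t s) := by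
        intro x hx
        have hxm : x ∈ Set.Ico (0:ℝ) TS :=
          hmemIoo x ⟨lt_of_lt_of_le ht.1 hx.1, lt_of_le_of_lt hx.2 hs.2⟩
        exact (hreg x hxm).2.1.continuousAt.continuousWithinAt
      have h0mem : (0:ℝ) ∈ Set.Icc (a' s) (a' t) := ⟨hslt.le, h.le⟩
      obtain ⟨ξ, hξmem, hξ⟩ := intermediate_value_Icc' hst.le hcont h0mem
      have hξIoo : ξ ∈ Set.Ioo t₁ TS :=
        ⟨lt_of_lt_of_le ht.1 hξmem.1, lt_of_le_of_lt hξmem.2 hs.2⟩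
      exact hane' ξ hξIoo hξ
    -- then a is monotone on Ico t TS, contradicting a → 0
    have hamono : MonotoneOn a (Set.Ico t TS) := by
      apply monotoneOn_of_deriv_nonneg (convex_Ico t TS)
      · intro x hx
        exact ((hreg x (hmemIoo x ⟨lt_of_lt_of_le ht.1 hx.1, hx.2⟩)).1.continuousAt.continuousWithinAt)
      · rw [interior_Ico]
        intro x hx
        exact ((hreg x (hmemIoo x ⟨lt_trans ht.1 hx.1, hx.2⟩)).1.differentiableAt.differentiableWithinAt)
      · rw [interior_Ico]
        intro x hx
        rw [((hreg x (hmemIoo x ⟨lt_trans ht.1 hx.1, hx.2⟩)).1).deriv]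
        exact (hclaim x ⟨hx.1.le, hx.2⟩).le
    have hev : ∀ᶠ s in 𝓝[<] TS, a t ≤ a s := by
      filter_upwards [Ioo_mem_nhdsLT_of_mem (⟨ht.2, le_refl TS⟩ : TS ∈ Set.Ioc t TS)] with s hs
      exact hamono ⟨le_refl t, ht.2⟩ ⟨hs.1.le, hs.2⟩ hs.1.le
    have : a t ≤ 0 := ge_of_tendsto hcrunch hev
    linarith [hpos t (hmemIoo t ht)]
  -- limit of the derivative of a^3
  set L : ℝ := 3 * Real.sqrt (3/2 * C^2) with hLdef
  have hLpos : 0 < L := by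
    rw [hLdef]
    have : 0 < Real.sqrt (3/2 * C^2) := Real.sqrt_pos.2 (by positivity)
    linarith
  have hg'formula : ∀ t ∈ Set.Ioo t₁ TS, 3 * a t ^ 2 * a' t
      = -(3 * Real.sqrt (3/2 * C^2 + K * a t ^ 4)) := by
    intro t ht
    have htm := hmemIoo t ht
    have ha'neg := hneg t ht
    have hsq := hE t htm
    have hane2 := hane t htm
    have harg : (a t ^2)^2 * (3/2*C^2*(a t^4)⁻¹ + K) = 3/2*C^2 + K * a t^4 := by
      field_simp
    have key : a t ^2 * Real.sqrt (3/2*C^2*(a t^4)⁻¹ + K)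
        = Real.sqrt (3/2*C^2 + K * a t^4) := by
      rw [← harg, Real.sqrt_mul (by positivity : (0:ℝ) ≤ (a t^2)^2),
        Real.sqrt_sq (sq_nonneg _)]
    have ha'eq : a' t = -Real.sqrt (a' t ^ 2) := by
      rw [Real.sqrt_sq_eq_abs, abs_of_neg ha'neg, neg_neg]
    rw [ha'eq, hsq]
    rw [show (3:ℝ) * a t ^2 * -Real.sqrt (3/2*C^2*(a t^4)⁻¹ + K)
      = -(3 * (a t ^2 * Real.sqrt (3/2*C^2*(a t^4)⁻¹ + K))) by ring, key]
  have hg'lim : Tendsto (fun t => 3 * a t ^2 * a' t) (𝓝[<] TS) (𝓝 (-L)) := by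
    have h1 : Tendsto (fun t => -(3 * Real.sqrt (3/2*C^2 + K * a t ^ 4))) (𝓝[<] TS)
        (𝓝 (-(3 * Real.sqrt (3/2*C^2 + K * 0 ^ 4)))) := by
      apply Tendsto.neg
      apply Tendsto.const_mul
      apply Filter.Tendsto.sqrt
      exact tendsto_const_nhds.add (tendsto_const_nhds.mul (hcrunch.pow 4))
    have h2 : -(3 * Real.sqrt (3/2*C^2 + K * 0 ^ 4)) = -L := by
      rw [hLdef]; norm_num
    rw [h2] at h1
    refine Filter.Tendsto.congr' ?_ h1
    filter_upwards [Ioo_mem_nhdsLT_of_mem (⟨ht₁TS, le_refl TS⟩ : TS ∈ Set.Ioc t₁ TS)] with t ht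
    exact (hg'formula t ht).symm
  have hratio : Tendsto (fun t => a t ^3 / (TS - t)) (𝓝[<] TS) (𝓝 L) := by
    apply aux_ratio (c := 0) hTSpos (g' := fun t => 3 * a t ^2 * a' t)
    · intro t ht
      simpa using (hreg t ht).1.fun_pow 3
    · simpa using hcrunch.pow 3
    · exact hg'lim
  -- value identities
  have hsqrtCsq : Real.sqrt (3/2 * C^2) = Real.sqrt (3/2) * |C| := by
    rw [Real.sqrt_mul (by norm_num : (0:ℝ) ≤ 3/2), Real.sqrt_sq_eq_abs]
  have hs32 : Real.sqrt ((3:ℝ)/2) = Real.sqrt 3 / Real.sqrt 2 :=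
    Real.sqrt_div (by norm_num) 2
  have hCabs : |C| = a 0 ^3 * |φ' 0| := by
    rw [hCdef, abs_mul, abs_of_pos (pow_pos ha0 3)]
  -- limit 1
  have hlim1 : Tendsto (fun t => a t / (TS - t) ^ ((1:ℝ)/3)) (𝓝[<] TS)
      (𝓝 (a 0 * (3 * Real.sqrt 3 / Real.sqrt 2 * |φ' 0|) ^ ((1:ℝ)/3))) := by
    have hcomp : Tendsto (fun t => (a t ^3/(TS - t)) ^ ((1:ℝ)/3)) (𝓝[<] TS)
        (𝓝 (L ^ ((1:ℝ)/3))) :=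
      ((Real.continuousAt_rpow_const L ((1:ℝ)/3) (Or.inr (by norm_num))).tendsto).comp hratio
    have hval : L ^ ((1:ℝ)/3) = a 0 * (3 * Real.sqrt 3 / Real.sqrt 2 * |φ' 0|) ^ ((1:ℝ)/3) := by
      have hLval : L = a 0 ^3 * (3 * Real.sqrt 3 / Real.sqrt 2 * |φ' 0|) := by
        rw [hLdef, hsqrtCsq, hs32, hCabs]; ring
      rw [hLval, Real.mul_rpow (by positivity) (by positivity)]
      congr 1
      rw [← Real.rpow_natCast (a 0) 3, ← Real.rpow_mul ha0.le]
      norm_num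
    rw [← hval]
    refine Filter.Tendsto.congr' ?_ hcomp
    filter_upwards [hIooMem] with t ht
    have hTt : (0:ℝ) < TS - t := by linarith [ht.2]
    have hat : 0 ≤ a t := (hpos t ⟨ht.1.le, ht.2⟩).le
    rw [Real.div_rpow (by positivity) hTt.le]
    congr 1
    rw [← Real.rpow_natCast (a t) 3, ← Real.rpow_mul hat]
    norm_num
  -- limit 2
  have hs2 : (0:ℝ) < Real.sqrt 2 := Real.sqrt_pos.2 (by norm_num)
  have hs3 : (0:ℝ) < Real.sqrt 3 := Real.sqrt_pos.2 (by norm_num)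
  have h2m : Real.sqrt 2 * Real.sqrt 2 = 2 := Real.mul_self_sqrt (by norm_num)
  have h3m : Real.sqrt 3 * Real.sqrt 3 = 3 := Real.mul_self_sqrt (by norm_num)
  have hCL : C / L = Real.sign (φ' 0) * Real.sqrt 2 / (3 * Real.sqrt 3) := by
    rw [hLdef, hsqrtCsq, hs32]
    rcases lt_or_gt_of_ne hdφ0 with h | h
    · have hCneg : C < 0 := mul_neg_of_pos_of_neg (pow_pos ha0 3) h
      rw [abs_of_neg hCneg, Real.sign_of_neg h]
      rw [div_eq_div_iff
        (ne_of_gt (mul_pos (by norm_num : (0:ℝ) < 3)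
          (mul_pos (div_pos hs3 hs2) (neg_pos.2 hCneg))))
        (ne_of_gt (mul_pos (by norm_num : (0:ℝ) < 3) hs3))]
      field_simp
    · have hCpos : 0 < C := mul_pos (pow_pos ha0 3) h
      rw [abs_of_pos hCpos, Real.sign_of_pos h]
      rw [div_eq_div_iff
        (ne_of_gt (mul_pos (by norm_num : (0:ℝ) < 3)
          (mul_pos (div_pos hs3 hs2) hCpos)))
        (ne_of_gt (mul_pos (by norm_num : (0:ℝ) < 3) hs3))]
      field_simp
  have hlim2 : Tendsto (fun t => (TS - t) * φ' t) (𝓝[<] TS)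
      (𝓝 (Real.sign (φ' 0) * Real.sqrt 2 / (3 * Real.sqrt 3))) := by
    rw [← hCL]
    have h1 : Tendsto (fun t => C / (a t ^3 / (TS - t))) (𝓝[<] TS) (𝓝 (C / L)) :=
      tendsto_const_nhds.div hratio (ne_of_gt hLpos)
    refine Filter.Tendsto.congr' ?_ h1
    filter_upwards [hIooMem] with t ht
    have hTt : (0:ℝ) < TS - t := by linarith [ht.2]
    have hm : t ∈ Set.Ico (0:ℝ) TS := ⟨ht.1.le, ht.2⟩
    rw [hφ' t hm]
    have := hane t hm
    field_simp
  -- limit 3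
  have hlim3 : Tendsto (fun t => φ t / Real.log (TS - t)) (𝓝[<] TS)
      (𝓝 (-Real.sign (φ' 0) * Real.sqrt 2 / (3 * Real.sqrt 3))) := by
    have h := aux_log (c := 0) hTSpos (fun t ht => (hreg t ht).2.2.1) hlim2
    convert h using 2
    ring
  exact ⟨hlim1, hlim2, hlim3⟩
end

section
/- First integral of the FLRW equation: let k ≠ 0 be a real number and let c be a positive C² function on a real interval I solving c(t)·c̈(t) + 9k² = (2/3)·ċ(t)² on I, and suppose ċ(t)² ≠ (27/2)·k² for all t ∈ I. Then the function t ↦ c(t)·|ċ(t)² − (27/2)·k²|^{−3/4} is constant on I. -/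
open Filter Topology Set

/-- **First integral of the FLRW equation**: if `k ≠ 0` and `c` is a positive `C²` function
on a real interval `I` solving `c·c̈ + 9k² = (2/3)·ċ²` on `I`, with `ċ² ≠ (27/2)·k²` on `I`,
then `t ↦ c(t)·|ċ(t)² − (27/2)·k²|^{−3/4}` is constant on `I`. -/
theorem flrw_first_integral
    (k : ℝ) (hk : k ≠ 0)
    (I : Set ℝ) (hI : I.OrdConnected)
    (c c' c'' : ℝ → ℝ)
    (hpos : ∀ t ∈ I, 0 < c t)
    (hderiv : ∀ t ∈ I, HasDerivAt c (c' t) t ∧ HasDerivAt c' (c'' t) t)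
    (hC2 : ContinuousOn c'' I)
    (hode : ∀ t ∈ I, c t * c'' t + 9 * k ^ 2 = 2 / 3 * c' t ^ 2)
    (hne : ∀ t ∈ I, c' t ^ 2 ≠ 27 / 2 * k ^ 2) :
    ∀ t₁ ∈ I, ∀ t₂ ∈ I,
      c t₁ * |c' t₁ ^ 2 - 27 / 2 * k ^ 2| ^ (-(3 : ℝ) / 4) =
        c t₂ * |c' t₂ ^ 2 - 27 / 2 * k ^ 2| ^ (-(3 : ℝ) / 4) := by
  set p : ℝ := -(3 : ℝ) / 4 with hp
  set g : ℝ → ℝ := fun u => c' u ^ 2 - 27 / 2 * k ^ 2 with hg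
  set F : ℝ → ℝ := fun u => c u * |g u| ^ p with hF
  have hderiv0 : ∀ t ∈ I, HasDerivAt F 0 t := by
    intro t ht
    obtain ⟨hc, hc'⟩ := hderiv t ht
    have hgne : g t ≠ 0 := sub_ne_zero.mpr (hne t ht)
    have habs : 0 < |g t| := abs_pos.mpr hgne
    have hgd : HasDerivAt g (2 * c' t * c'' t) t := by
      have := (hc'.pow 2).sub_const (27 / 2 * k ^ 2)
      simpa [hg, mul_comm, mul_assoc, mul_left_comm] using this
    -- derivative of |g|
    obtain ⟨s, hs2, hsd⟩ :
        ∃ s : ℝ, s * g t = |g t| ∧ HasDerivAt (fun u => |g u|) (s * (2 * c' t * c'' t)) t := by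
      rcases hgne.lt_or_gt with h | h
      · refine ⟨-1, by rw [abs_of_neg h]; ring, ?_⟩
        have hev : (fun u => |g u|) =ᶠ[𝓝 t] fun u => -g u := by
          have : ∀ᶠ u in 𝓝 t, g u < 0 :=
            hgd.continuousAt.eventually_lt_const h
          filter_upwards [this] with u hu using abs_of_neg hu
        have := hgd.neg
        refine HasDerivAt.congr_of_eventuallyEq (by exact this.congr_deriv (by ring)) hev
      · refine ⟨1, by rw [abs_of_pos h]; ring, ?_⟩
        have hev : (fun u => |g u|) =ᶠ[𝓝 t] g := by
          have : ∀ᶠ u in 𝓝 t, 0 < g u :=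
            hgd.continuousAt.eventually_const_lt h
          filter_upwards [this] with u hu using abs_of_pos hu
        refine HasDerivAt.congr_of_eventuallyEq (hgd.congr_deriv (by ring)) hev
    have hrpow : HasDerivAt (fun u => |g u| ^ p)
        (s * (2 * c' t * c'' t) * p * |g t| ^ (p - 1)) t :=
      hsd.rpow_const (Or.inl habs.ne')
    have hprod : HasDerivAt F
        (c' t * |g t| ^ p + c t * (s * (2 * c' t * c'' t) * p * |g t| ^ (p - 1))) t :=
      hc.mul hrpow
    have hcc : c t * c'' t = 2 / 3 * g t := by
      have := hode t ht
      simp only [hg]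
      linarith
    have hkey : |g t| * |g t| ^ (p - 1) = |g t| ^ p := by
      nth_rewrite 1 [← Real.rpow_one (|g t|)]
      rw [← Real.rpow_add habs]
      norm_num
    have hz : c' t * |g t| ^ p + c t * (s * (2 * c' t * c'' t) * p * |g t| ^ (p - 1)) = 0 := by
      have e1 : c t * (s * (2 * c' t * c'' t) * p * |g t| ^ (p - 1))
          = s * g t * |g t| ^ (p - 1) * (2 * p * (2 / 3) * c' t) := by
        linear_combination (s * 2 * c' t * p * |g t| ^ (p - 1)) * hcc
      rw [e1, hs2, hkey, hp]
      ring
    rw [hz] at hprod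
    exact hprod
  intro t₁ ht₁ t₂ ht₂
  have hconv : Convex ℝ I := hI.convex
  have := hconv.norm_image_sub_le_of_norm_hasDerivWithin_le
    (f := F) (f' := fun _ => 0) (C := 0)
    (fun x hx => (hderiv0 x hx).hasDerivWithinAt)
    (fun x _ => by simp) ht₁ ht₂
  have : F t₂ = F t₁ := by
    rw [← sub_eq_zero]
    have h0 : ‖F t₂ - F t₁‖ ≤ 0 := by simpa using this
    simpa using le_antisymm h0 (norm_nonneg _)
  simpa [hF, hg] using this.symm
end

section
/- FLRW apparent-horizon asymptotics: lim_{t→T_S} (−1/ȧ(t))/(T_S−t)^{2/3} = 3/a_S, where a_S := a₀·((3√3/√2)·|φ̇₀|)^{1/3}. Equivalently, for the metric −dt² + a²(t)(dρ² + ρ²·dσ_{S²}) with area radius r(t,ρ) = a(t)·ρ and outgoing null derivative ∂_v r = (a(t)/2)(ȧ(t)ρ + 1), the comoving radius ρ_𝒜(t) = −1/ȧ(t) of the apparent horizon {∂_v r = 0} satisfies ρ_𝒜(t) ∼ (3/a_S)·(T_S−t)^{2/3} as t → T_S. -/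
open Filter Topology Set

/-- **FLRW apparent-horizon asymptotics**: for the FLRW reduction of the
Einstein-scalar-field equations on `[0,T_S)` (with `T_S < ∞` the big crunch time, `ȧ < 0`
on `[0,T_S)` and `a(t) → 0` as `t → T_S`), the comoving radius `ρ_𝒜(t) = −1/ȧ(t)` of the
apparent horizon `{∂_v r = 0}` (for the metric `−dt² + a²(t)(dρ² + ρ²dσ_{S²})` with area
radius `r = a(t)ρ` and `∂_v r = (a/2)(ȧρ + 1)`) satisfies
`ρ_𝒜(t)/(T_S−t)^{2/3} → 3/a_S` as `t → T_S⁻`, where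
`a_S := a₀·((3√3/√2)·|φ̇₀|)^{1/3}`. -/
theorem flrw_apparent_horizon_asymptotics
    (a a' a'' φ φ' φ'' : ℝ → ℝ) (TS : ℝ) (hTSpos : 0 < TS)
    (ha0 : 0 < a 0) (hda0 : a' 0 < 0) (hdφ0 : φ' 0 ≠ 0)
    (hreg : ∀ t ∈ Set.Ico (0 : ℝ) TS,
      HasDerivAt a (a' t) t ∧ HasDerivAt a' (a'' t) t ∧
      HasDerivAt φ (φ' t) t ∧ HasDerivAt φ' (φ'' t) t)
    (hpos : ∀ t ∈ Set.Ico (0 : ℝ) TS, 0 < a t)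
    (hda : ∀ t ∈ Set.Ico (0 : ℝ) TS, a' t < 0)
    (heq1 : ∀ t ∈ Set.Ico (0 : ℝ) TS, a'' t + 3 * φ' t ^ 2 * a t = 0)
    (heq2 : ∀ t ∈ Set.Ico (0 : ℝ) TS, a t ^ 3 * φ' t = a 0 ^ 3 * φ' 0)
    (hcrunch : Filter.Tendsto a (nhdsWithin TS (Set.Iio TS)) (nhds 0)) :
    Filter.Tendsto (fun t => (-1 / a' t) / (TS - t) ^ ((2 : ℝ) / 3))
      (nhdsWithin TS (Set.Iio TS))
      (nhds (3 / (a 0 * (3 * Real.sqrt 3 / Real.sqrt 2 * |φ' 0|) ^ ((1 : ℝ) / 3)))) := by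
  set C : ℝ := a 0 ^ 3 * φ' 0 with hCdef
  have hC : C ≠ 0 := mul_ne_zero (pow_ne_zero _ ha0.ne') hdφ0
  -- φ' in terms of a
  have hφ' : ∀ t ∈ Set.Ico (0 : ℝ) TS, φ' t = C / a t ^ 3 := by
    intro t ht
    have hat : a t ≠ 0 := (hpos t ht).ne'
    rw [eq_div_iff (pow_ne_zero 3 hat)]
    linarith [heq2 t ht]
  -- a'' in terms of a
  have ha'' : ∀ t ∈ Set.Ico (0 : ℝ) TS, a'' t = -3 * C ^ 2 / a t ^ 5 := by
    intro t ht
    have h1 := heq1 t ht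
    have h2 := hφ' t ht
    have hat : a t ≠ 0 := (hpos t ht).ne'
    rw [h2] at h1
    field_simp at h1
    rw [eq_div_iff (pow_ne_zero 5 hat)]
    apply mul_right_cancel₀ hat
    linear_combination (a t) * h1
  -- energy identity
  set E : ℝ := a' 0 ^ 2 - 3 * C ^ 2 / 2 * (a 0 ^ 4)⁻¹ with hEdef
  set F : ℝ → ℝ := fun t => a' t ^ 2 - 3 * C ^ 2 / 2 * (a t ^ 4)⁻¹ with hFdef
  have hFderiv : ∀ x ∈ Set.Ico (0 : ℝ) TS, HasDerivAt F 0 x := by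
    intro x hx
    obtain ⟨hA, hA', _, _⟩ := hreg x hx
    have hax : a x ≠ 0 := (hpos x hx).ne'
    have h1 : HasDerivAt (fun t => a' t ^ 2) (2 * a' x ^ 1 * a'' x) x := by
      simpa using hA'.fun_pow 2
    have h2 : HasDerivAt (fun t => a t ^ 4) (4 * a x ^ 3 * a' x) x := by
      simpa using hA.fun_pow 4
    have h3 : HasDerivAt (fun t => (a t ^ 4)⁻¹)
        (-(4 * a x ^ 3 * a' x) / (a x ^ 4) ^ 2) x := h2.inv (pow_ne_zero _ hax)
    have h4 := h1.sub ((h3.const_mul (3 * C ^ 2 / 2)))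
    have hval : 2 * a' x ^ 1 * a'' x - 3 * C ^ 2 / 2 *
        (-(4 * a x ^ 3 * a' x) / (a x ^ 4) ^ 2) = 0 := by
      rw [ha'' x hx]
      field_simp
      ring
    rw [hval] at h4
    exact h4
  have hE : ∀ t ∈ Set.Ico (0 : ℝ) TS, a' t ^ 2 = E + 3 * C ^ 2 / 2 * (a t ^ 4)⁻¹ := by
    intro t ht
    have hsub : Set.Icc (0 : ℝ) t ⊆ Set.Ico (0 : ℝ) TS := fun y hy =>
      ⟨hy.1, lt_of_le_of_lt hy.2 ht.2⟩
    have hcont : ContinuousOn F (Set.Icc 0 t) := fun y hy =>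
      ((hFderiv y (hsub hy)).continuousAt).continuousWithinAt
    have hder : ∀ y ∈ Set.Ico (0 : ℝ) t, HasDerivWithinAt F 0 (Set.Ici y) y := fun y hy =>
      (hFderiv y (hsub ⟨hy.1, hy.2.le⟩)).hasDerivWithinAt
    have := constant_of_has_deriv_right_zero hcont hder t ⟨ht.1, le_refl t⟩
    have hF0 : F 0 = E := rfl
    have : F t = E := this.trans hF0
    simp only [hFdef] at this
    linarith
  -- eventually in the interval
  have hmem : ∀ᶠ t in 𝓝[<] TS, t ∈ Set.Ioo (0 : ℝ) TS :=
    Ioo_mem_nhdsLT_of_mem ⟨hTSpos, le_refl TS⟩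
  set L : ℝ := Real.sqrt (3 * C ^ 2 / 2) with hLdef
  have hLpos : 0 < L := Real.sqrt_pos.mpr (by positivity)
  -- a'² a⁴ → 3C²/2
  have h1 : Tendsto (fun t => a' t ^ 2 * a t ^ 4) (𝓝[<] TS) (𝓝 (3 * C ^ 2 / 2)) := by
    have heventu : ∀ᶠ t in 𝓝[<] TS,
        E * a t ^ 4 + 3 * C ^ 2 / 2 = a' t ^ 2 * a t ^ 4 := by
      filter_upwards [hmem] with t ht
      have hat : a t ≠ 0 := (hpos t ⟨ht.1.le, ht.2⟩).ne'
      rw [hE t ⟨ht.1.le, ht.2⟩]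
      field_simp
    have hbase : Tendsto (fun t => E * a t ^ 4 + 3 * C ^ 2 / 2) (𝓝[<] TS)
        (𝓝 (E * 0 ^ 4 + 3 * C ^ 2 / 2)) :=
      (((hcrunch.pow 4).const_mul E).add tendsto_const_nhds)
    simpa using hbase.congr' heventu
  -- -a' a² → L
  have h2 : Tendsto (fun t => -a' t * a t ^ 2) (𝓝[<] TS) (𝓝 L) := by
    have hsq : Tendsto (fun t => Real.sqrt (a' t ^ 2 * a t ^ 4)) (𝓝[<] TS) (𝓝 L) :=
      h1.sqrt
    refine hsq.congr' ?_
    filter_upwards [hmem] with t ht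
    have hat := hpos t ⟨ht.1.le, ht.2⟩
    have hdat := hda t ⟨ht.1.le, ht.2⟩
    have : a' t ^ 2 * a t ^ 4 = (-a' t * a t ^ 2) ^ 2 := by ring
    rw [this, Real.sqrt_sq (by nlinarith)]
  -- a³ / (TS - t) → 3L via L'Hôpital
  have h3 : Tendsto (fun t => a t ^ 3 / (TS - t)) (𝓝[<] TS) (𝓝 (3 * L)) := by
    apply HasDerivAt.lhopital_zero_nhdsLT
      (f' := fun t => 3 * a t ^ 2 * a' t) (g' := fun _ => (-1 : ℝ))
    · filter_upwards [hmem] with t ht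
      have hA := (hreg t ⟨ht.1.le, ht.2⟩).1
      simpa using hA.fun_pow 3
    · filter_upwards [hmem] with t ht
      simpa using (hasDerivAt_id t).const_sub TS
    · filter_upwards with t; norm_num
    · simpa using hcrunch.pow 3
    · have : Tendsto (fun t : ℝ => TS - t) (𝓝 TS) (𝓝 (TS - TS)) :=
        tendsto_const_nhds.sub tendsto_id
      simpa using this.mono_left nhdsWithin_le_nhds
    · have : Tendsto (fun t => 3 * (-a' t * a t ^ 2)) (𝓝[<] TS) (𝓝 (3 * L)) :=
        h2.const_mul 3
      refine this.congr fun t => ?_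
      rw [div_neg, div_one]
      ring
  -- final limit
  set K : ℝ := 3 * Real.sqrt 3 / Real.sqrt 2 * |φ' 0| with hKdef
  have hKpos : 0 < K := by
    have h3p : (0:ℝ) < Real.sqrt 3 := Real.sqrt_pos.mpr (by norm_num)
    have h2p : (0:ℝ) < Real.sqrt 2 := Real.sqrt_pos.mpr (by norm_num)
    have := abs_pos.mpr hdφ0
    positivity
  set S : ℝ := a 0 * K ^ ((1 : ℝ) / 3) with hSdef
  have hSpos : 0 < S := mul_pos ha0 (Real.rpow_pos_of_pos hKpos _)
  -- S³ = 3L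
  have hS3 : S ^ 3 = 3 * L := by
    have hK13 : (K ^ ((1:ℝ)/3)) ^ 3 = K := by
      rw [← Real.rpow_natCast (K ^ ((1:ℝ)/3)) 3, ← Real.rpow_mul hKpos.le]
      norm_num
    have hLval : L = Real.sqrt 3 / Real.sqrt 2 * (a 0 ^ 3 * |φ' 0|) := by
      rw [hLdef, show 3 * C ^ 2 / 2 = 3 / 2 * C ^ 2 by ring,
        Real.sqrt_mul (by norm_num : (0:ℝ) ≤ 3 / 2), Real.sqrt_sq_eq_abs,
        Real.sqrt_div (by norm_num : (0:ℝ) ≤ 3), hCdef, abs_mul, abs_pow,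
        abs_of_pos ha0]
    calc S ^ 3 = a 0 ^ 3 * (K ^ ((1:ℝ)/3)) ^ 3 := by ring
      _ = a 0 ^ 3 * K := by rw [hK13]
      _ = 3 * L := by rw [hLval, hKdef]; ring
  have hkey : Tendsto (fun t => (a t ^ 3 / (TS - t)) ^ ((2 : ℝ) / 3) * (-a' t * a t ^ 2)⁻¹)
      (𝓝[<] TS) (𝓝 ((3 * L) ^ ((2 : ℝ) / 3) * L⁻¹)) := by
    have hrp : Tendsto (fun t => (a t ^ 3 / (TS - t)) ^ ((2 : ℝ) / 3)) (𝓝[<] TS)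
        (𝓝 ((3 * L) ^ ((2 : ℝ) / 3))) :=
      ((Real.continuousAt_rpow_const _ _ (Or.inl (by positivity))).tendsto).comp h3
    exact hrp.mul (h2.inv₀ hLpos.ne')
  have heqfun : ∀ᶠ t in 𝓝[<] TS,
      (a t ^ 3 / (TS - t)) ^ ((2 : ℝ) / 3) * (-a' t * a t ^ 2)⁻¹
        = (-1 / a' t) / (TS - t) ^ ((2 : ℝ) / 3) := by
    filter_upwards [hmem] with t ht
    have hat := hpos t ⟨ht.1.le, ht.2⟩
    have hdat := hda t ⟨ht.1.le, ht.2⟩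
    have hTt : 0 < TS - t := sub_pos.mpr ht.2
    have ha23 : (a t ^ 3 : ℝ) ^ ((2:ℝ)/3) = a t ^ 2 := by
      rw [← Real.rpow_natCast (a t) 3, ← Real.rpow_mul hat.le,
        show ((3:ℕ):ℝ) * (2/3) = ((2:ℕ):ℝ) by norm_num, Real.rpow_natCast]
    rw [Real.div_rpow (by positivity) hTt.le, ha23]
    have hTt23 : (0:ℝ) < (TS - t) ^ ((2:ℝ)/3) := Real.rpow_pos_of_pos hTt _
    have hane : a t ≠ 0 := hat.ne'
    have ha'ne : a' t ≠ 0 := hdat.ne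
    have hTtne : (TS - t) ^ ((2:ℝ)/3) ≠ 0 := hTt23.ne'
    field_simp
  have hval : (3 * L) ^ ((2 : ℝ) / 3) * L⁻¹ = 3 / S := by
    have hS23 : (S ^ 3 : ℝ) ^ ((2:ℝ)/3) = S ^ 2 := by
      rw [← Real.rpow_natCast S 3, ← Real.rpow_mul hSpos.le,
        show ((3:ℕ):ℝ) * (2/3) = ((2:ℕ):ℝ) by norm_num, Real.rpow_natCast]
    rw [← hS3, hS23]
    have : L = S ^ 3 / 3 := by rw [hS3]; ring
    rw [this]
    field_simp
  rw [show (3 : ℝ) / (a 0 * (3 * Real.sqrt 3 / Real.sqrt 2 * |φ' 0|) ^ ((1 : ℝ) / 3))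
      = 3 / S from rfl, ← hval]
  exact hkey.congr' heqfun
end

section
/- Persistence of the regular region for the spacelike constraints: the solution ϖ of the spacelike constraint system exists on all of [ρ₁,ρ₂), and for every ρ ∈ [ρ₁,ρ₂): r(ρ) > 2ϖ(ρ), dϖ/dρ(ρ) ≥ 0, and ϖ(ρ) ≥ M₁ > 0. -/
open Filter Topology Set

/-- **Persistence of the regular region for the spacelike constraints**: for the spherically
symmetric spacelike constraint system (with data `λ > 0` on `[ρ₁,ρ₂)`, `ν < 0` on `[ρ₁,ρ₂]`,
matter terms `θ, ξ`, and initial data `r(ρ₁) = r₁ > 2M₁ = 2ϖ(ρ₁) > 0`), the solution `ϖ`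
exists on all of `[ρ₁,ρ₂)`, and for every `ρ ∈ [ρ₁,ρ₂)`: `r(ρ) > 2ϖ(ρ)`, `dϖ/dρ(ρ) ≥ 0`
and `ϖ(ρ) ≥ M₁ > 0`. -/
theorem spacelike_constraints_stay_regular
    (ρ₁ ρ₂ : ℝ) (hρ : ρ₁ < ρ₂)
    (lam ν θ ξ : ℝ → ℝ)
    (hlamc : ContinuousOn lam (Set.Icc ρ₁ ρ₂)) (hνc : ContinuousOn ν (Set.Icc ρ₁ ρ₂))
    (hθc : ContinuousOn θ (Set.Icc ρ₁ ρ₂)) (hξc : ContinuousOn ξ (Set.Icc ρ₁ ρ₂))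
    (hlam : ∀ ρ ∈ Set.Ico ρ₁ ρ₂, 0 < lam ρ)
    (hν : ∀ ρ ∈ Set.Icc ρ₁ ρ₂, ν ρ < 0)
    (r₁ M₁ : ℝ) (hM₁ : 0 < M₁) (hr₁ : 2 * M₁ < r₁) :
    ∃ r ϖ : ℝ → ℝ,
      r ρ₁ = r₁ ∧ ϖ ρ₁ = M₁ ∧
      (∀ ρ ∈ Set.Ico ρ₁ ρ₂, HasDerivAt r (lam ρ - ν ρ) ρ) ∧
      (∀ ρ ∈ Set.Ico ρ₁ ρ₂, HasDerivAt ϖ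
        ((r ρ / 2 - ϖ ρ) * (θ ρ ^ 2 / (r ρ * lam ρ) + ξ ρ ^ 2 / (r ρ * (-ν ρ)))) ρ) ∧
      ∀ ρ ∈ Set.Ico ρ₁ ρ₂,
        2 * ϖ ρ < r ρ ∧
        0 ≤ (r ρ / 2 - ϖ ρ) * (θ ρ ^ 2 / (r ρ * lam ρ) + ξ ρ ^ 2 / (r ρ * (-ν ρ))) ∧
        M₁ ≤ ϖ ρ := by
  have hρ₂mem : ρ₂ ∈ Set.Icc ρ₁ ρ₂ := ⟨hρ.le, le_rfl⟩
  -- clamp to Icc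
  set c : ℝ → ℝ := fun x => max ρ₁ (min x ρ₂) with hcdef
  have hccont : Continuous c := continuous_const.max (continuous_id.min continuous_const)
  have hcmem : ∀ x, c x ∈ Set.Icc ρ₁ ρ₂ := fun x =>
    ⟨le_max_left _ _, max_le hρ.le (min_le_right _ _)⟩
  have hceq : ∀ x ∈ Set.Icc ρ₁ ρ₂, c x = x := fun x hx => by
    show max ρ₁ (min x ρ₂) = x
    rw [min_eq_left hx.2, max_eq_right hx.1]
  -- extended data
  set lam' : ℝ → ℝ := fun x => lam (c x) with hlam'def
  set ν' : ℝ → ℝ := fun x => ν (c x) with hν'def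
  set θ' : ℝ → ℝ := fun x => θ (c x) with hθ'def
  set ξ' : ℝ → ℝ := fun x => ξ (c x) with hξ'def
  have hlam'cont : Continuous lam' := hlamc.comp_continuous hccont hcmem
  have hν'cont : Continuous ν' := hνc.comp_continuous hccont hcmem
  have hθ'cont : Continuous θ' := hθc.comp_continuous hccont hcmem
  have hξ'cont : Continuous ξ' := hξc.comp_continuous hccont hcmem
  have hν'neg : ∀ x, ν' x < 0 := fun x => hν _ (hcmem x)
  have hlamρ₂ : 0 ≤ lam ρ₂ := by
    have hne : (𝓝[Set.Ico ρ₁ ρ₂] ρ₂).NeBot := by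
      apply mem_closure_iff_nhdsWithin_neBot.1
      rw [closure_Ico hρ.ne]
      exact hρ₂mem
    have htd : Tendsto lam (𝓝[Set.Ico ρ₁ ρ₂] ρ₂) (𝓝 (lam ρ₂)) :=
      (hlamc ρ₂ hρ₂mem).mono_left (nhdsWithin_mono _ Set.Ico_subset_Icc_self)
    exact ge_of_tendsto htd (eventually_nhdsWithin_of_forall fun x hx => (hlam x hx).le)
  have hlam'nonneg : ∀ x, 0 ≤ lam' x := fun x => by
    rcases lt_or_eq_of_le (hcmem x).2 with h | h
    · exact (hlam _ ⟨(hcmem x).1, h⟩).le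
    · show 0 ≤ lam (c x); rw [h]; exact hlamρ₂
  have hlam'pos : ∀ y ∈ Set.Ico ρ₁ ρ₂, 0 < lam' y := fun y hy => by
    show 0 < lam (c y)
    rw [hceq y (Set.Ico_subset_Icc_self hy)]
    exact hlam y hy
  -- the radius r
  set r : ℝ → ℝ := fun x => r₁ + ∫ t in ρ₁..x, (lam' t - ν' t) with hrdef
  have hlν : Continuous (fun t => lam' t - ν' t) := hlam'cont.sub hν'cont
  have hrderiv : ∀ b : ℝ, HasDerivAt r (lam' b - ν' b) b := fun b =>
    (intervalIntegral.integral_hasDerivAt_right (hlν.intervalIntegrable ρ₁ b)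
      (hlν.stronglyMeasurableAtFilter _ _) hlν.continuousAt).const_add r₁
  have hrρ₁ : r ρ₁ = r₁ := by simp [hrdef]
  have hrcont : Continuous r := continuous_iff_continuousAt.2 fun x => (hrderiv x).continuousAt
  have hr₁pos : (0:ℝ) < r₁ := by linarith
  have hrge : ∀ x, ρ₁ ≤ x → r₁ ≤ r x := fun x hx => by
    have h0 : 0 ≤ ∫ t in ρ₁..x, (lam' t - ν' t) :=
      intervalIntegral.integral_nonneg hx fun t _ => by
        have h1 := hlam'nonneg t; have h2 := hν'neg t; linarith
    show r₁ ≤ r₁ + _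
    linarith
  have hrpos : ∀ x, ρ₁ ≤ x → 0 < r x := fun x hx => lt_of_lt_of_le hr₁pos (hrge x hx)
  -- the coefficient g (lower-clamped so it is continuous on Iio ρ₂)
  set c2 : ℝ → ℝ := fun x => max ρ₁ x with hc2def
  have hc2cont : Continuous c2 := continuous_const.max continuous_id
  have hc2ge : ∀ x, ρ₁ ≤ c2 x := fun x => le_max_left _ _
  have hc2mem : ∀ x ∈ Set.Iio ρ₂, c2 x ∈ Set.Ico ρ₁ ρ₂ := fun x hx =>
    ⟨le_max_left _ _, max_lt hρ hx⟩
  have hc2eq : ∀ x, ρ₁ ≤ x → c2 x = x := fun x hx => max_eq_right hx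
  set g : ℝ → ℝ := fun x =>
    θ' (c2 x) ^ 2 / (r (c2 x) * lam' (c2 x)) + ξ' (c2 x) ^ 2 / (r (c2 x) * (-ν' (c2 x)))
    with hgdef
  have hgcont : ContinuousOn g (Set.Iio ρ₂) := by
    apply ContinuousOn.add
    · apply ContinuousOn.div
      · exact ((hθ'cont.comp hc2cont).pow 2).continuousOn
      · exact ((hrcont.comp hc2cont).mul (hlam'cont.comp hc2cont)).continuousOn
      · intro x hx
        exact (mul_pos (hrpos _ (hc2ge x)) (hlam'pos _ (hc2mem x hx))).ne'
    · apply ContinuousOn.div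
      · exact ((hξ'cont.comp hc2cont).pow 2).continuousOn
      · exact ((hrcont.comp hc2cont).mul (hν'cont.comp hc2cont).neg).continuousOn
      · intro x hx
        exact (mul_pos (hrpos _ (hc2ge x)) (neg_pos.2 (hν'neg (c2 x)))).ne'
  have hgnonneg : ∀ x, 0 ≤ g x := fun x => by
    have h1 := (hrpos _ (hc2ge x)).le
    have h2 := hlam'nonneg (c2 x)
    have h3 := (hν'neg (c2 x)).le
    show 0 ≤ _ + _
    refine add_nonneg (div_nonneg (sq_nonneg _) (mul_nonneg h1 h2))
      (div_nonneg (sq_nonneg _) (mul_nonneg h1 (by linarith)))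
  have hgeq : ∀ x ∈ Set.Ico ρ₁ ρ₂,
      g x = θ x ^ 2 / (r x * lam x) + ξ x ^ 2 / (r x * (-ν x)) := by
    intro x hx
    have h2 : c2 x = x := hc2eq x hx.1
    have h3 : c x = x := hceq x (Set.Ico_subset_Icc_self hx)
    show θ (c (c2 x)) ^ 2 / (r (c2 x) * lam (c (c2 x)))
        + ξ (c (c2 x)) ^ 2 / (r (c2 x) * (-ν (c (c2 x)))) = _
    rw [h2, h3]
  -- primitives
  have hsubIio : ∀ b ∈ Set.Iio ρ₂, Set.uIcc ρ₁ b ⊆ Set.Iio ρ₂ := fun b hb =>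
    Set.ordConnected_Iio.uIcc_subset (Set.mem_Iio.2 hρ) hb
  set G : ℝ → ℝ := fun x => ∫ t in ρ₁..x, g t with hGdef
  have hG : ∀ b ∈ Set.Iio ρ₂, HasDerivAt G (g b) b := fun b hb =>
    intervalIntegral.integral_hasDerivAt_right
      ((hgcont.mono (hsubIio b hb)).intervalIntegrable)
      (hgcont.stronglyMeasurableAtFilter isOpen_Iio b hb)
      (hgcont.continuousAt (Iio_mem_nhds hb))
  have hGcont : ContinuousOn G (Set.Iio ρ₂) := fun x hx =>
    ((hG x hx).continuousAt).continuousWithinAt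
  set f : ℝ → ℝ := fun t => Real.exp (G t) * (r t / 2) * g t with hfdef
  have hfcont : ContinuousOn f (Set.Iio ρ₂) :=
    ((Real.continuous_exp.comp_continuousOn hGcont).mul
      ((hrcont.continuousOn).div_const 2)).mul hgcont
  set F : ℝ → ℝ := fun x => ∫ t in ρ₁..x, f t with hFdef
  have hF : ∀ b ∈ Set.Iio ρ₂, HasDerivAt F (f b) b := fun b hb =>
    intervalIntegral.integral_hasDerivAt_right
      ((hfcont.mono (hsubIio b hb)).intervalIntegrable)
      (hfcont.stronglyMeasurableAtFilter isOpen_Iio b hb)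
      (hfcont.continuousAt (Iio_mem_nhds hb))
  have hGρ₁ : G ρ₁ = 0 := by simp [hGdef]
  have hFρ₁ : F ρ₁ = 0 := by simp [hFdef]
  -- the renormalized Hawking mass ϖ
  set ϖ : ℝ → ℝ := fun x => Real.exp (-(G x)) * (M₁ + F x) with hϖdef
  have hϖρ₁ : ϖ ρ₁ = M₁ := by simp [hϖdef, hGρ₁, hFρ₁]
  have hϖd : ∀ b ∈ Set.Iio ρ₂, HasDerivAt ϖ ((r b / 2 - ϖ b) * g b) b := by
    intro b hb
    have h1 : HasDerivAt (fun x => Real.exp (-(G x))) (Real.exp (-(G b)) * (-(g b))) b :=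
      ((hG b hb).neg).exp
    have h2 : HasDerivAt (fun x => M₁ + F x) (f b) b := (hF b hb).const_add M₁
    have h3 := h1.fun_mul h2
    refine h3.congr_deriv ?_
    have he : Real.exp (-(G b)) * Real.exp (G b) = 1 := by
      rw [← Real.exp_add]; simp
    simp only [hϖdef, hfdef]
    linear_combination ((r b / 2) * g b) * he
  -- the auxiliary strictly increasing quantity ψ = e^G r/2 - (M₁ + F)
  set ψ : ℝ → ℝ := fun x => Real.exp (G x) * (r x / 2) - (M₁ + F x) with hψdef
  have hψρ₁ : ψ ρ₁ = r₁ / 2 - M₁ := by simp [hψdef, hGρ₁, hFρ₁, hrρ₁]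
  have hψd : ∀ b ∈ Set.Iio ρ₂,
      HasDerivAt ψ (Real.exp (G b) * ((lam' b - ν' b) / 2)) b := by
    intro b hb
    have h1 : HasDerivAt (fun x => Real.exp (G x)) (Real.exp (G b) * g b) b := (hG b hb).exp
    have h2 : HasDerivAt (fun x => r x / 2) ((lam' b - ν' b) / 2) b := (hrderiv b).div_const 2
    have h3 := (h1.fun_mul h2).fun_sub ((hF b hb).const_add M₁)
    refine h3.congr_deriv ?_
    simp only [hfdef]
    ring
  have hψmono : ∀ ρ ∈ Set.Ico ρ₁ ρ₂, ψ ρ₁ ≤ ψ ρ := by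
    intro ρ hρ'
    have hsubset : Set.Icc ρ₁ ρ ⊆ Set.Iio ρ₂ := fun x hx => lt_of_le_of_lt hx.2 hρ'.2
    have hm := monotoneOn_of_deriv_nonneg (convex_Icc ρ₁ ρ)
      (fun x hx => ((hψd x (hsubset hx)).continuousAt).continuousWithinAt)
      (fun x hx =>
        ((hψd x (hsubset (interior_subset hx))).differentiableAt).differentiableWithinAt)
      (fun x hx => by
        rw [(hψd x (hsubset (interior_subset hx))).deriv]
        have h1 := hlam'nonneg x
        have h2 := hν'neg x
        exact mul_nonneg (Real.exp_pos _).le (by linarith))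
    exact hm (Set.left_mem_Icc.2 hρ'.1) (Set.right_mem_Icc.2 hρ'.1) hρ'.1
  clear_value c lam' ν' θ' ξ' r c2 g G f F ϖ ψ
  -- regularity : 2ϖ < r on [ρ₁, ρ₂)
  have hreg : ∀ ρ ∈ Set.Ico ρ₁ ρ₂, 2 * ϖ ρ < r ρ := by
    intro ρ hρ'
    have hψpos : 0 < ψ ρ := lt_of_lt_of_le (by rw [hψρ₁]; linarith) (hψmono ρ hρ')
    have he : Real.exp (-(G ρ)) * Real.exp (G ρ) = 1 := by
      rw [← Real.exp_add]; simp
    have key : r ρ / 2 - ϖ ρ = Real.exp (-(G ρ)) * ψ ρ := by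
      simp only [hψdef, hϖdef]
      linear_combination (-(r ρ / 2)) * he
    have hpos := mul_pos (Real.exp_pos (-(G ρ))) hψpos
    linarith [key, hpos]
  -- monotonicity of ϖ : M₁ ≤ ϖ on [ρ₁, ρ₂)
  have hϖmono : ∀ ρ ∈ Set.Ico ρ₁ ρ₂, M₁ ≤ ϖ ρ := by
    intro ρ hρ'
    have hsubset : Set.Icc ρ₁ ρ ⊆ Set.Ico ρ₁ ρ₂ := fun x hx =>
      ⟨hx.1, lt_of_le_of_lt hx.2 hρ'.2⟩
    have hm := monotoneOn_of_deriv_nonneg (convex_Icc ρ₁ ρ)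
      (fun x hx => ((hϖd x (hsubset hx).2).continuousAt).continuousWithinAt)
      (fun x hx =>
        ((hϖd x (hsubset (interior_subset hx)).2).differentiableAt).differentiableWithinAt)
      (fun x hx => by
        have hx' := hsubset (interior_subset hx)
        rw [(hϖd x hx'.2).deriv]
        have h1 := hreg x hx'
        exact mul_nonneg (by linarith) (hgnonneg x))
    have := hm (Set.left_mem_Icc.2 hρ'.1) (Set.right_mem_Icc.2 hρ'.1) hρ'.1
    rwa [hϖρ₁] at this
  -- assemble
  refine ⟨r, ϖ, hrρ₁, hϖρ₁, ?_, ?_, ?_⟩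
  · intro ρ hρ'
    have h := hrderiv ρ
    have h1 : lam' ρ = lam ρ := by
      simp only [hlam'def]; rw [hceq ρ (Set.Ico_subset_Icc_self hρ')]
    have h2 : ν' ρ = ν ρ := by
      simp only [hν'def]; rw [hceq ρ (Set.Ico_subset_Icc_self hρ')]
    rwa [h1, h2] at h
  · intro ρ hρ'
    have h := hϖd ρ hρ'.2
    rwa [hgeq ρ hρ'] at h
  · intro ρ hρ'
    refine ⟨hreg ρ hρ', ?_, hϖmono ρ hρ'⟩
    rw [← hgeq ρ hρ']
    exact mul_nonneg (by linarith [hreg ρ hρ']) (hgnonneg ρ)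
end

section
/- Continuous lapse at the marginally trapped endpoint: assume in addition that λ extends continuously to ρ₂ with λ(ρ₂) = 0 and lim_{ρ→ρ₂} λ(ρ)/(ρ₂−ρ) = ℒ₁ > 0, and set M₂ := r(ρ₂)/2, θ₂ := θ(ρ₂), N₀ := −ν(ρ₂) > 0, and α := θ₂²/(2M₂ℒ₁). If α > 1, then lim_{ρ→ρ₂} (1 − 2ϖ(ρ)/r(ρ))/(ρ₂−ρ) = N₀/(2M₂(α−1)); in particular ϖ(ρ) → M₂ as ρ → ρ₂, and the lapse Ω² := (−λν)/(1 − 2ϖ/r) extends continuously to ρ₂ with Ω²(ρ₂) = 2M₂ℒ₁(α−1) = θ₂² − 2M₂ℒ₁. -/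
open Filter Topology Set

lemma key_nonneg (a b : ℝ) (hab : a ≤ b) (U : Set ℝ) (hU : IsOpen U)
    (hsub : Set.Icc a b ⊆ U) (H w w' : ℝ → ℝ)
    (hH : ContinuousOn H U)
    (hw : ∀ x ∈ Set.Icc a b, HasDerivAt w (w' x) x)
    (hineq : ∀ x ∈ Set.Icc a b, 0 ≤ w' x + H x * w x)
    (h0 : 0 ≤ w a) : 0 ≤ w b := by
  set P : ℝ → ℝ := fun x => ∫ t in a..x, H t with hPdef
  have hHc : ∀ x ∈ Set.Icc a b, ContinuousAt H x := fun x hx =>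
    hH.continuousAt (hU.mem_nhds (hsub hx))
  have hint : ∀ x ∈ Set.Icc a b, IntervalIntegrable H MeasureTheory.volume a x := by
    intro x hx
    apply ContinuousOn.intervalIntegrable
    apply hH.mono
    refine subset_trans ?_ hsub
    rw [Set.uIcc_of_le hx.1]
    exact Set.Icc_subset_Icc le_rfl hx.2
  have hPd : ∀ x ∈ Set.Icc a b, HasDerivAt P (H x) x := by
    intro x hx
    exact intervalIntegral.integral_hasDerivAt_right (hint x hx)
      (ContinuousOn.stronglyMeasurableAtFilter hU hH x (hsub hx)) (hHc x hx)
  set F : ℝ → ℝ := fun x => w x * Real.exp (P x) with hFdef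
  have hFd : ∀ x ∈ Set.Icc a b, HasDerivAt F ((w' x + H x * w x) * Real.exp (P x)) x := by
    intro x hx
    have := (hw x hx).mul ((hPd x hx).exp)
    refine this.congr_deriv ?_
    ring
  have hFc : ContinuousOn F (Set.Icc a b) := fun x hx =>
    (hFd x hx).continuousAt.continuousWithinAt
  have hmono : MonotoneOn F (Set.Icc a b) := by
    apply monotoneOn_of_deriv_nonneg (convex_Icc a b) hFc
    · intro x hx
      rw [interior_Icc] at hx
      exact ((hFd x (Set.Ioo_subset_Icc_self hx)).differentiableAt).differentiableWithinAt
    · intro x hx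
      rw [interior_Icc] at hx
      have hx' := Set.Ioo_subset_Icc_self hx
      rw [(hFd x hx').deriv]
      exact mul_nonneg (hineq x hx') (Real.exp_pos _).le
  have hab' : F a ≤ F b := hmono ⟨le_rfl, hab⟩ ⟨hab, le_rfl⟩ hab
  have hFa : 0 ≤ F a := mul_nonneg h0 (Real.exp_pos _).le
  have : 0 ≤ w b * Real.exp (P b) := le_trans hFa hab'
  exact (mul_nonneg_iff_of_pos_right (Real.exp_pos _)).mp this

set_option maxHeartbeats 2000000 in
/-- **Continuous lapse at the marginally trapped endpoint**: for the spacelike constraint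
system, if `λ` extends continuously to `ρ₂` with `λ(ρ₂) = 0` and
`lim_{ρ→ρ₂} λ(ρ)/(ρ₂−ρ) = ℒ₁ > 0`, and, setting `M₂ := r(ρ₂)/2`, `θ₂ := θ(ρ₂)`,
`N₀ := −ν(ρ₂) > 0`, `α := θ₂²/(2M₂ℒ₁)`, if `α > 1`, then
`lim_{ρ→ρ₂} (1 − 2ϖ(ρ)/r(ρ))/(ρ₂−ρ) = N₀/(2M₂(α−1))`; in particular `ϖ(ρ) → M₂` and
the lapse `Ω² = (−λν)/(1 − 2ϖ/r)` extends continuously with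
`Ω²(ρ₂) = 2M₂ℒ₁(α−1) = θ₂² − 2M₂ℒ₁`. -/
theorem spacelike_lapse_continuous_extension
    (ρ₁ ρ₂ : ℝ) (hρ : ρ₁ < ρ₂)
    (lam ν θ ξ : ℝ → ℝ)
    (hlamc : ContinuousOn lam (Set.Icc ρ₁ ρ₂)) (hνc : ContinuousOn ν (Set.Icc ρ₁ ρ₂))
    (hθc : ContinuousOn θ (Set.Icc ρ₁ ρ₂)) (hξc : ContinuousOn ξ (Set.Icc ρ₁ ρ₂))
    (hlam : ∀ ρ ∈ Set.Ico ρ₁ ρ₂, 0 < lam ρ)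
    (hν : ∀ ρ ∈ Set.Icc ρ₁ ρ₂, ν ρ < 0)
    (hlamend : lam ρ₂ = 0)
    (L₁ : ℝ) (hL₁ : 0 < L₁)
    (hlamlim : Filter.Tendsto (fun ρ => lam ρ / (ρ₂ - ρ))
      (nhdsWithin ρ₂ (Set.Iio ρ₂)) (nhds L₁))
    (r₁ M₁ : ℝ) (hM₁ : 0 < M₁) (hr₁ : 2 * M₁ < r₁)
    (r ϖ : ℝ → ℝ)
    (hr0 : r ρ₁ = r₁) (hϖ0 : ϖ ρ₁ = M₁)
    (hr : ∀ ρ ∈ Set.Icc ρ₁ ρ₂, HasDerivAt r (lam ρ - ν ρ) ρ)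
    (hϖ : ∀ ρ ∈ Set.Ico ρ₁ ρ₂, HasDerivAt ϖ
      ((r ρ / 2 - ϖ ρ) * (θ ρ ^ 2 / (r ρ * lam ρ) + ξ ρ ^ 2 / (r ρ * (-ν ρ)))) ρ)
    (hα : 1 < θ ρ₂ ^ 2 / (2 * (r ρ₂ / 2) * L₁)) :
    Filter.Tendsto (fun ρ => (1 - 2 * ϖ ρ / r ρ) / (ρ₂ - ρ))
        (nhdsWithin ρ₂ (Set.Ico ρ₁ ρ₂))
        (nhds ((-ν ρ₂) / (2 * (r ρ₂ / 2) * (θ ρ₂ ^ 2 / (2 * (r ρ₂ / 2) * L₁) - 1)))) ∧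
    Filter.Tendsto ϖ (nhdsWithin ρ₂ (Set.Ico ρ₁ ρ₂)) (nhds (r ρ₂ / 2)) ∧
    Filter.Tendsto (fun ρ => -(lam ρ * ν ρ) / (1 - 2 * ϖ ρ / r ρ))
        (nhdsWithin ρ₂ (Set.Ico ρ₁ ρ₂)) (nhds (θ ρ₂ ^ 2 - 2 * (r ρ₂ / 2) * L₁)) ∧
    θ ρ₂ ^ 2 - 2 * (r ρ₂ / 2) * L₁ =
      2 * (r ρ₂ / 2) * L₁ * (θ ρ₂ ^ 2 / (2 * (r ρ₂ / 2) * L₁) - 1) := by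
  rw [show (2 : ℝ) * (r ρ₂ / 2) = r ρ₂ from by ring] at hα ⊢
  have hρ₂Icc : ρ₂ ∈ Set.Icc ρ₁ ρ₂ := ⟨hρ.le, le_rfl⟩
  have hIcoIcc : Set.Ico ρ₁ ρ₂ ⊆ Set.Icc ρ₁ ρ₂ := Set.Ico_subset_Icc_self
  have hIooIcc : Set.Ioo ρ₁ ρ₂ ⊆ Set.Icc ρ₁ ρ₂ := Set.Ioo_subset_Icc_self
  have hIooIco : Set.Ioo ρ₁ ρ₂ ⊆ Set.Ico ρ₁ ρ₂ := fun x hx => ⟨hx.1.le, hx.2⟩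
  have hrc : ContinuousOn r (Set.Icc ρ₁ ρ₂) := fun x hx =>
    (hr x hx).continuousAt.continuousWithinAt
  -- r is positive
  have hrmono : StrictMonoOn r (Set.Icc ρ₁ ρ₂) := by
    apply strictMonoOn_of_deriv_pos (convex_Icc ρ₁ ρ₂) hrc
    intro x hx
    rw [interior_Icc] at hx
    rw [(hr x (hIooIcc hx)).deriv]
    have h1 := hlam x (hIooIco hx)
    have h2 := hν x (hIooIcc hx)
    linarith
  have hrpos : ∀ x ∈ Set.Icc ρ₁ ρ₂, 0 < r x := by
    intro x hx
    rcases eq_or_lt_of_le hx.1 with h | h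
    · rw [← h, hr0]; linarith
    · have := hrmono ⟨le_rfl, hρ.le⟩ hx h
      rw [hr0] at this; linarith
  have hr₂pos : 0 < r ρ₂ := hrpos ρ₂ hρ₂Icc
  have hN₀ : 0 < -ν ρ₂ := by have := hν ρ₂ hρ₂Icc; linarith
  set A : ℝ := θ ρ₂ ^ 2 / (r ρ₂ * L₁) with hAdef
  have hA1 : 1 < A := hα
  have hrL : r ρ₂ * L₁ ≠ 0 := by positivity
  have hAval : r ρ₂ * L₁ * A = θ ρ₂ ^ 2 := by
    rw [hAdef]; field_simp
  clear_value A
  set c : ℝ := (-ν ρ₂) / (2 * (A - 1)) with hcdef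
  clear_value c
  have hcpos : 0 < c := by
    rw [hcdef]; apply div_pos hN₀; linarith
  set m : ℝ → ℝ := fun ρ => r ρ / 2 - ϖ ρ with hmdef
  set H : ℝ → ℝ := fun ρ => θ ρ ^ 2 / (r ρ * lam ρ) + ξ ρ ^ 2 / (r ρ * (-ν ρ)) with hHdef
  set g : ℝ → ℝ := fun ρ => m ρ - c * (ρ₂ - ρ) with hgdef
  set e : ℝ → ℝ := fun ρ => (lam ρ - ν ρ) / 2 + c - H ρ * (ρ₂ - ρ) * c with hedef
  clear_value m H g e
  -- derivative of g
  have hgd : ∀ x ∈ Set.Ico ρ₁ ρ₂, HasDerivAt g (e x - H x * g x) x := by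
    intro x hx
    have hmd : HasDerivAt m ((lam x - ν x) / 2 - m x * H x) x := by
      have := ((hr x (hIcoIcc hx)).div_const 2).sub (hϖ x hx)
      rw [hmdef, hHdef]; exact this
    have hlin : HasDerivAt (fun ρ => c * (ρ₂ - ρ)) (c * (0 - 1)) x :=
      ((hasDerivAt_const x ρ₂).sub (hasDerivAt_id x)).const_mul c
    have := hmd.sub hlin
    rw [hgdef]; refine this.congr_deriv ?_
    simp only [hedef, hgdef]
    ring
  -- filter
  set l : Filter ℝ := nhdsWithin ρ₂ (Set.Ico ρ₁ ρ₂) with hldef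
  have hl_le : l ≤ nhdsWithin ρ₂ (Set.Iio ρ₂) :=
    nhdsWithin_mono ρ₂ (fun x hx => hx.2)
  have hl_leIcc : l ≤ nhdsWithin ρ₂ (Set.Icc ρ₁ ρ₂) := nhdsWithin_mono ρ₂ hIcoIcc
  have htsub : Filter.Tendsto (fun ρ => ρ₂ - ρ) l (nhds 0) := by
    have : Filter.Tendsto (fun ρ => ρ₂ - ρ) (nhds ρ₂) (nhds (ρ₂ - ρ₂)) :=
      (continuous_const.sub continuous_id).tendsto ρ₂
    rw [sub_self] at this
    exact this.mono_left nhdsWithin_le_nhds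
  have hθt : Filter.Tendsto θ l (nhds (θ ρ₂)) :=
    ((hθc ρ₂ hρ₂Icc).tendsto).mono_left hl_leIcc
  have hνt : Filter.Tendsto ν l (nhds (ν ρ₂)) :=
    ((hνc ρ₂ hρ₂Icc).tendsto).mono_left hl_leIcc
  have hξt : Filter.Tendsto ξ l (nhds (ξ ρ₂)) :=
    ((hξc ρ₂ hρ₂Icc).tendsto).mono_left hl_leIcc
  have hrt : Filter.Tendsto r l (nhds (r ρ₂)) :=
    ((hrc ρ₂ hρ₂Icc).tendsto).mono_left hl_leIcc
  have hlamt : Filter.Tendsto lam l (nhds 0) := by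
    have := ((hlamc ρ₂ hρ₂Icc).tendsto).mono_left hl_leIcc
    rwa [hlamend] at this
  have hTt : Filter.Tendsto (fun ρ => lam ρ / (ρ₂ - ρ)) l (nhds L₁) :=
    hlamlim.mono_left hl_le
  have hmemIco : ∀ᶠ x in l, x ∈ Set.Ico ρ₁ ρ₂ := self_mem_nhdsWithin
  -- limit of H * (ρ₂ - ρ)
  have hHt : Filter.Tendsto (fun ρ => H ρ * (ρ₂ - ρ)) l (nhds A) := by
    have t1 : Filter.Tendsto (fun ρ => θ ρ ^ 2 / (r ρ * (lam ρ / (ρ₂ - ρ)))) l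
        (nhds (θ ρ₂ ^ 2 / (r ρ₂ * L₁))) := (hθt.pow 2).div (hrt.mul hTt) hrL
    have t2 : Filter.Tendsto (fun ρ => ξ ρ ^ 2 * (ρ₂ - ρ) / (r ρ * (-ν ρ))) l
        (nhds (ξ ρ₂ ^ 2 * 0 / (r ρ₂ * (-ν ρ₂)))) :=
      ((hξt.pow 2).mul htsub).div (hrt.mul hνt.neg) (by positivity)
    have h := t1.add t2
    rw [mul_zero, zero_div, add_zero, ← hAdef] at h
    apply h.congr'
    filter_upwards [hmemIco] with x hx
    have h1 := hrpos x (hIcoIcc hx)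
    have h2 := hlam x hx
    have h3 := hν x (hIcoIcc hx)
    have ht : (0:ℝ) < ρ₂ - x := sub_pos.mpr hx.2
    have h3' : -ν x ≠ 0 := by linarith
    simp only [hHdef]
    field_simp
  -- limit of e
  have hANe : A - 1 ≠ 0 := by linarith
  have het : Filter.Tendsto e l (nhds 0) := by
    have h := (((hlamt.sub hνt).div_const 2).add (tendsto_const_nhds (x := c))).sub
      (hHt.mul (tendsto_const_nhds (x := c)))
    have hz : (0 - ν ρ₂) / 2 + c - A * c = 0 := by
      rw [hcdef]; field_simp; ring
    rw [hz] at h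
    rw [hedef]
    exact h
  -- main claim
  have hHU : ContinuousOn H (Set.Ioo ρ₁ ρ₂) := by
    rw [hHdef]
    apply ContinuousOn.add
    · apply ContinuousOn.div ((hθc.mono hIooIcc).pow 2) ((hrc.mono hIooIcc).mul (hlamc.mono hIooIcc))
      intro x hx
      exact mul_ne_zero (hrpos x (hIooIcc hx)).ne' (hlam x (hIooIco hx)).ne'
    · apply ContinuousOn.div ((hξc.mono hIooIcc).pow 2) ((hrc.mono hIooIcc).mul ((hνc.mono hIooIcc).neg))
      intro x hx
      have := hν x (hIooIcc hx)
      exact mul_ne_zero (hrpos x (hIooIcc hx)).ne' (by simp; linarith)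
  have hg0 : Filter.Tendsto (fun ρ => g ρ / (ρ₂ - ρ)) l (nhds 0) := by
    rw [NormedAddCommGroup.tendsto_nhds_zero]
    intro ε hε
    set β : ℝ := (1 + A) / 2 with hβdef
    have hβ1 : 1 < β := by rw [hβdef]; linarith
    have hβA : β < A := by rw [hβdef]; linarith
    clear_value β
    have hpow : ∀ t : ℝ, 0 < t → t ^ β = t ^ (β - 1) * t := by
      intro t ht
      rw [← Real.rpow_add_one ht.ne']
      norm_num
    set δ : ℝ := ε * (β - 1) / 2 with hδdef
    have hδ : 0 < δ := by
      rw [hδdef]; apply div_pos (mul_pos hε (by linarith)) two_pos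
    clear_value δ
    have hβne : β - 1 ≠ 0 := by linarith
    have hδhalf : δ / (β - 1) = ε / 2 := by
      rw [div_eq_iff hβne, hδdef]; ring
    have hev1 : ∀ᶠ ρ in l, β ≤ H ρ * (ρ₂ - ρ) := hHt.eventually (eventually_ge_nhds hβA)
    have hev2 : ∀ᶠ ρ in l, |e ρ| < δ := by
      have := Metric.tendsto_nhds.mp het δ hδ
      simpa [Real.dist_eq] using this
    have hev := (hev1.and hev2).and hmemIco
    have hev' : ∀ᶠ x in nhds ρ₂, x ∈ Set.Ico ρ₁ ρ₂ →
        ((β ≤ H x * (ρ₂ - x) ∧ |e x| < δ) ∧ x ∈ Set.Ico ρ₁ ρ₂) := by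
      rw [hldef, eventually_nhdsWithin_iff] at hev
      exact hev
    rw [Metric.eventually_nhds_iff] at hev'
    obtain ⟨η, hη, hball⟩ := hev'
    set ρ₀ : ℝ := max (ρ₂ - η / 2) ((ρ₁ + ρ₂) / 2) with hρ₀def
    have hρ₀η' : ρ₂ - η / 2 ≤ ρ₀ := le_max_left _ _
    have hρ₀1 : ρ₁ < ρ₀ := lt_of_lt_of_le (by linarith) (le_max_right _ _)
    have hρ₀2 : ρ₀ < ρ₂ := max_lt (by linarith) (by linarith)
    clear_value ρ₀
    have hprop : ∀ x ∈ Set.Ico ρ₀ ρ₂, x ∈ Set.Ico ρ₁ ρ₂ ∧ β ≤ H x * (ρ₂ - x) ∧ |e x| < δ := by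
      intro x hx
      have hxm : x ∈ Set.Ico ρ₁ ρ₂ := ⟨(lt_of_lt_of_le hρ₀1 hx.1).le, hx.2⟩
      have hd : dist x ρ₂ < η := by
        rw [Real.dist_eq, abs_sub_lt_iff]
        constructor
        · linarith [hx.2]
        · linarith [hx.1]
      obtain ⟨⟨hb1, hb2⟩, _⟩ := hball hd hxm
      exact ⟨hxm, hb1, hb2⟩
    have htρ₀ : (0:ℝ) < ρ₂ - ρ₀ := sub_pos.mpr hρ₀2
    set C : ℝ := |g ρ₀| / (ρ₂ - ρ₀) ^ β with hCdef
    clear_value C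
    have hCnn : 0 ≤ C := by
      rw [hCdef]; exact div_nonneg (abs_nonneg _) (Real.rpow_nonneg htρ₀.le _)
    set v : ℝ → ℝ := fun x => δ * (ρ₂ - x) / (β - 1) + C * (ρ₂ - x) ^ β with hvdef
    clear_value v
    have hvnn : ∀ x, x ≤ ρ₂ → 0 ≤ v x := by
      intro x hx
      rw [hvdef]
      apply add_nonneg
      · apply div_nonneg (mul_nonneg hδ.le (by linarith)) (by linarith)
      · exact mul_nonneg hCnn (Real.rpow_nonneg (by linarith) _)
    have hvd : ∀ x, x < ρ₂ →
        HasDerivAt v (-(δ / (β - 1)) - C * (β * (ρ₂ - x) ^ (β - 1))) x := by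
      intro x hx
      rw [hvdef]
      have h1 : HasDerivAt (fun y : ℝ => ρ₂ - y) (-1) x := by
        exact ((hasDerivAt_const x ρ₂).sub (hasDerivAt_id x)).congr_deriv (by norm_num)
      have h2 : HasDerivAt (fun y : ℝ => (ρ₂ - y) ^ β)
          (β * (ρ₂ - x) ^ (β - 1) * (-1)) x :=
        (Real.hasDerivAt_rpow_const (Or.inl (sub_pos.mpr hx).ne')).comp x h1
      have := ((h1.const_mul δ).div_const (β - 1)).add (h2.const_mul C)
      refine this.congr_deriv ?_
      ring
    have hbar : ∀ s ∈ Set.Ico ρ₀ ρ₂, |g s| ≤ v s := by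
      intro s hs
      have key : ∀ σ : ℝ, σ = 1 ∨ σ = -1 → 0 ≤ v s + σ * g s := by
        intro σ hσ
        have h0 : 0 ≤ v ρ₀ + σ * g ρ₀ := by
          have hC : C * (ρ₂ - ρ₀) ^ β = |g ρ₀| := by
            rw [hCdef]
            exact div_mul_cancel₀ _ (Real.rpow_pos_of_pos htρ₀ _).ne'
          have h1 : |g ρ₀| ≤ v ρ₀ := by
            have hnn : 0 ≤ δ * (ρ₂ - ρ₀) / (β - 1) :=
              div_nonneg (mul_nonneg hδ.le htρ₀.le) (by linarith)
            rw [hvdef]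
            simp only
            linarith [hC]
          have h2 : -|g ρ₀| ≤ σ * g ρ₀ := by
            rcases hσ with h | h <;> rw [h]
            · linarith [neg_abs_le (g ρ₀)]
            · linarith [le_abs_self (g ρ₀)]
          linarith
        refine key_nonneg ρ₀ s hs.1 (Set.Ioo ρ₁ ρ₂) isOpen_Ioo
          (fun x hx => ⟨lt_of_lt_of_le hρ₀1 hx.1, lt_of_le_of_lt hx.2 hs.2⟩)
          H (fun x => v x + σ * g x)
          (fun x => (-(δ / (β - 1)) - C * (β * (ρ₂ - x) ^ (β - 1))) + σ * (e x - H x * g x))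
          hHU ?_ ?_ h0
        · intro x hx
          have hxI : x ∈ Set.Ico ρ₀ ρ₂ := ⟨hx.1, lt_of_le_of_lt hx.2 hs.2⟩
          have hxm := (hprop x hxI).1
          exact (hvd x hxI.2).add ((hgd x hxm).const_mul σ)
        · intro x hx
          obtain ⟨hxm, hβx, hex⟩ := hprop x ⟨hx.1, lt_of_le_of_lt hx.2 hs.2⟩
          have htpos : (0:ℝ) < ρ₂ - x := sub_pos.mpr hxm.2
          have hHv : β / (ρ₂ - x) * v x ≤ H x * v x := by
            apply mul_le_mul_of_nonneg_right _ (hvnn x hxm.2.le)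
            rw [div_le_iff₀ htpos]
            linarith
          have hveq : β / (ρ₂ - x) * v x =
              β * δ / (β - 1) + C * β * (ρ₂ - x) ^ (β - 1) := by
            rw [hvdef]
            simp only
            rw [hpow _ htpos]
            field_simp
          have heσ : -δ ≤ σ * e x := by
            have h1 := abs_lt.mp hex
            rcases hσ with h | h <;> rw [h] <;> nlinarith [h1.1, h1.2]
          have hkey : (-(δ / (β - 1)) - C * (β * (ρ₂ - x) ^ (β - 1)) + σ * (e x - H x * g x))
              + H x * (v x + σ * g x)
              = (-(δ / (β - 1)) - C * β * (ρ₂ - x) ^ (β - 1) + σ * e x) + H x * v x := by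
            ring
          rw [hkey]
          have hδδ : -(δ / (β - 1)) + β * δ / (β - 1) = δ := by
            field_simp
            ring
          linarith [hHv, hveq, heσ, hδδ]
      have h1 := key 1 (Or.inl rfl)
      have h2 := key (-1) (Or.inr rfl)
      rw [abs_le]
      constructor <;> nlinarith [h1, h2]
    have hCt : Filter.Tendsto (fun s => C * (ρ₂ - s) ^ (β - 1)) l (nhds 0) := by
      have hc0 : ContinuousAt (fun x : ℝ => x ^ (β - 1)) 0 :=
        Real.continuousAt_rpow_const 0 _ (Or.inr (by linarith))
      have h := (hc0.tendsto.comp htsub).const_mul C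
      rw [Real.zero_rpow (by linarith : β - 1 ≠ 0), mul_zero] at h
      exact h
    have hev4 : ∀ᶠ s in l, C * (ρ₂ - s) ^ (β - 1) < ε / 2 := by
      have := Metric.tendsto_nhds.mp hCt (ε / 2) (by linarith)
      filter_upwards [this] with s hs
      rw [Real.dist_eq, sub_zero] at hs
      calc C * (ρ₂ - s) ^ (β - 1) ≤ |C * (ρ₂ - s) ^ (β - 1)| := le_abs_self _
        _ < ε / 2 := hs
    have hev5 : ∀ᶠ s in l, ρ₀ < s := nhdsWithin_le_nhds (eventually_gt_nhds hρ₀2)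
    filter_upwards [hev4, hev5, hmemIco] with s hs4 hs5 hsm
    have hsI : s ∈ Set.Ico ρ₀ ρ₂ := ⟨hs5.le, hsm.2⟩
    have hb := hbar s hsI
    have htpos : (0:ℝ) < ρ₂ - s := sub_pos.mpr hsm.2
    rw [Real.norm_eq_abs, abs_div, abs_of_pos htpos, div_lt_iff₀ htpos]
    have hvs : v s = (δ / (β - 1) + C * (ρ₂ - s) ^ (β - 1)) * (ρ₂ - s) := by
      rw [hvdef]
      simp only
      rw [hpow _ htpos]
      ring
    calc |g s| ≤ v s := hb
      _ = (δ / (β - 1) + C * (ρ₂ - s) ^ (β - 1)) * (ρ₂ - s) := hvs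
      _ < ε * (ρ₂ - s) := by
          apply mul_lt_mul_of_pos_right _ htpos
          rw [hδhalf]
          linarith
  -- consequences
  have hmt : Filter.Tendsto (fun ρ => m ρ / (ρ₂ - ρ)) l (nhds c) := by
    have h := hg0.add (tendsto_const_nhds (x := c))
    rw [zero_add] at h
    apply h.congr'
    filter_upwards [hmemIco] with x hx
    have ht : ρ₂ - x ≠ 0 := by have := hx.2; intro h'; linarith [sub_pos.mpr hx.2]
    simp only [hgdef]
    field_simp
    ring
  have hm0 : Filter.Tendsto m l (nhds 0) := by
    have h := hmt.mul htsub
    rw [mul_zero] at h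
    apply h.congr'
    filter_upwards [hmemIco] with x hx
    have ht : ρ₂ - x ≠ 0 := by intro h'; linarith [sub_pos.mpr hx.2]
    exact div_mul_cancel₀ _ ht
  have hG2 : Filter.Tendsto ϖ l (nhds (r ρ₂ / 2)) := by
    have h := (hrt.div_const 2).sub hm0
    rw [sub_zero] at h
    apply h.congr
    intro x
    simp only [hmdef]
    ring
  have hG1 : Filter.Tendsto (fun ρ => (1 - 2 * ϖ ρ / r ρ) / (ρ₂ - ρ)) l
      (nhds ((-ν ρ₂) / (r ρ₂ * (A - 1)))) := by
    have h := (tendsto_const_nhds (x := (2:ℝ)) |>.div hrt hr₂pos.ne').mul hmt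
    have heq : 2 / r ρ₂ * c = (-ν ρ₂) / (r ρ₂ * (A - 1)) := by
      rw [hcdef]; field_simp
    rw [heq] at h
    apply h.congr'
    filter_upwards [hmemIco] with x hx
    have ht : ρ₂ - x ≠ 0 := by intro h'; linarith [sub_pos.mpr hx.2]
    have hrx : r x ≠ 0 := (hrpos x (hIcoIcc hx)).ne'
    simp only [hmdef, Pi.div_apply]
    field_simp
  refine ⟨hG1, hG2, ?_, ?_⟩
  · -- G3
    have hDne : (-ν ρ₂) / (r ρ₂ * (A - 1)) ≠ 0 := by
      apply div_ne_zero hN₀.ne'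
      apply mul_ne_zero hr₂pos.ne' hANe
    have hnum : Filter.Tendsto (fun ρ => lam ρ / (ρ₂ - ρ) * (-ν ρ)) l
        (nhds (L₁ * (-ν ρ₂))) := hTt.mul hνt.neg
    have h := hnum.div hG1 hDne
    have hval : L₁ * (-ν ρ₂) / ((-ν ρ₂) / (r ρ₂ * (A - 1))) = θ ρ₂ ^ 2 - r ρ₂ * L₁ := by
      rw [div_div_eq_mul_div, mul_comm (L₁ * (-ν ρ₂)), mul_div_assoc, mul_div_assoc,
        div_self hN₀.ne', mul_one]
      linear_combination hAval
    rw [hval] at h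
    apply h.congr'
    filter_upwards [hmemIco] with x hx
    have ht : ρ₂ - x ≠ 0 := by intro h'; linarith [sub_pos.mpr hx.2]
    by_cases hd : (1 - 2 * ϖ x / r x) = 0
    · simp [hd, div_eq_zero_iff, ht]
    · simp only [Pi.div_apply]
      field_simp
  · -- G4
    rw [hAdef]
    field_simp
end

section
/- Quantitative event-horizon estimates: assume s > 1 and let (r, Ω², Q) be a solution of the event-horizon constraint system on [v₀,∞) (with v₀ large enough as in the existence result) satisfying lim_{v→∞} r(v) = r₊, lim_{v→∞} ∂_v r(v) = 0, lim_{v→∞} Q(v) = e, and Ω²(v₀) = e^{2K₊v₀}. Define ϖ(v) := (r(v)/2)·(1 − λ(v) + Q(v)²/r(v)²). Then there exists a constant C > 0 such that for all v ≥ v₀: 0 ≤ λ(v) ≤ C·v^{−2s}; 0 ≤ r₊ − r(v) ≤ C·v^{1−2s}; |∂_v log Ω²(v) − 2K₊| ≤ C·v^{1−2s}; |Q(v) − e| ≤ C·v^{1−2s}; and |ϖ(v) − M| ≤ C·v^{1−2s}. -/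
open Filter Topology Set

set_option maxHeartbeats 1600000

private lemma monoOn_Ici_of_deriv {f : ℝ → ℝ} {a : ℝ}
    (hd : ∀ x ∈ Set.Ici a, DifferentiableAt ℝ f x)
    (h' : ∀ x ∈ Set.Ioi a, 0 ≤ deriv f x) : MonotoneOn f (Set.Ici a) := by
  apply monotoneOn_of_deriv_nonneg (convex_Ici a)
  · exact fun x hx => (hd x hx).continuousAt.continuousWithinAt
  · intro x hx; rw [interior_Ici] at hx
    exact (hd x (mem_Ici.mpr (le_of_lt (mem_Ioi.mp hx)))).differentiableWithinAt
  · intro x hx; rw [interior_Ici] at hx; exact h' x hx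

private lemma antiOn_Ici_of_deriv {f : ℝ → ℝ} {a : ℝ}
    (hd : ∀ x ∈ Set.Ici a, DifferentiableAt ℝ f x)
    (h' : ∀ x ∈ Set.Ioi a, deriv f x ≤ 0) : AntitoneOn f (Set.Ici a) := by
  apply antitoneOn_of_deriv_nonpos (convex_Ici a)
  · exact fun x hx => (hd x hx).continuousAt.continuousWithinAt
  · intro x hx; rw [interior_Ici] at hx
    exact (hd x (mem_Ici.mpr (le_of_lt (mem_Ioi.mp hx)))).differentiableWithinAt
  · intro x hx; rw [interior_Ici] at hx; exact h' x hx

private lemma combine_bound {v₀ V p : ℝ} (h1 : 1 ≤ v₀) (hV : v₀ ≤ V) (hp : 0 < p)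
    (q : ℝ → ℝ) (Kt Sm : ℝ)
    (ht : ∀ v, V ≤ v → q v ≤ Kt * v ^ (-p))
    (hm : ∀ v, v ∈ Set.Icc v₀ V → q v ≤ Sm) :
    ∀ v, v₀ ≤ v → q v ≤ (max Kt 0 + max Sm 0 * V ^ p) * v ^ (-p) := by
  intro v hv
  have hv0 : (0:ℝ) < v := by linarith
  have hV0 : (0:ℝ) < V := by linarith
  have hvp : (0:ℝ) < v ^ (-p) := Real.rpow_pos_of_pos hv0 _
  rcases le_or_gt V v with h | h
  · calc q v ≤ Kt * v ^ (-p) := ht v h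
      _ ≤ (max Kt 0 + max Sm 0 * V ^ p) * v ^ (-p) := by
          apply mul_le_mul_of_nonneg_right _ hvp.le
          have : (0:ℝ) ≤ max Sm 0 * V ^ p :=
            mul_nonneg (le_max_right _ _) (Real.rpow_pos_of_pos hV0 _).le
          have h2 : Kt ≤ max Kt 0 := le_max_left _ _
          linarith
  · have hmem : v ∈ Set.Icc v₀ V := ⟨hv, h.le⟩
    have h2 : q v ≤ max Sm 0 := le_trans (hm v hmem) (le_max_left _ _)
    have h3 : (1:ℝ) ≤ V ^ p * v ^ (-p) := by
      have : V ^ (-p) ≤ v ^ (-p) := Real.rpow_le_rpow_of_nonpos hv0 h.le (by linarith)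
      calc (1:ℝ) = V ^ p * V ^ (-p) := by
            rw [← Real.rpow_add hV0]; simp
        _ ≤ V ^ p * v ^ (-p) :=
            mul_le_mul_of_nonneg_left this (Real.rpow_pos_of_pos hV0 _).le
    have h4 : max Sm 0 ≤ max Sm 0 * V ^ p * v ^ (-p) := by
      calc max Sm 0 = max Sm 0 * 1 := by ring
        _ ≤ max Sm 0 * (V ^ p * v ^ (-p)) :=
            mul_le_mul_of_nonneg_left h3 (le_max_right _ _)
        _ = max Sm 0 * V ^ p * v ^ (-p) := by ring
    have h5 : (0:ℝ) ≤ max Kt 0 * v ^ (-p) := mul_nonneg (le_max_right _ _) hvp.le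
    calc q v ≤ max Sm 0 := h2
      _ ≤ max Sm 0 * V ^ p * v ^ (-p) := h4
      _ ≤ (max Kt 0 + max Sm 0 * V ^ p) * v ^ (-p) := by linarith

private lemma decay_bound {a p K Lg : ℝ} {g : ℝ → ℝ} (hp : 0 < p) (hK : 0 ≤ K)
    (ha : 0 < 1 + a)
    (hdiff : ∀ x ∈ Set.Ici a, DifferentiableAt ℝ g x)
    (hderiv : ∀ x ∈ Set.Ioi a, deriv g x ≤ K * (1+x) ^ (-(p+1)))
    (hlim : Filter.Tendsto g Filter.atTop (nhds Lg)) :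
    ∀ v, a ≤ v → Lg - g v ≤ (K/p) * (1+v) ^ (-p) := by
  have hrd : ∀ x ∈ Set.Ici a, HasDerivAt (fun u => (K/p) * (1+u) ^ (-p))
      ((K/p) * (1 * (-p) * (1+x) ^ (-p-1))) x := by
    intro x hx
    have hx0 : (0:ℝ) < 1 + x := by have := mem_Ici.mp hx; linarith
    exact (((hasDerivAt_id x).const_add 1).rpow_const (Or.inl (ne_of_gt hx0))).const_mul (K/p)
  have hanti : AntitoneOn (fun u => g u + (K/p)*(1+u) ^ (-p)) (Set.Ici a) := by
    apply antiOn_Ici_of_deriv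
    · intro x hx; exact (hdiff x hx).add (hrd x hx).differentiableAt
    · intro x hx
      have hx' : a ≤ x := (mem_Ioi.mp hx).le
      rw [deriv_fun_add (hdiff x hx') (hrd x hx').differentiableAt, (hrd x hx').deriv]
      have h1 := hderiv x hx
      have hx0 : (0:ℝ) < 1+x := by have := mem_Ioi.mp hx; linarith
      have h2 : (K/p) * (1*(-p)*(1+x) ^ (-p-1)) = -(K * (1+x) ^ (-p-1)) := by
        field_simp
      rw [h2, show (-p-1 : ℝ) = -(p+1) by ring]
      linarith
  intro v hv
  have hv0 : (0:ℝ) < 1 + v := by linarith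
  have hmono : ∀ w, v ≤ w → g w ≤ g v + (K/p)*(1+v) ^ (-p) := by
    intro w hw
    have h := hanti (mem_Ici.mpr hv) (mem_Ici.mpr (le_trans hv hw)) hw
    simp only at h
    have h3 : 0 ≤ (K/p)*(1+w) ^ (-p) :=
      mul_nonneg (div_nonneg hK hp.le) (Real.rpow_pos_of_pos (by linarith) _).le
    linarith
  have := le_of_tendsto hlim (eventually_atTop.mpr ⟨v, hmono⟩)
  linarith


private lemma abs_sq_sub_sq_le {Q E dQ : ℝ} (hdQ : |Q - E| ≤ dQ) (hQ1 : |Q - E| ≤ 1) :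
    |Q^2 - E^2| ≤ (2*|E|+1) * dQ := by
  have h1 : |Q + E| ≤ 2*|E| + 1 := by
    calc |Q+E| = |(Q-E) + 2*E| := by ring_nf
      _ ≤ |Q-E| + |2*E| := abs_add_le _ _
      _ ≤ 1 + 2*|E| := by rw [abs_mul]; simp [abs_two]; linarith
      _ = 2*|E|+1 := by ring
  calc |Q^2-E^2| = |Q-E| * |Q+E| := by rw [← abs_mul]; ring_nf
    _ ≤ dQ * (2*|E|+1) :=
        mul_le_mul hdQ h1 (abs_nonneg _) (le_trans (abs_nonneg _) hdQ)
    _ = (2*|E|+1)*dQ := by ring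

private lemma est_logOmega {P E R Q L dR dQ dL : ℝ} (hP : 0 < P)
    (hR1 : P/2 ≤ R) (hR2 : R ≤ P) (hdR : P - R ≤ dR) (hdQ : |Q - E| ≤ dQ)
    (hQ1 : |Q - E| ≤ 1) (hL0 : 0 ≤ L) (hL : L ≤ dL) :
    |(1 - Q^2/R^2 - L)/R - (P^2 - E^2)/P^3| ≤
      (8*(P^4 + 3*E^2*P^2 + (2*|E|+1)*P^3 + P^5)/P^6) * (dR + dQ + dL) := by
  have hR0 : 0 < R := by linarith
  have hdR0 : 0 ≤ dR := le_trans (by linarith) hdR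
  have hdQ0 : 0 ≤ dQ := le_trans (abs_nonneg _) hdQ
  have hdL0 : 0 ≤ dL := le_trans hL0 hL
  have hQE := abs_sq_sub_sq_le hdQ hQ1
  have hid : (1 - Q^2/R^2 - L)/R - (P^2 - E^2)/P^3
      = (R^2*P^2*(P-R) - L*R^2*P^3 - P^3*(Q^2-E^2) - E^2*(P^3-R^3)) / (R^3*P^3) := by
    field_simp; ring
  rw [hid, abs_div, abs_of_pos (show (0:ℝ) < R^3*P^3 by positivity)]
  have hR2sq : R^2 ≤ P^2 := by nlinarith
  have t1 : |R^2*P^2*(P-R)| ≤ P^4*dR := by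
    rw [abs_of_nonneg (mul_nonneg (by positivity) (by linarith : (0:ℝ) ≤ P - R))]
    have h1 : R^2*P^2 ≤ P^2*P^2 := mul_le_mul_of_nonneg_right hR2sq (sq_nonneg P)
    calc R^2*P^2*(P-R) ≤ (P^2*P^2)*dR := mul_le_mul h1 hdR (by linarith) (by positivity)
      _ = P^4*dR := by ring
  have t2 : |L*R^2*P^3| ≤ P^5*dL := by
    rw [abs_of_nonneg (mul_nonneg (mul_nonneg hL0 (sq_nonneg R)) (by positivity))]
    have h1 : L*R^2 ≤ dL*P^2 := mul_le_mul hL hR2sq (sq_nonneg R) hdL0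
    calc L*R^2*P^3 = (L*R^2)*P^3 := by ring
      _ ≤ (dL*P^2)*P^3 := mul_le_mul_of_nonneg_right h1 (by positivity)
      _ = P^5*dL := by ring
  have t3 : |P^3*(Q^2-E^2)| ≤ (2*|E|+1)*P^3*dQ := by
    rw [abs_mul, abs_of_pos (show (0:ℝ) < P^3 by positivity)]
    calc P^3*|Q^2-E^2| ≤ P^3*((2*|E|+1)*dQ) := mul_le_mul_of_nonneg_left hQE (by positivity)
      _ = (2*|E|+1)*P^3*dQ := by ring
  have hcube : P^3 - R^3 ≤ dR*(3*P^2) := by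
    have ha : P^2+P*R+R^2 ≤ 3*P^2 := by nlinarith
    calc P^3-R^3 = (P-R)*(P^2+P*R+R^2) := by ring
      _ ≤ dR*(3*P^2) := mul_le_mul hdR ha (by positivity) hdR0
  have hcube0 : (0:ℝ) ≤ P^3 - R^3 := by nlinarith
  have t4 : |E^2*(P^3-R^3)| ≤ 3*E^2*P^2*dR := by
    rw [abs_of_nonneg (mul_nonneg (sq_nonneg E) hcube0)]
    calc E^2*(P^3-R^3) ≤ E^2*(dR*(3*P^2)) := mul_le_mul_of_nonneg_left hcube (sq_nonneg E)
      _ = 3*E^2*P^2*dR := by ring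
  have hnum : |R^2*P^2*(P-R) - L*R^2*P^3 - P^3*(Q^2-E^2) - E^2*(P^3-R^3)|
      ≤ (P^4+3*E^2*P^2)*dR + (2*|E|+1)*P^3*dQ + P^5*dL := by
    calc |R^2*P^2*(P-R) - L*R^2*P^3 - P^3*(Q^2-E^2) - E^2*(P^3-R^3)|
        ≤ |R^2*P^2*(P-R) - L*R^2*P^3 - P^3*(Q^2-E^2)| + |E^2*(P^3-R^3)| := abs_sub _ _
      _ ≤ |R^2*P^2*(P-R) - L*R^2*P^3| + |P^3*(Q^2-E^2)| + |E^2*(P^3-R^3)| := by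
          linarith [abs_sub (R^2*P^2*(P-R) - L*R^2*P^3) (P^3*(Q^2-E^2))]
      _ ≤ |R^2*P^2*(P-R)| + |L*R^2*P^3| + |P^3*(Q^2-E^2)| + |E^2*(P^3-R^3)| := by
          linarith [abs_sub (R^2*P^2*(P-R)) (L*R^2*P^3)]
      _ ≤ (P^4+3*E^2*P^2)*dR + (2*|E|+1)*P^3*dQ + P^5*dL := by linarith
  have hden : P^6/8 ≤ R^3*P^3 := by
    have h1 : (P/2)^3 ≤ R^3 := pow_le_pow_left₀ (by positivity) hR1 3
    calc P^6/8 = (P/2)^3*P^3 := by ring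
      _ ≤ R^3*P^3 := mul_le_mul_of_nonneg_right h1 (by positivity)
  have habs : (0:ℝ) ≤ |E| := abs_nonneg E
  have e1 : (0:ℝ) ≤ ((2*|E|+1)*P^3 + P^5) * dR := by positivity
  have e2 : (0:ℝ) ≤ (P^4+3*E^2*P^2+P^5) * dQ := by positivity
  have e3 : (0:ℝ) ≤ (P^4+3*E^2*P^2+(2*|E|+1)*P^3) * dL := by positivity
  calc |R^2*P^2*(P-R) - L*R^2*P^3 - P^3*(Q^2-E^2) - E^2*(P^3-R^3)| / (R^3*P^3)
      ≤ ((P^4 + 3*E^2*P^2 + (2*|E|+1)*P^3 + P^5) * (dR + dQ + dL)) / (P^6/8) := by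
        apply div_le_div₀ (by positivity) _ (by positivity) hden
        refine le_trans hnum ?_
        nlinarith [e1, e2, e3]
    _ = (8*(P^4 + 3*E^2*P^2 + (2*|E|+1)*P^3 + P^5)/P^6) * (dR + dQ + dL) := by
        field_simp

private lemma est_mass {P E R Q L dR dQ dL Mv : ℝ} (hP : 0 < P)
    (hM : Mv = (P^2 + E^2)/(2*P))
    (hR1 : P/2 ≤ R) (hR2 : R ≤ P) (hdR : P - R ≤ dR) (hdQ : |Q - E| ≤ dQ)
    (hQ1 : |Q - E| ≤ 1) (hL0 : 0 ≤ L) (hL : L ≤ dL) :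
    |R/2*(1 - L + Q^2/R^2) - Mv| ≤
      (((P^2+E^2) + (2*|E|+1)*P + P^3)/P^2) * (dR + dQ + dL) := by
  have hR0 : 0 < R := by linarith
  have hdR0 : 0 ≤ dR := le_trans (by linarith) hdR
  have hdQ0 : 0 ≤ dQ := le_trans (abs_nonneg _) hdQ
  have hdL0 : 0 ≤ dL := le_trans hL0 hL
  have hQE := abs_sq_sub_sq_le hdQ hQ1
  have hid : R/2*(1 - L + Q^2/R^2) - Mv
      = (R*P*(R-P) - L*R^2*P + P*(Q^2-E^2) + E^2*(P-R)) / (2*R*P) := by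
    rw [hM]; field_simp; ring
  rw [hid, abs_div, abs_of_pos (show (0:ℝ) < 2*R*P by positivity)]
  have hR2sq : R^2 ≤ P^2 := by nlinarith
  have t1 : |R*P*(R-P)| ≤ P^2*dR := by
    rw [abs_mul, abs_of_pos (show (0:ℝ) < R*P by positivity), abs_sub_comm,
      abs_of_nonneg (by linarith : (0:ℝ) ≤ P - R)]
    have h1 : R*P ≤ P*P := mul_le_mul_of_nonneg_right hR2 hP.le
    calc R*P*(P-R) ≤ (P*P)*dR := mul_le_mul h1 hdR (by linarith) (by positivity)
      _ = P^2*dR := by ring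
  have t2 : |L*R^2*P| ≤ P^3*dL := by
    rw [abs_of_nonneg (mul_nonneg (mul_nonneg hL0 (sq_nonneg R)) hP.le)]
    have h1 : L*R^2 ≤ dL*P^2 := mul_le_mul hL hR2sq (sq_nonneg R) hdL0
    calc L*R^2*P = (L*R^2)*P := by ring
      _ ≤ (dL*P^2)*P := mul_le_mul_of_nonneg_right h1 hP.le
      _ = P^3*dL := by ring
  have t3 : |P*(Q^2-E^2)| ≤ (2*|E|+1)*P*dQ := by
    rw [abs_mul, abs_of_pos hP]
    calc P*|Q^2-E^2| ≤ P*((2*|E|+1)*dQ) := mul_le_mul_of_nonneg_left hQE hP.le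
      _ = (2*|E|+1)*P*dQ := by ring
  have t4 : |E^2*(P-R)| ≤ E^2*dR := by
    rw [abs_of_nonneg (mul_nonneg (sq_nonneg E) (by linarith : (0:ℝ) ≤ P - R))]
    exact mul_le_mul_of_nonneg_left hdR (sq_nonneg E) |>.trans_eq (by ring)
  have hnum : |R*P*(R-P) - L*R^2*P + P*(Q^2-E^2) + E^2*(P-R)|
      ≤ (P^2+E^2)*dR + (2*|E|+1)*P*dQ + P^3*dL := by
    calc |R*P*(R-P) - L*R^2*P + P*(Q^2-E^2) + E^2*(P-R)|
        ≤ |R*P*(R-P) - L*R^2*P + P*(Q^2-E^2)| + |E^2*(P-R)| := abs_add_le _ _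
      _ ≤ |R*P*(R-P) - L*R^2*P| + |P*(Q^2-E^2)| + |E^2*(P-R)| := by
          linarith [abs_add_le (R*P*(R-P) - L*R^2*P) (P*(Q^2-E^2))]
      _ ≤ |R*P*(R-P)| + |L*R^2*P| + |P*(Q^2-E^2)| + |E^2*(P-R)| := by
          linarith [abs_sub (R*P*(R-P)) (L*R^2*P)]
      _ ≤ (P^2+E^2)*dR + (2*|E|+1)*P*dQ + P^3*dL := by linarith
  have hden : P^2 ≤ 2*R*P := by nlinarith
  have habs : (0:ℝ) ≤ |E| := abs_nonneg E
  have e1 : (0:ℝ) ≤ ((2*|E|+1)*P + P^3) * dR := by positivity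
  have e2 : (0:ℝ) ≤ ((P^2+E^2)+P^3) * dQ := by positivity
  have e3 : (0:ℝ) ≤ ((P^2+E^2)+(2*|E|+1)*P) * dL := by positivity
  calc |R*P*(R-P) - L*R^2*P + P*(Q^2-E^2) + E^2*(P-R)| / (2*R*P)
      ≤ (((P^2+E^2) + (2*|E|+1)*P + P^3) * (dR + dQ + dL)) / P^2 := by
        apply div_le_div₀ (by positivity) _ (by positivity) hden
        refine le_trans hnum ?_
        nlinarith [e1, e2, e3]
    _ = (((P^2+E^2) + (2*|E|+1)*P + P^3)/P^2) * (dR + dQ + dL) := by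
        field_simp


/-- The Reissner–Nordström event horizon radius `r₊ = M + √(M² − e²)`. -/
noncomputable def rPlus (M e : ℝ) : ℝ := M + Real.sqrt (M ^ 2 - e ^ 2)

/-- The surface gravity `K₊`, defined by `2K₊ = (2/r₊²)(M − e²/r₊)`. -/
noncomputable def KPlus (M e : ℝ) : ℝ := (M - e ^ 2 / rPlus M e) / (rPlus M e) ^ 2

/-- The event-horizon constraint system: `(r, Ω², Q)` is a `C²` solution on `[v₀,∞)`
of `∂_v(λ/Ω²) = −r|∂_vφ_H|²/Ω²`, `∂_v(rΩ²) = Ω²(1 − Q²/r²)`,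
`∂_vQ = q₀r²Im(φ_H·conj(∂_vφ_H))` (with `λ = ∂_v r`), with `r > 0`, `Ω² > 0`, relaxing to
the Reissner–Nordström data `r → r₊`, `λ → 0`, `Q → e`, normalized by
`Ω²(v₀) = e^{2K₊v₀}`. -/
def IsEHSolution (q₀ M e v₀ : ℝ) (φH : ℝ → ℂ) (r Ω2 Q : ℝ → ℝ) : Prop :=
  (∀ v, v₀ ≤ v → 0 < r v ∧ 0 < Ω2 v) ∧
  ContDiffOn ℝ 2 r (Set.Ici v₀) ∧ ContDiffOn ℝ 2 Ω2 (Set.Ici v₀) ∧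
  ContDiffOn ℝ 2 Q (Set.Ici v₀) ∧
  (∀ v, v₀ ≤ v → deriv (fun w => deriv r w / Ω2 w) v
      = -(r v * ‖deriv φH v‖ ^ 2) / Ω2 v) ∧
  (∀ v, v₀ ≤ v → deriv (fun w => r w * Ω2 w) v = Ω2 v * (1 - Q v ^ 2 / r v ^ 2)) ∧
  (∀ v, v₀ ≤ v → deriv Q v = q₀ * r v ^ 2 * (φH v * (starRingEnd ℂ) (deriv φH v)).im) ∧
  Filter.Tendsto r Filter.atTop (nhds (rPlus M e)) ∧
  Filter.Tendsto (deriv r) Filter.atTop (nhds 0) ∧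
  Filter.Tendsto Q Filter.atTop (nhds e) ∧
  Ω2 v₀ = Real.exp (2 * KPlus M e * v₀)

/-- **Quantitative event-horizon estimates**: for `s > 1`, any solution of the
event-horizon constraint system relaxing to Reissner–Nordström (with `v₀` large enough as
in the existence result), with modified mass `ϖ = (r/2)(1 − λ + Q²/r²)`, satisfies
`0 ≤ λ ≤ Cv^{−2s}`, `0 ≤ r₊ − r ≤ Cv^{1−2s}`, `|∂_v log Ω² − 2K₊| ≤ Cv^{1−2s}`,
`|Q − e| ≤ Cv^{1−2s}` and `|ϖ − M| ≤ Cv^{1−2s}` for all `v ≥ v₀`. -/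
theorem eh_quantitative_estimates
    (M e q₀ s C₀ : ℝ) (he0 : 0 < |e|) (heM : |e| < M) (hs : 1 < s) (hC₀ : 0 < C₀)
    (φH : ℝ → ℂ) (hφH : ContDiff ℝ 1 φH)
    (hdecay : ∀ v : ℝ, 0 ≤ v →
      ‖φH v‖ + ‖deriv φH v‖ ≤ C₀ * (1 + v) ^ (-s)) :
    ∃ v₀star : ℝ, ∀ v₀ : ℝ, v₀star ≤ v₀ →
      ∀ r Ω2 Q : ℝ → ℝ, IsEHSolution q₀ M e v₀ φH r Ω2 Q →
        ∃ Cb : ℝ, 0 < Cb ∧ ∀ v, v₀ ≤ v →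
          0 ≤ deriv r v ∧
          deriv r v ≤ Cb * v ^ (-(2 * s)) ∧
          0 ≤ rPlus M e - r v ∧
          rPlus M e - r v ≤ Cb * v ^ (1 - 2 * s) ∧
          |deriv (fun w => Real.log (Ω2 w)) v - 2 * KPlus M e| ≤ Cb * v ^ (1 - 2 * s) ∧
          |Q v - e| ≤ Cb * v ^ (1 - 2 * s) ∧
          |r v / 2 * (1 - deriv r v + Q v ^ 2 / r v ^ 2) - M| ≤ Cb * v ^ (1 - 2 * s) := by
  refine ⟨1, fun v₀ hv₀ r Ω2 Q hsol => ?_⟩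
  obtain ⟨hpos, hrC2, hΩC2, hQC2, heq1, heq2, heq3, hrlim, hlamlim, hQlim, -⟩ := hsol
  have hposr : ∀ v, v₀ ≤ v → 0 < r v := fun v hv => (hpos v hv).1
  have hposΩ : ∀ v, v₀ ≤ v → 0 < Ω2 v := fun v hv => (hpos v hv).2
  set P := rPlus M e with hPdef
  -- basic constants
  have hM0 : 0 < M := lt_of_le_of_lt (abs_nonneg e) heM
  have he2M : e^2 < M^2 := by nlinarith [sq_abs e, abs_nonneg e]
  have hsqrt0 : 0 < Real.sqrt (M^2 - e^2) := Real.sqrt_pos.mpr (by linarith)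
  have hsq : Real.sqrt (M^2 - e^2) ^ 2 = M^2 - e^2 := Real.sq_sqrt (by linarith)
  have hPval : P = M + Real.sqrt (M^2 - e^2) := by rw [hPdef, rPlus]
  have hMP : M < P := by rw [hPval]; linarith
  have hP0 : 0 < P := hM0.trans hMP
  have hPid : P^2 = 2*M*P - e^2 := by
    have h1 : (P - M)^2 = M^2 - e^2 := by rw [hPval]; simpa using hsq
    nlinarith [h1]
  have heP2 : e^2 < P^2 := by nlinarith
  have h2K : 2 * KPlus M e = (P^2 - e^2)/P^3 := by
    rw [KPlus, ← hPdef]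
    field_simp
    linear_combination (-1) * hPid
  have hK0 : 0 < 2 * KPlus M e := by
    rw [h2K]; exact div_pos (by linarith) (by positivity)
  have hMeq : M = (P^2 + e^2)/(2*P) := by
    field_simp; linarith [hPid]
  -- regularity
  have hrdiff : ∀ v, v₀ < v → DifferentiableAt ℝ r v := fun v hv =>
    (hrC2.contDiffAt (Ici_mem_nhds hv)).differentiableAt (by norm_num)
  have hΩdiff : ∀ v, v₀ < v → DifferentiableAt ℝ Ω2 v := fun v hv =>
    (hΩC2.contDiffAt (Ici_mem_nhds hv)).differentiableAt (by norm_num)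
  have hQdiff : ∀ v, v₀ < v → DifferentiableAt ℝ Q v := fun v hv =>
    (hQC2.contDiffAt (Ici_mem_nhds hv)).differentiableAt (by norm_num)
  have hlamC1 : ContDiffOn ℝ 1 (deriv r) (Ioi v₀) :=
    (hrC2.mono Ioi_subset_Ici_self).deriv_of_isOpen isOpen_Ioi (by norm_num)
  have hlamdiff : ∀ v, v₀ < v → DifferentiableAt ℝ (deriv r) v := fun v hv =>
    (hlamC1.contDiffAt (Ioi_mem_nhds hv)).differentiableAt (by norm_num)
  have hfdiff : ∀ v, v₀ < v → DifferentiableAt ℝ (fun w => deriv r w / Ω2 w) v := fun v hv =>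
    (hlamdiff v hv).div (hΩdiff v hv) (ne_of_gt (hposΩ v hv.le))
  -- decay of the scalar field
  have hφ1 : ∀ u : ℝ, 0 ≤ u → ‖deriv φH u‖ ≤ C₀ * (1+u) ^ (-s) := by
    intro u hu
    have h := hdecay u hu
    linarith [norm_nonneg (φH u)]
  have hφ0 : ∀ u : ℝ, 0 ≤ u → ‖φH u‖ ≤ C₀ * (1+u) ^ (-s) := by
    intro u hu
    have h := hdecay u hu
    linarith [norm_nonneg (deriv φH u)]
  have hrpow2 : ∀ u : ℝ, 0 ≤ u → (1+u) ^ (-s) * (1+u) ^ (-s) = (1+u) ^ (-(2*s)) := by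
    intro u hu
    rw [← Real.rpow_add (by linarith : (0:ℝ) < 1+u)]
    congr 1; ring
  have hφsq : ∀ u : ℝ, 0 ≤ u → ‖deriv φH u‖^2 ≤ C₀^2 * (1+u) ^ (-(2*s)) := by
    intro u hu
    have h1 := hφ1 u hu
    calc ‖deriv φH u‖^2 ≤ (C₀*(1+u) ^ (-s))^2 :=
          pow_le_pow_left₀ (norm_nonneg _) h1 2
      _ = C₀^2 * ((1+u) ^ (-s) * (1+u) ^ (-s)) := by ring
      _ = C₀^2 * (1+u) ^ (-(2*s)) := by rw [hrpow2 u hu]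
  -- the quantity λ/Ω² is antitone
  have hf_anti : ∀ a, v₀ < a → AntitoneOn (fun w => deriv r w / Ω2 w) (Ici a) := by
    intro a ha
    apply antiOn_Ici_of_deriv
    · exact fun x hx => hfdiff x (lt_of_lt_of_le ha hx)
    · intro x hx
      have hx' : v₀ < x := ha.trans (mem_Ioi.mp hx)
      rw [heq1 x hx'.le]
      apply div_nonpos_of_nonpos_of_nonneg
      · have := hposr x hx'.le
        have h2 : (0:ℝ) ≤ ‖deriv φH x‖^2 := sq_nonneg _
        nlinarith
      · exact (hposΩ x hx'.le).le
  -- choose V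
  have he2P1 : e^2/P^2 < 1 := (div_lt_one (by positivity)).mpr heP2
  set κ := (1 - e^2/P^2)/2 with hκdef
  have he2P0 : 0 ≤ e^2/P^2 := by positivity
  have hκ0 : 0 < κ := by rw [hκdef]; linarith
  set c := κ/(P+1) with hcdef
  have hc0 : 0 < c := div_pos hκ0 (by linarith)
  have hev1 : ∀ᶠ v in atTop, r v ∈ Ioo (P/2) (P+1) :=
    hrlim.eventually (Ioo_mem_nhds (by linarith) (by linarith))
  have hev2 : ∀ᶠ v in atTop, Q v ∈ Ioo (e-1) (e+1) :=
    hQlim.eventually (Ioo_mem_nhds (by linarith) (by linarith))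
  have hQrt : Tendsto (fun v => Q v^2 / r v^2) atTop (𝓝 (e^2/P^2)) :=
    Tendsto.div (hQlim.pow 2) (hrlim.pow 2) (by positivity)
  have hev3 : ∀ᶠ v in atTop, Q v^2/r v^2 ∈ Iio (1-κ) :=
    hQrt.eventually (Iio_mem_nhds (by rw [hκdef]; linarith))
  obtain ⟨V0, hV0⟩ := eventually_atTop.mp ((hev1.and hev2).and hev3)
  set V := max V0 (v₀+1) with hVdef
  have hv₀V : v₀ < V := lt_of_lt_of_le (by linarith) (le_max_right _ _)
  have hVge : v₀ ≤ V := hv₀V.le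
  have hV1 : (1:ℝ) < V := lt_of_lt_of_le (by linarith) (le_max_right _ _)
  have hV0' : (0:ℝ) < V := by linarith
  have hVp : ∀ v, V ≤ v → (r v ∈ Ioo (P/2) (P+1) ∧ Q v ∈ Ioo (e-1) (e+1)) ∧
      Q v^2/r v^2 ∈ Iio (1-κ) :=
    fun v hv => hV0 v (le_trans (le_max_left _ _) hv)
  have hrV1 : ∀ v, V ≤ v → P/2 ≤ r v := fun v hv => ((hVp v hv).1.1).1.le
  have hrV2 : ∀ v, V ≤ v → r v ≤ P+1 := fun v hv => ((hVp v hv).1.1).2.le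
  have hQV : ∀ v, V ≤ v → |Q v - e| ≤ 1 := by
    intro v hv
    have h1 := ((hVp v hv).1.2).1
    have h2 := ((hVp v hv).1.2).2
    exact abs_le.mpr ⟨by linarith, by linarith⟩
  have hqV : ∀ v, V ≤ v → Q v^2/r v^2 ≤ 1-κ := fun v hv => (mem_Iio.mp (hVp v hv).2).le
  -- exponential growth of r·Ω²
  have hGd : ∀ x, v₀ < x → HasDerivAt (fun w => Real.exp (-c*w) * (r w * Ω2 w))
      (Real.exp (-c*x) * (-c*1) * (r x * Ω2 x)
        + Real.exp (-c*x) * deriv (fun w => r w * Ω2 w) x) x := by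
    intro x hx
    have h1 : HasDerivAt (fun w : ℝ => Real.exp (-c*w)) (Real.exp (-c*x) * (-c*1)) x :=
      ((hasDerivAt_id x).const_mul (-c)).exp
    have h2 : HasDerivAt (fun w => r w * Ω2 w) (deriv (fun w => r w * Ω2 w) x) x :=
      ((hrdiff x hx).mul (hΩdiff x hx)).hasDerivAt
    exact h1.mul h2
  have hGmono : MonotoneOn (fun w => Real.exp (-c*w) * (r w * Ω2 w)) (Ici V) := by
    apply monoOn_Ici_of_deriv
    · exact fun x hx => (hGd x (hv₀V.trans_le hx)).differentiableAt
    · intro x hx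
      have hxV : V ≤ x := (mem_Ioi.mp hx).le
      have hx' : v₀ < x := hv₀V.trans_le hxV
      rw [(hGd x hx').deriv, heq2 x hx'.le]
      have hΩx := hposΩ x hx'.le
      have hrx := hposr x hx'.le
      have hq := hqV x hxV
      have hrle := hrV2 x hxV
      have hexp := Real.exp_pos (-c*x)
      have hcr : c * r x ≤ κ := by
        have h3 : c * r x ≤ c * (P+1) := mul_le_mul_of_nonneg_left hrle hc0.le
        have h4 : c * (P+1) = κ := by rw [hcdef]; field_simp
        linarith
      have h5 : c * r x ≤ 1 - Q x^2/r x^2 := by linarith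
      nlinarith [mul_le_mul_of_nonneg_left h5 (mul_pos hexp hΩx).le]
  have hgrow : ∀ u w, V ≤ u → u ≤ w →
      P/(2*(P+1)) * Real.exp (c*(w-u)) * Ω2 u ≤ Ω2 w := by
    intro u w hu huw
    have hwV : V ≤ w := le_trans hu huw
    have hu' : v₀ ≤ u := le_trans hVge hu
    have hw' : v₀ ≤ w := le_trans hVge hwV
    have h := hGmono (mem_Ici.mpr hu) (mem_Ici.mpr hwV) huw
    simp only at h
    have hkey : Real.exp (c*(w-u)) * (r u * Ω2 u) ≤ r w * Ω2 w := by
      have hE := Real.exp_pos (c*w)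
      calc Real.exp (c*(w-u)) * (r u * Ω2 u)
          = Real.exp (c*w) * (Real.exp (-c*u) * (r u * Ω2 u)) := by
            rw [show -c*u = c*(w-u) + -(c*w) by ring, Real.exp_add, Real.exp_neg]
            field_simp
        _ ≤ Real.exp (c*w) * (Real.exp (-c*w) * (r w * Ω2 w)) :=
            mul_le_mul_of_nonneg_left h hE.le
        _ = r w * Ω2 w := by
            rw [neg_mul, Real.exp_neg, ← mul_assoc,
              mul_inv_cancel₀ (Real.exp_ne_zero _), one_mul]
    have hP1 : (0:ℝ) < P+1 := by linarith
    have h1 : P/2 * Real.exp (c*(w-u)) * Ω2 u ≤ Real.exp (c*(w-u)) * (r u * Ω2 u) := by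
      have := mul_le_mul_of_nonneg_left (mul_le_mul_of_nonneg_right (hrV1 u hu)
        (hposΩ u hu').le) (Real.exp_pos (c*(w-u))).le
      calc P/2 * Real.exp (c*(w-u)) * Ω2 u = Real.exp (c*(w-u)) * (P/2 * Ω2 u) := by ring
        _ ≤ Real.exp (c*(w-u)) * (r u * Ω2 u) := this
    have h2 : r w * Ω2 w ≤ (P+1) * Ω2 w :=
      mul_le_mul_of_nonneg_right (hrV2 w hwV) (hposΩ w hw').le
    rw [show P/(2*(P+1)) * Real.exp (c*(w-u)) * Ω2 u
        = (P/2 * Real.exp (c*(w-u)) * Ω2 u)/(P+1) by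
          rw [eq_div_iff (by linarith : (P:ℝ)+1 ≠ 0)]; field_simp]
    rw [div_le_iff₀ hP1]
    nlinarith [hposΩ w hw']
  -- Ω² → ∞, hence λ/Ω² → 0
  have hΩtop : Tendsto Ω2 atTop atTop := by
    have hlow : (fun w => P/(2*(P+1)) * Ω2 V * Real.exp (c*(w-V))) ≤ᶠ[atTop] Ω2 := by
      filter_upwards [eventually_ge_atTop V] with w hw
      calc P/(2*(P+1)) * Ω2 V * Real.exp (c*(w-V))
          = P/(2*(P+1)) * Real.exp (c*(w-V)) * Ω2 V := by ring
        _ ≤ Ω2 w := hgrow V w le_rfl hw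
    have htend : Tendsto (fun w => P/(2*(P+1)) * Ω2 V * Real.exp (c*(w-V))) atTop atTop := by
      apply Tendsto.const_mul_atTop
      · have := hposΩ V hVge
        positivity
      · apply Real.tendsto_exp_atTop.comp
        apply Tendsto.const_mul_atTop hc0
        simpa [sub_eq_add_neg] using tendsto_atTop_add_const_right atTop (-V) tendsto_id
    exact tendsto_atTop_mono' atTop hlow htend
  have hflim : Tendsto (fun w => deriv r w / Ω2 w) atTop (𝓝 0) := by
    have h1 := hlamlim.mul hΩtop.inv_tendsto_atTop
    simpa [div_eq_mul_inv] using h1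
  -- nonnegativity of λ
  have hlam0 : ∀ v, v₀ < v → 0 ≤ deriv r v := by
    intro v hv
    have h0 : 0 ≤ deriv r v / Ω2 v := by
      apply le_of_tendsto hflim
      filter_upwards [eventually_ge_atTop v] with w hw
      exact hf_anti v hv (self_mem_Ici) (mem_Ici.mpr hw) hw
    have hΩv := hposΩ v hv.le
    have := mul_nonneg h0 hΩv.le
    rwa [div_mul_cancel₀ _ (ne_of_gt hΩv)] at this
  -- r is bounded by P
  have hrmono : ∀ a, v₀ < a → MonotoneOn r (Ici a) := fun a ha =>
    monoOn_Ici_of_deriv (fun x hx => hrdiff x (ha.trans_le hx))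
      (fun x hx => hlam0 x (ha.trans (mem_Ioi.mp hx)))
  have hrleP : ∀ v, v₀ < v → r v ≤ P := by
    intro v hv
    apply ge_of_tendsto hrlim
    filter_upwards [eventually_ge_atTop v] with w hw
    exact hrmono v hv (self_mem_Ici) (mem_Ici.mpr hw) hw
  -- quantitative tail bound for λ
  set Klam := 2*(P+1)^2*C₀^2/(P*c) with hKlamdef
  have hKlam0 : 0 ≤ Klam := by positivity
  have hlamtail1 : ∀ v, V ≤ v → deriv r v ≤ Klam * (1+v) ^ (-(2*s)) := by
    intro v hv
    have hvv₀ : v₀ < v := lt_of_lt_of_le hv₀V hv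
    have hv1 : (1:ℝ) < v := lt_of_lt_of_le hV1 hv
    have hΩv := hposΩ v hvv₀.le
    set Bv := 2*(P+1)^2*C₀^2*(1+v) ^ (-(2*s))/(P*Ω2 v) with hBdef
    have hBv0 : 0 ≤ Bv := by
      apply div_nonneg (by positivity) (mul_nonneg hP0.le hΩv.le)
    -- pointwise bound on the source term
    have hgb : ∀ u, v ≤ u → r u * ‖deriv φH u‖^2 / Ω2 u
        ≤ Bv * Real.exp (-(c*(u-v))) := by
      intro u hu
      have huV : V ≤ u := le_trans hv hu
      have hu0 : (0:ℝ) ≤ u := by linarith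
      have hΩu := hposΩ u (le_trans hVge huV)
      have h1 : r u * ‖deriv φH u‖^2 ≤ (P+1) * (C₀^2*(1+v) ^ (-(2*s))) := by
        have h2 := hφsq u hu0
        have h3 : (1+u) ^ (-(2*s)) ≤ (1+v) ^ (-(2*s)) :=
          Real.rpow_le_rpow_of_nonpos (by linarith) (by linarith) (by linarith)
        have h4 : C₀^2*(1+u) ^ (-(2*s)) ≤ C₀^2*(1+v) ^ (-(2*s)) := by nlinarith [sq_nonneg C₀]
        exact mul_le_mul (hrV2 u huV) (h2.trans h4) (sq_nonneg _) (by linarith)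
      have hW0 : 0 < P/(2*(P+1)) * Real.exp (c*(u-v)) * Ω2 v :=
        mul_pos (mul_pos (by positivity) (Real.exp_pos _)) hΩv
      calc r u * ‖deriv φH u‖^2 / Ω2 u
          ≤ ((P+1) * (C₀^2*(1+v) ^ (-(2*s)))) / (P/(2*(P+1)) * Real.exp (c*(u-v)) * Ω2 v) :=
            div_le_div₀ (by positivity) h1 hW0 (hgrow v u hv hu)
        _ = Bv * Real.exp (-(c*(u-v))) := by
            rw [hBdef, Real.exp_neg]
            rw [div_eq_iff (by positivity : P*Ω2 v ≠ 0)] at *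
            field_simp
    -- monotonicity of f minus the exponential barrier
    have hFd : ∀ x, v ≤ x → HasDerivAt (fun u => (Bv/c) * Real.exp (-(c*(u-v))))
        ((Bv/c) * (Real.exp (-(c*(x-v))) * -(c*1))) x := by
      intro x hx
      have h1 : HasDerivAt (fun u : ℝ => -(c*(u-v))) (-(c*1)) x :=
        (((hasDerivAt_id x).sub_const v).const_mul c).neg
      exact (h1.exp).const_mul (Bv/c)
    have hFmono : MonotoneOn
        (fun u => deriv r u / Ω2 u - (Bv/c) * Real.exp (-(c*(u-v)))) (Ici v) := by
      apply monoOn_Ici_of_deriv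
      · intro x hx
        exact (hfdiff x (hvv₀.trans_le (mem_Ici.mp hx))).sub
          (hFd x (mem_Ici.mp hx)).differentiableAt
      · intro x hx
        have hxv : v ≤ x := (mem_Ioi.mp hx).le
        have hxv₀ : v₀ < x := hvv₀.trans_le hxv
        rw [deriv_fun_sub (hfdiff x hxv₀) (hFd x hxv).differentiableAt, (hFd x hxv).deriv,
          heq1 x hxv₀.le]
        have hgx := hgb x hxv
        have hc' : (Bv/c) * (Real.exp (-(c*(x-v))) * -(c*1)) =
            -(Bv * Real.exp (-(c*(x-v)))) := by
          field_simp
        rw [hc']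
        have h6 : -(r x * ‖deriv φH x‖^2)/Ω2 x
            = -(r x * ‖deriv φH x‖^2/Ω2 x) := by ring
        rw [h6]
        linarith
    have hle : deriv r v / Ω2 v - Bv/c ≤ 0 := by
      apply ge_of_tendsto hflim
      filter_upwards [eventually_ge_atTop v] with w hw
      have h := hFmono (self_mem_Ici) (mem_Ici.mpr hw) hw
      simp only at h
      have h0 : Real.exp (-(c*(v-v))) = 1 := by norm_num
      have hBc0 : 0 ≤ Bv/c := div_nonneg hBv0 hc0.le
      have h8 : 0 ≤ Bv/c * Real.exp (-(c*(w-v))) := mul_nonneg hBc0 (Real.exp_pos _).le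
      rw [h0] at h
      linarith
    have hfv : deriv r v ≤ (Bv/c) * Ω2 v := by
      have h8 : deriv r v / Ω2 v ≤ Bv/c := by linarith
      have := mul_le_mul_of_nonneg_right h8 hΩv.le
      rwa [div_mul_cancel₀ _ (ne_of_gt hΩv)] at this
    calc deriv r v ≤ (Bv/c) * Ω2 v := hfv
      _ = Klam * (1+v) ^ (-(2*s)) := by
          rw [hBdef, hKlamdef]
          field_simp
  -- convert (1+v)-bounds to v-bounds
  have hbase : ∀ v : ℝ, V ≤ v → ∀ p : ℝ, p ≤ 0 → (1+v) ^ p ≤ v ^ p := by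
    intro v hv p hp
    exact Real.rpow_le_rpow_of_nonpos (by nlinarith) (by linarith) hp
  have hlamtailv : ∀ v, V ≤ v → deriv r v ≤ Klam * v ^ (-(2*s)) := by
    intro v hv
    refine (hlamtail1 v hv).trans ?_
    exact mul_le_mul_of_nonneg_left (hbase v hv _ (by linarith)) hKlam0
  -- tail bound for r
  have h2s1 : (0:ℝ) < 2*s - 1 := by linarith
  have hrtail : ∀ v, V ≤ v → P - r v ≤ (Klam/(2*s-1)) * (1+v) ^ (-(2*s-1)) := by
    apply decay_bound h2s1 hKlam0 (by linarith)
    · exact fun x hx => hrdiff x (hv₀V.trans_le (mem_Ici.mp hx))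
    · intro x hx
      rw [show -(2*s-1+1) = -(2*s) by ring]
      exact hlamtail1 x (mem_Ioi.mp hx).le
    · exact hrlim
  have hrtailv : ∀ v, V ≤ v → P - r v ≤ (Klam/(2*s-1)) * v ^ (-(2*s-1)) := by
    intro v hv
    refine (hrtail v hv).trans ?_
    exact mul_le_mul_of_nonneg_left (hbase v hv _ (by linarith))
      (div_nonneg hKlam0 h2s1.le)
  -- tail bound for Q
  set KQ1 := |q₀| * (P+1)^2 * C₀^2 with hKQ1def
  have hKQ10 : 0 ≤ KQ1 := by positivity
  have hQder : ∀ u, V ≤ u → |deriv Q u| ≤ KQ1 * (1+u) ^ (-(2*s)) := by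
    intro u hu
    have hu' : v₀ ≤ u := le_trans hVge hu
    have hu0 : (0:ℝ) ≤ u := by linarith
    have hIm : |(φH u * (starRingEnd ℂ) (deriv φH u)).im| ≤ C₀^2*(1+u) ^ (-(2*s)) := by
      calc |(φH u * (starRingEnd ℂ) (deriv φH u)).im|
          ≤ ‖φH u * (starRingEnd ℂ) (deriv φH u)‖ := Complex.abs_im_le_norm _
        _ = ‖φH u‖ * ‖deriv φH u‖ := by
            rw [norm_mul, Complex.norm_conj]
        _ ≤ (C₀*(1+u) ^ (-s)) * (C₀*(1+u) ^ (-s)) :=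
            mul_le_mul (hφ0 u hu0) (hφ1 u hu0) (norm_nonneg _) (by positivity)
        _ = C₀^2 * ((1+u) ^ (-s) * (1+u) ^ (-s)) := by ring
        _ = C₀^2 * (1+u) ^ (-(2*s)) := by rw [hrpow2 u hu0]
    have hr2 : r u^2 ≤ (P+1)^2 := pow_le_pow_left₀ (hposr u hu').le (hrV2 u hu) 2
    rw [heq3 u hu', abs_mul, abs_mul, abs_of_nonneg (sq_nonneg (r u))]
    calc |q₀| * r u^2 * |(φH u * (starRingEnd ℂ) (deriv φH u)).im|
        ≤ |q₀| * (P+1)^2 * (C₀^2 * (1+u) ^ (-(2*s))) := by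
          apply mul_le_mul (mul_le_mul_of_nonneg_left hr2 (abs_nonneg q₀)) hIm
            (abs_nonneg _) (by positivity)
      _ = KQ1 * (1+u) ^ (-(2*s)) := by rw [hKQ1def]; ring
  have hQup : ∀ v, V ≤ v → e - Q v ≤ (KQ1/(2*s-1)) * (1+v) ^ (-(2*s-1)) := by
    apply decay_bound h2s1 hKQ10 (by linarith)
    · exact fun x hx => hQdiff x (hv₀V.trans_le (mem_Ici.mp hx))
    · intro x hx
      rw [show -(2*s-1+1) = -(2*s) by ring]
      exact (le_abs_self _).trans (hQder x (mem_Ioi.mp hx).le)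
    · exact hQlim
  have hQdown : ∀ v, V ≤ v → Q v - e ≤ (KQ1/(2*s-1)) * (1+v) ^ (-(2*s-1)) := by
    have h := decay_bound (g := fun u => -Q u) (Lg := -e) h2s1 hKQ10 (by linarith : (0:ℝ) < 1+V)
      (fun x hx => (hQdiff x (hv₀V.trans_le (mem_Ici.mp hx))).neg)
      (fun x hx => by
        rw [show -(2*s-1+1) = -(2*s) by ring,
          deriv.fun_neg]
        exact (neg_le_abs _).trans (hQder x (mem_Ioi.mp hx).le))
      hQlim.neg
    intro v hv
    have := h v hv
    linarith
  have hQtailv : ∀ v, V ≤ v → |Q v - e| ≤ (KQ1/(2*s-1)) * v ^ (-(2*s-1)) := by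
    intro v hv
    have h1 := hQup v hv
    have h2 := hQdown v hv
    have h3 : (1+v) ^ (-(2*s-1)) ≤ v ^ (-(2*s-1)) := hbase v hv _ (by linarith)
    have h4 : (KQ1/(2*s-1)) * (1+v) ^ (-(2*s-1)) ≤ (KQ1/(2*s-1)) * v ^ (-(2*s-1)) :=
      mul_le_mul_of_nonneg_left h3 (div_nonneg hKQ10 h2s1.le)
    rw [abs_le]
    constructor <;> linarith
  -- the logarithmic derivative of Ω²
  have hlogd : ∀ v, v₀ < v → deriv (fun w => Real.log (Ω2 w)) v
      = (1 - Q v^2/r v^2 - deriv r v)/r v := by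
    intro v hv
    have hΩv := hposΩ v hv.le
    have hrv := hposr v hv.le
    have h1 : deriv (fun w => Real.log (Ω2 w)) v = deriv Ω2 v / Ω2 v :=
      ((hΩdiff v hv).hasDerivAt.log (ne_of_gt hΩv)).deriv
    have hmul : deriv r v * Ω2 v + r v * deriv Ω2 v = Ω2 v * (1 - Q v^2 / r v^2) := by
      rw [← deriv_mul (hrdiff v hv) (hΩdiff v hv)]
      exact heq2 v hv.le
    rw [h1, div_eq_div_iff (ne_of_gt hΩv) (ne_of_gt hrv)]
    linear_combination hmul
  set Kr2 := Klam/(2*s-1) with hKr2def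
  set KQ2 := KQ1/(2*s-1) with hKQ2def
  set CΩ := 8*(P^4 + 3*e^2*P^2 + (2*|e|+1)*P^3 + P^5)/P^6 with hCΩdef
  set Cm := ((P^2+e^2) + (2*|e|+1)*P + P^3)/P^2 with hCmdef
  have hlogtailv : ∀ v, V ≤ v → |deriv (fun w => Real.log (Ω2 w)) v - 2*KPlus M e|
      ≤ (CΩ*(Kr2 + KQ2 + Klam)) * v ^ (-(2*s-1)) := by
    intro v hv
    have hvv₀ : v₀ < v := hv₀V.trans_le hv
    have hv1 : (1:ℝ) ≤ v := le_of_lt (lt_of_lt_of_le hV1 hv)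
    have hlam2 : deriv r v ≤ Klam * v ^ (-(2*s-1)) := by
      refine (hlamtailv v hv).trans ?_
      apply mul_le_mul_of_nonneg_left _ hKlam0
      exact Real.rpow_le_rpow_of_exponent_le hv1 (by linarith)
    have hest := est_logOmega (E := e) hP0 (hrV1 v hv) (hrleP v hvv₀)
      (hrtailv v hv) (hQtailv v hv) (hQV v hv) (hlam0 v hvv₀) hlam2
    rw [hlogd v hvv₀, h2K]
    refine hest.trans (le_of_eq ?_)
    rw [hCΩdef]; ring
  have hmasstailv : ∀ v, V ≤ v → |r v/2*(1 - deriv r v + Q v^2/r v^2) - M|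
      ≤ (Cm*(Kr2 + KQ2 + Klam)) * v ^ (-(2*s-1)) := by
    intro v hv
    have hvv₀ : v₀ < v := hv₀V.trans_le hv
    have hv1 : (1:ℝ) ≤ v := le_of_lt (lt_of_lt_of_le hV1 hv)
    have hlam2 : deriv r v ≤ Klam * v ^ (-(2*s-1)) := by
      refine (hlamtailv v hv).trans ?_
      apply mul_le_mul_of_nonneg_left _ hKlam0
      exact Real.rpow_le_rpow_of_exponent_le hv1 (by linarith)
    have hest := est_mass (E := e) hP0 hMeq (hrV1 v hv) (hrleP v hvv₀)
      (hrtailv v hv) (hQtailv v hv) (hQV v hv) (hlam0 v hvv₀) hlam2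
    refine hest.trans (le_of_eq ?_)
    rw [hCmdef]; ring
  -- bounds on the compact interval [v₀, V]
  have hIccK : IsCompact (Icc v₀ V) := isCompact_Icc
  have hIccsub : Icc v₀ V ⊆ Ici v₀ := Icc_subset_Ici_self
  have hUD : UniqueDiffOn ℝ (Ici v₀) := uniqueDiffOn_Ici v₀
  have hDrcont : ContinuousOn (derivWithin r (Ici v₀)) (Ici v₀) :=
    hrC2.continuousOn_derivWithin hUD (by norm_num)
  have hDΩcont : ContinuousOn (derivWithin Ω2 (Ici v₀)) (Ici v₀) :=
    hΩC2.continuousOn_derivWithin hUD (by norm_num)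
  have hDr_eq : ∀ x, v₀ < x → derivWithin r (Ici v₀) x = deriv r x :=
    fun x hx => derivWithin_of_mem_nhds (Ici_mem_nhds hx)
  have hDΩ_eq : ∀ x, v₀ < x → derivWithin Ω2 (Ici v₀) x = deriv Ω2 x :=
    fun x hx => derivWithin_of_mem_nhds (Ici_mem_nhds hx)
  obtain ⟨B1, hB1⟩ := hIccK.exists_bound_of_continuousOn (hDrcont.mono hIccsub)
  have hcont2 : ContinuousOn (fun v => derivWithin Ω2 (Ici v₀) v / Ω2 v - 2*KPlus M e)
      (Icc v₀ V) :=
    ((hDΩcont.mono hIccsub).div ((hΩC2.continuousOn).mono hIccsub)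
      (fun x hx => ne_of_gt (hposΩ x hx.1))).sub continuousOn_const
  obtain ⟨B2, hB2⟩ := hIccK.exists_bound_of_continuousOn hcont2
  have hcont3 : ContinuousOn (fun v => Q v - e) (Icc v₀ V) :=
    ((hQC2.continuousOn).mono hIccsub).sub continuousOn_const
  obtain ⟨B3, hB3⟩ := hIccK.exists_bound_of_continuousOn hcont3
  have hcont4 : ContinuousOn (fun v => P - r v) (Icc v₀ V) :=
    continuousOn_const.sub ((hrC2.continuousOn).mono hIccsub)
  obtain ⟨B4, hB4⟩ := hIccK.exists_bound_of_continuousOn hcont4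
  have hcont5 : ContinuousOn
      (fun v => r v/2*(1 - derivWithin r (Ici v₀) v + Q v^2/r v^2) - M) (Icc v₀ V) := by
    apply ContinuousOn.sub _ continuousOn_const
    apply ContinuousOn.mul (((hrC2.continuousOn).mono hIccsub).div_const 2)
    apply ContinuousOn.add (continuousOn_const.sub (hDrcont.mono hIccsub))
    exact (((hQC2.continuousOn).mono hIccsub).pow 2).div
      (((hrC2.continuousOn).mono hIccsub).pow 2)
      (fun x hx => pow_ne_zero 2 (ne_of_gt (hposr x hx.1)))
  obtain ⟨B5, hB5⟩ := hIccK.exists_bound_of_continuousOn hcont5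
  have hv₀mem : v₀ ∈ Icc v₀ V := ⟨le_refl _, hVge⟩
  have mid1 : ∀ v, v ∈ Icc v₀ V → deriv r v ≤ B1 + |deriv r v₀| := by
    intro v hv
    have hB1nn : 0 ≤ B1 := le_trans (norm_nonneg _) (hB1 v₀ hv₀mem)
    rcases eq_or_lt_of_le hv.1 with h | h
    · rw [← h]; linarith [le_abs_self (deriv r v₀)]
    · have hb := hB1 v hv
      rw [Real.norm_eq_abs, hDr_eq v h] at hb
      linarith [le_abs_self (deriv r v), abs_nonneg (deriv r v₀)]
  have mid2 : ∀ v, v ∈ Icc v₀ V → |deriv (fun w => Real.log (Ω2 w)) v - 2*KPlus M e|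
      ≤ B2 + |deriv (fun w => Real.log (Ω2 w)) v₀ - 2*KPlus M e| := by
    intro v hv
    have hB2nn : 0 ≤ B2 := le_trans (norm_nonneg _) (hB2 v₀ hv₀mem)
    rcases eq_or_lt_of_le hv.1 with h | h
    · rw [← h]; linarith
    · have hb := hB2 v hv
      rw [Real.norm_eq_abs, hDΩ_eq v h] at hb
      have h1 : deriv (fun w => Real.log (Ω2 w)) v = deriv Ω2 v / Ω2 v :=
        ((hΩdiff v h).hasDerivAt.log (ne_of_gt (hposΩ v hv.1))).deriv
      rw [h1]
      linarith [abs_nonneg (deriv (fun w => Real.log (Ω2 w)) v₀ - 2*KPlus M e)]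
  have mid3 : ∀ v, v ∈ Icc v₀ V → |Q v - e| ≤ B3 := by
    intro v hv
    have hb := hB3 v hv
    rwa [Real.norm_eq_abs] at hb
  have mid4 : ∀ v, v ∈ Icc v₀ V → P - r v ≤ B4 := by
    intro v hv
    have hb := hB4 v hv
    rw [Real.norm_eq_abs] at hb
    linarith [le_abs_self (P - r v)]
  have mid5 : ∀ v, v ∈ Icc v₀ V → |r v/2*(1 - deriv r v + Q v^2/r v^2) - M|
      ≤ B5 + |r v₀/2*(1 - deriv r v₀ + Q v₀^2/r v₀^2) - M| := by
    intro v hv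
    have hB5nn : 0 ≤ B5 := le_trans (norm_nonneg _) (hB5 v₀ hv₀mem)
    rcases eq_or_lt_of_le hv.1 with h | h
    · rw [← h]; linarith
    · have hb := hB5 v hv
      rw [Real.norm_eq_abs, hDr_eq v h] at hb
      linarith [abs_nonneg (r v₀/2*(1 - deriv r v₀ + Q v₀^2/r v₀^2) - M)]
  -- combine tail and compact bounds
  have hs2 : (0:ℝ) < 2*s := by linarith
  have comb1 := combine_bound hv₀ hVge hs2 (deriv r) Klam (B1 + |deriv r v₀|) hlamtailv mid1
  have comb2 := combine_bound hv₀ hVge h2s1 (fun v => P - r v) Kr2 B4 hrtailv mid4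
  have comb3 := combine_bound hv₀ hVge h2s1
    (fun v => |deriv (fun w => Real.log (Ω2 w)) v - 2*KPlus M e|) (CΩ*(Kr2 + KQ2 + Klam))
    (B2 + |deriv (fun w => Real.log (Ω2 w)) v₀ - 2*KPlus M e|) hlogtailv mid2
  have comb4 := combine_bound hv₀ hVge h2s1 (fun v => |Q v - e|) KQ2 B3 hQtailv mid3
  have comb5 := combine_bound hv₀ hVge h2s1
    (fun v => |r v/2*(1 - deriv r v + Q v^2/r v^2) - M|) (Cm*(Kr2 + KQ2 + Klam))
    (B5 + |r v₀/2*(1 - deriv r v₀ + Q v₀^2/r v₀^2) - M|) hmasstailv mid5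
  have hVs1 : (0:ℝ) ≤ V ^ (2*s) := (Real.rpow_pos_of_pos hV0' _).le
  have hVs2 : (0:ℝ) ≤ V ^ (2*s-1) := (Real.rpow_pos_of_pos hV0' _).le
  have n1 : (0:ℝ) ≤ max Klam 0 + max (B1 + |deriv r v₀|) 0 * V ^ (2*s) :=
    add_nonneg (le_max_right _ _) (mul_nonneg (le_max_right _ _) hVs1)
  have n2 : (0:ℝ) ≤ max Kr2 0 + max B4 0 * V ^ (2*s-1) :=
    add_nonneg (le_max_right _ _) (mul_nonneg (le_max_right _ _) hVs2)
  have n3 : (0:ℝ) ≤ max (CΩ*(Kr2 + KQ2 + Klam)) 0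
      + max (B2 + |deriv (fun w => Real.log (Ω2 w)) v₀ - 2*KPlus M e|) 0 * V ^ (2*s-1) :=
    add_nonneg (le_max_right _ _) (mul_nonneg (le_max_right _ _) hVs2)
  have n4 : (0:ℝ) ≤ max KQ2 0 + max B3 0 * V ^ (2*s-1) :=
    add_nonneg (le_max_right _ _) (mul_nonneg (le_max_right _ _) hVs2)
  have n5 : (0:ℝ) ≤ max (Cm*(Kr2 + KQ2 + Klam)) 0
      + max (B5 + |r v₀/2*(1 - deriv r v₀ + Q v₀^2/r v₀^2) - M|) 0 * V ^ (2*s-1) :=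
    add_nonneg (le_max_right _ _) (mul_nonneg (le_max_right _ _) hVs2)
  refine ⟨(max Klam 0 + max (B1 + |deriv r v₀|) 0 * V ^ (2*s))
    + (max Kr2 0 + max B4 0 * V ^ (2*s-1))
    + (max (CΩ*(Kr2 + KQ2 + Klam)) 0
      + max (B2 + |deriv (fun w => Real.log (Ω2 w)) v₀ - 2*KPlus M e|) 0 * V ^ (2*s-1))
    + (max KQ2 0 + max B3 0 * V ^ (2*s-1))
    + (max (Cm*(Kr2 + KQ2 + Klam)) 0
      + max (B5 + |r v₀/2*(1 - deriv r v₀ + Q v₀^2/r v₀^2) - M|) 0 * V ^ (2*s-1))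
    + 1, by linarith, ?_⟩
  intro v hv
  have hv0 : (0:ℝ) < v := by linarith
  have hp1 : (0:ℝ) < v ^ (-(2*s)) := Real.rpow_pos_of_pos hv0 _
  have hp2 : (0:ℝ) < v ^ (-(2*s-1)) := Real.rpow_pos_of_pos hv0 _
  have hrw : v ^ (1-2*s) = v ^ (-(2*s-1)) := by rw [show (1-2*s) = -(2*s-1) by ring]
  refine ⟨?_, ?_, ?_, ?_, ?_, ?_, ?_⟩
  · -- 0 ≤ deriv r v
    rcases eq_or_lt_of_le hv with h | h
    · rw [← h]
      by_cases hd : DifferentiableAt ℝ r v₀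
      · have h1 : deriv r v₀ = derivWithin r (Ici v₀) v₀ :=
          (hd.derivWithin (hUD v₀ self_mem_Ici)).symm
        rw [h1]
        have h2 : Tendsto (derivWithin r (Ici v₀)) (𝓝[>] v₀)
            (𝓝 (derivWithin r (Ici v₀) v₀)) :=
          (hDrcont v₀ self_mem_Ici).mono_left (nhdsWithin_mono v₀ Ioi_subset_Ici_self)
        exact ge_of_tendsto h2 (eventually_nhdsWithin_of_forall (fun x hx => by
          rw [hDr_eq x hx]; exact hlam0 x hx))
      · rw [deriv_zero_of_not_differentiableAt hd]
    · exact hlam0 v h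
  · -- deriv r v ≤ Cb v^{-2s}
    refine le_trans (comb1 v hv) ?_
    apply mul_le_mul_of_nonneg_right _ hp1.le
    linarith
  · -- 0 ≤ P - r v
    rcases eq_or_lt_of_le hv with h | h
    · rw [← h]
      have hct : Tendsto r (𝓝[>] v₀) (𝓝 (r v₀)) :=
        (hrC2.continuousOn v₀ self_mem_Ici).mono_left (nhdsWithin_mono v₀ Ioi_subset_Ici_self)
      have h3 : r v₀ ≤ P :=
        le_of_tendsto hct (eventually_nhdsWithin_of_forall (fun x hx => hrleP x hx))
      linarith
    · linarith [hrleP v h]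
  · rw [hrw]
    refine le_trans (comb2 v hv) ?_
    apply mul_le_mul_of_nonneg_right _ hp2.le
    linarith
  · rw [hrw]
    refine le_trans (comb3 v hv) ?_
    apply mul_le_mul_of_nonneg_right _ hp2.le
    linarith
  · rw [hrw]
    refine le_trans (comb4 v hv) ?_
    apply mul_le_mul_of_nonneg_right _ hp2.le
    linarith
  · rw [hrw]
    refine le_trans (comb5 v hv) ?_
    apply mul_le_mul_of_nonneg_right _ hp2.le
    linarith
end

section
/- Weighted Hardy inequality with boundary terms (used in the r^p-estimates of the black hole exterior): for every real P > −2, (r(b)^{−P}/(2+P))·|φ(b)|² + (1/4)·∫_a^b r(v)^{−P−3}·|ψ(v)|² dv ≤ (r(a)^{−P}/(2+P))·|φ(a)|² + (4/(2+P)²)·∫_a^b r(v)^{−P−1}·|ψ′(v)|² dv. -/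
open Filter Topology Set MeasureTheory

set_option maxHeartbeats 1000000 in
/-- **Weighted Hardy inequality with boundary terms** (used in the `r^p`-estimates of the
black hole exterior): on `[a,b]`, with `r` a `C¹` positive function satisfying `r' ≥ 1/2`,
`ψ` a `C¹` complex function and `φ := ψ / r`, for every real `P > -2`,
`(r(b)^{-P}/(2+P))·|φ(b)|² + (1/4)·∫_a^b r^{-P-3}|ψ|² ≤
  (r(a)^{-P}/(2+P))·|φ(a)|² + (4/(2+P)²)·∫_a^b r^{-P-1}|ψ'|²`. -/
theorem weighted_hardy_inequality
    (a b : ℝ) (hab : a < b)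
    (r : ℝ → ℝ) (r' : ℝ → ℝ) (ψ ψ' : ℝ → ℂ)
    (hr : ∀ v ∈ Set.Icc a b, HasDerivAt r (r' v) v)
    (hr'cont : ContinuousOn r' (Set.Icc a b))
    (hr'lb : ∀ v ∈ Set.Icc a b, (1:ℝ)/2 ≤ r' v)
    (hrpos : ∀ v ∈ Set.Icc a b, 0 < r v)
    (hψ : ∀ v ∈ Set.Icc a b, HasDerivAt ψ (ψ' v) v)
    (hψ'cont : ContinuousOn ψ' (Set.Icc a b))
    (P : ℝ) (hP : -2 < P) :
    r b ^ (-P) / (2 + P) * ‖ψ b / (r b : ℂ)‖ ^ 2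
        + 1 / 4 * ∫ v in a..b, r v ^ (-P - 3) * ‖ψ v‖ ^ 2
      ≤ r a ^ (-P) / (2 + P) * ‖ψ a / (r a : ℂ)‖ ^ 2
        + 4 / (2 + P) ^ 2 * ∫ v in a..b, r v ^ (-P - 1) * ‖ψ' v‖ ^ 2 := by
  have hab' : a ≤ b := hab.le
  have huIcc : Set.uIcc a b = Set.Icc a b := Set.uIcc_of_le hab'
  have hc : (0:ℝ) < 2 + P := by linarith
  have hrc : ContinuousOn r (Set.Icc a b) :=
    fun v hv => (hr v hv).continuousAt.continuousWithinAt
  have hψc : ContinuousOn ψ (Set.Icc a b) :=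
    fun v hv => (hψ v hv).continuousAt.continuousWithinAt
  have hrne : ∀ v ∈ Set.Icc a b, r v ≠ 0 := fun v hv => (hrpos v hv).ne'
  set N : ℝ → ℝ := fun t => (ψ t).re * (ψ t).re + (ψ t).im * (ψ t).im with hN
  set D : ℝ → ℝ := fun t => (ψ t).re * (ψ' t).re + (ψ t).im * (ψ' t).im with hD
  have hNabs : ∀ t, N t = ‖ψ t‖ ^ 2 := fun t => by
    rw [Complex.sq_norm, Complex.normSq_apply]
  have hDle : ∀ t, D t ≤ ‖ψ t‖ * ‖ψ' t‖ := by
    intro t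
    have h1 : D t = (ψ t * (starRingEnd ℂ) (ψ' t)).re := by
      simp [hD, Complex.mul_re]
    calc D t ≤ ‖ψ t * (starRingEnd ℂ) (ψ' t)‖ := h1 ▸ Complex.re_le_norm _
      _ = ‖ψ t‖ * ‖ψ' t‖ := by rw [norm_mul, Complex.norm_conj]
  set F : ℝ → ℝ := fun t => r t ^ (-P - 2) * N t / (2 + P) with hF
  set F' : ℝ → ℝ := fun v =>
    (r' v * (-P - 2) * r v ^ (-P - 3) * N v + r v ^ (-P - 2) * (2 * D v)) / (2 + P) with hF'
  -- derivative of F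
  have hFderiv : ∀ v ∈ Set.Icc a b, HasDerivAt F (F' v) v := by
    intro v hv
    have hre : HasDerivAt (fun t => (ψ t).re) ((ψ' v).re) v :=
      (Complex.reCLM.hasFDerivAt.comp_hasDerivAt v (hψ v hv))
    have him : HasDerivAt (fun t => (ψ t).im) ((ψ' v).im) v :=
      (Complex.imCLM.hasFDerivAt.comp_hasDerivAt v (hψ v hv))
    have hNder : HasDerivAt N (2 * D v) v := by
      have := (hre.mul hre).add (him.mul him)
      exact this.congr_deriv (show _ = 2 * ((ψ v).re * (ψ' v).re + (ψ v).im * (ψ' v).im) by ring)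
    have hrpow : HasDerivAt (fun t => r t ^ (-P - 2)) (r' v * (-P - 2) * r v ^ (-P - 3)) v := by
      have h0 := (hr v hv).rpow_const (p := -P - 2) (Or.inl (hrne v hv))
      have he : -P - 2 - 1 = -P - 3 := by ring
      rw [he] at h0
      exact h0
    exact (hrpow.mul hNder).div_const (2 + P)
  -- continuity helpers
  have hrpowc : ∀ e : ℝ, ContinuousOn (fun v => r v ^ e) (Set.Icc a b) := fun e =>
    hrc.rpow_const (fun v hv => Or.inl (hrne v hv))
  have hNc : ContinuousOn N (Set.Icc a b) := by
    have h1 := Complex.continuous_re.comp_continuousOn hψc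
    have h2 := Complex.continuous_im.comp_continuousOn hψc
    exact (h1.mul h1).add (h2.mul h2)
  have hDc : ContinuousOn D (Set.Icc a b) := by
    have h1 := Complex.continuous_re.comp_continuousOn hψc
    have h2 := Complex.continuous_im.comp_continuousOn hψc
    have h3 := Complex.continuous_re.comp_continuousOn hψ'cont
    have h4 := Complex.continuous_im.comp_continuousOn hψ'cont
    exact (h1.mul h3).add (h2.mul h4)
  have habsψ : ContinuousOn (fun t => ‖ψ t‖) (Set.Icc a b) :=
    continuous_norm.comp_continuousOn hψc
  have habsψ' : ContinuousOn (fun t => ‖ψ' t‖) (Set.Icc a b) :=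
    continuous_norm.comp_continuousOn hψ'cont
  have hintF' : IntervalIntegrable F' volume a b := by
    apply ContinuousOn.intervalIntegrable
    rw [huIcc]
    exact ((((hr'cont.mul continuousOn_const).mul (hrpowc _)).mul hNc).add
      ((hrpowc _).mul (continuousOn_const.mul hDc))).div_const _
  have hint1 : IntervalIntegrable (fun v => r v ^ (-P - 3) * ‖ψ v‖ ^ 2)
      volume a b := by
    apply ContinuousOn.intervalIntegrable
    rw [huIcc]
    exact (hrpowc _).mul (habsψ.pow 2)
  have hint2 : IntervalIntegrable (fun v => r v ^ (-P - 1) * ‖ψ' v‖ ^ 2)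
      volume a b := by
    apply ContinuousOn.intervalIntegrable
    rw [huIcc]
    exact (hrpowc _).mul (habsψ'.pow 2)
  set Gf : ℝ → ℝ := fun v =>
    -(1 / 4) * (r v ^ (-P - 3) * ‖ψ v‖ ^ 2)
      + 4 / (2 + P) ^ 2 * (r v ^ (-P - 1) * ‖ψ' v‖ ^ 2) with hGf
  have hintG : IntervalIntegrable Gf volume a b :=
    (hint1.const_mul _).add (hint2.const_mul _)
  -- FTC
  have hFTC : (∫ v in a..b, F' v) = F b - F a :=
    intervalIntegral.integral_eq_sub_of_hasDerivAt
      (fun v hv => hFderiv v (huIcc ▸ hv)) hintF'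
  -- pointwise bound
  have hpt : ∀ v ∈ Set.Icc a b, F' v ≤ Gf v := by
    intro v hv
    have hrv := hrpos v hv
    simp only [hF', hGf]
    rw [hNabs v]
    set X := r v ^ (-P - 3) with hXdef
    set Y := r v ^ (-P - 1) with hYdef
    set s := r v ^ (-P - 2) with hsdef
    set p := ‖ψ v‖ with hpdef
    set q := ‖ψ' v‖ with hqdef
    have hX : (0:ℝ) < X := Real.rpow_pos_of_pos hrv _
    have hY : (0:ℝ) < Y := Real.rpow_pos_of_pos hrv _
    have hs : (0:ℝ) < s := Real.rpow_pos_of_pos hrv _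
    have hXY : s * s = X * Y := by
      rw [hXdef, hYdef, hsdef, ← Real.rpow_add hrv, ← Real.rpow_add hrv]
      congr 1; ring
    have hp : (0:ℝ) ≤ p := norm_nonneg _
    have hq : (0:ℝ) ≤ q := norm_nonneg _
    have hDv : D v ≤ p * q := hDle v
    have hr'v := hr'lb v hv
    rw [← sub_nonneg]
    have hposmul : (0:ℝ) < 4 * Y * (2 + P) ^ 2 := by positivity
    have e1 : 4 * (2 + P) ^ 2 * Y * ((1/2) * (X * p ^ 2))
        ≤ 4 * (2 + P) ^ 2 * Y * (r' v * (X * p ^ 2)) := by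
      apply mul_le_mul_of_nonneg_left _ (by positivity)
      exact mul_le_mul_of_nonneg_right hr'v (by positivity)
    have e2 : 8 * (2 + P) * Y * (s * D v) ≤ 8 * (2 + P) * Y * (s * (p * q)) := by
      apply mul_le_mul_of_nonneg_left _ (by positivity)
      exact mul_le_mul_of_nonneg_left hDv hs.le
    have e3 := sq_nonneg ((2 + P) * s * p - 4 * Y * q)
    have hid : (-(1 / 4) * (X * p ^ 2) + 4 / (2 + P) ^ 2 * (Y * q ^ 2)
          - (r' v * (-P - 2) * X * p ^ 2 + s * (2 * D v)) / (2 + P)) * (4 * Y * (2 + P) ^ 2)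
        = (4 * (2 + P) ^ 2 * Y * (r' v * (X * p ^ 2))
            - 4 * (2 + P) ^ 2 * Y * ((1/2) * (X * p ^ 2)))
          + (8 * (2 + P) * Y * (s * (p * q)) - 8 * (2 + P) * Y * (s * D v))
          + ((2 + P) * s * p - 4 * Y * q) ^ 2
          + (2 + P) ^ 2 * p ^ 2 * (X * Y - s * s) := by
      field_simp
      ring
    have h5 : 0 ≤ (-(1 / 4) * (X * p ^ 2) + 4 / (2 + P) ^ 2 * (Y * q ^ 2)
          - (r' v * (-P - 2) * X * p ^ 2 + s * (2 * D v)) / (2 + P)) * (4 * Y * (2 + P) ^ 2) := by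
      rw [hid, ← hXY]
      simp only [sub_self, mul_zero, add_zero]
      exact add_nonneg (add_nonneg (sub_nonneg.mpr e1) (sub_nonneg.mpr e2)) e3
    exact (mul_nonneg_iff_of_pos_right hposmul).mp h5
  have hImono : (∫ v in a..b, F' v) ≤ ∫ v in a..b, Gf v :=
    intervalIntegral.integral_mono_on hab' hintF' hintG hpt
  have hGsplit : (∫ v in a..b, Gf v)
      = -(1 / 4) * (∫ v in a..b, r v ^ (-P - 3) * ‖ψ v‖ ^ 2)
        + 4 / (2 + P) ^ 2 * ∫ v in a..b, r v ^ (-P - 1) * ‖ψ' v‖ ^ 2 := by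
    simp only [hGf]
    rw [intervalIntegral.integral_add (hint1.const_mul _) (hint2.const_mul _),
      intervalIntegral.integral_const_mul, intervalIntegral.integral_const_mul]
  -- endpoint values
  have hFval : ∀ v ∈ Set.Icc a b, F v
      = r v ^ (-P) / (2 + P) * ‖ψ v / (r v : ℂ)‖ ^ 2 := by
    intro v hv
    have hrv := hrpos v hv
    have h2 : r v ^ (-P - 2) = r v ^ (-P) / r v ^ (2:ℕ) := by
      rw [← Real.rpow_natCast (r v) 2, ← Real.rpow_sub hrv]
      norm_num
    simp only [hF]
    rw [hNabs, norm_div, Complex.norm_real, Real.norm_eq_abs, abs_of_pos hrv, div_pow, h2]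
    field_simp
  have ha' : a ∈ Set.Icc a b := ⟨le_refl a, hab'⟩
  have hb' : b ∈ Set.Icc a b := ⟨hab', le_refl b⟩
  rw [← hFval a ha', ← hFval b hb']
  rw [hFTC, hGsplit] at hImono
  linarith
end
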